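/- arXiv:2412.17103 — 5 statements merged into one kernel-verified Lean document; each statement's English description precedes it below -/
import Mathlib

section
/- For any ordinal α, the space ω^{α+1} with the order topology is homeomorphic to the product ℕ × (ω^α + 1), where ℕ has the discrete topology. -/
noncomputable section

open Ordinal Topology Set

/-- The ordinal `o` viewed as a topological space: the set of ordinals less than `o`,
equipped with the order topology (as a subspace of the ordinals with the order topology). -/
abbrev OrdT (o : Ordinal.{0}) := {x : Ordinal.{0} // x < o}

/-- The group of self-homeomorphisms of a topological space, under composition. -/
instance homeoGroup (X : Type*) [TopologicalSpace X] : Group (X ≃ₜ X) where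
  mul f g := g.trans f
  one := Homeomorph.refl X
  inv := Homeomorph.symm
  mul_assoc := by intros; rfl
  one_mul := by intro f; rfl
  mul_one := by intro f; rfl
  inv_mul_cancel := by
    intro f
    exact Homeomorph.ext fun x => f.symm_apply_apply x

instance ordT_orderTopology (o : Ordinal.{0}) : OrderTopology (OrdT o) :=
  inferInstanceAs (OrderTopology (Set.Iio o))

namespace Statement7Aux

variable (b : Ordinal.{0})

/-- `d b k` is the left endpoint of the `k`-th block `[d b k, d b k + b]`. -/
def d : ℕ → Ordinal.{0}
  | 0 => 0
  | k + 1 => d k + b + 1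

theorem d_succ (k : ℕ) : d b (k + 1) = d b k + b + 1 := rfl

theorem d_mono : Monotone (d b) :=
  monotone_nat_of_le_succ fun k =>
    le_self_add.trans le_self_add

theorem mul_le_d (k : ℕ) : b * k ≤ d b k := by
  induction k with
  | zero => simp
  | succ k ih =>
      rw [Nat.cast_succ, mul_add, mul_one, d_succ]
      exact (add_le_add_left ih b).trans le_self_add

theorem step (hb : 0 < b) {a : Ordinal.{0}} (ha : a < b * ω) : a + b + 1 < b * ω := by
  obtain ⟨n, hn, han⟩ := (lt_mul_iff_of_isSuccLimit isSuccLimit_omega0).1 ha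
  have h2 : n + 1 + 1 < ω := by
    rw [add_one_eq_succ, add_one_eq_succ]
    exact isSuccLimit_omega0.succ_lt (isSuccLimit_omega0.succ_lt hn)
  calc a + b + 1 = a + (b + 1) := by rw [add_assoc]
    _ ≤ b * n + (b + b) :=
        add_le_add han.le (add_le_add_right (Order.one_le_iff_pos.2 hb) b)
    _ = b * (n + 1 + 1) := by rw [mul_add_one, mul_add_one, add_assoc]
    _ < b * ω := mul_lt_mul_of_pos_left h2 hb

theorem d_lt (hb : 0 < b) (k : ℕ) : d b k < b * ω := by
  induction k with
  | zero => exact mul_pos hb omega0_pos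
  | succ k ih => exact step b hb ih

theorem d_add_lt (hb : 0 < b) {x : Ordinal.{0}} (hx : x ≤ b) (k : ℕ) :
    d b k + x < b * ω :=
  lt_of_le_of_lt (add_le_add_right hx _)
    (lt_of_lt_of_le (Order.lt_add_one_iff.2 le_rfl) (step b hb (d_lt b hb k)).le)

theorem d_add_b_lt {k m : ℕ} (h : k < m) : d b k + b < d b m :=
  lt_of_lt_of_le (Order.lt_add_one_iff.2 le_rfl) ((d_succ b k) ▸ d_mono b h)

/-- The underlying map of the homeomorphism. -/
def f (hb : 0 < b) (p : Σ _ : ℕ, OrdT (b + 1)) : OrdT (b * ω) :=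
  ⟨d b p.1 + p.2.1, d_add_lt b hb (Order.lt_add_one_iff.1 p.2.2) p.1⟩

theorem f_bij (hb : 0 < b) : Function.Bijective (f b hb) := by
  have key : ∀ k m : ℕ, k < m → ∀ x ≤ b, ∀ y : Ordinal.{0},
      d b k + x < d b m + y := fun k m hkm x hx y =>
    lt_of_le_of_lt (add_le_add_right hx _)
      (lt_of_lt_of_le (d_add_b_lt b hkm) le_self_add)
  constructor
  · rintro ⟨k, x, hx⟩ ⟨m, y, hy⟩ h
    have h' : d b k + x = d b m + y := congrArg Subtype.val h
    have hkm : k = m := by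
      rcases lt_trichotomy k m with hlt | heq | hgt
      · exact absurd h' (key k m hlt x (Order.lt_add_one_iff.1 hx) y).ne
      · exact heq
      · exact absurd h'.symm (key m k hgt y (Order.lt_add_one_iff.1 hy) x).ne
    subst hkm
    have hxy : x = y := (add_right_inj (d b k)).1 h'
    subst hxy
    rfl
  · rintro ⟨y, hy⟩
    have hex : ∃ k : ℕ, y < d b (k + 1) := by
      obtain ⟨n, hn, hyn⟩ := (lt_mul_iff_of_isSuccLimit isSuccLimit_omega0).1 hy
      obtain ⟨n', rfl⟩ := lt_omega0.1 hn
      exact ⟨n', hyn.trans_le ((mul_le_d b n').trans (d_mono b (Nat.le_succ n')))⟩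
    classical
    have hK' : d b (Nat.find hex) ≤ y := by
      cases hKeq : Nat.find hex with
      | zero => exact zero_le (a := y)
      | succ j =>
          have hj : ¬ y < d b (j + 1) := Nat.find_min hex (by omega)
          exact le_of_not_gt hj
    have hK : y < d b (Nat.find hex + 1) := Nat.find_spec hex
    have h1 : d b (Nat.find hex) + (y - d b (Nat.find hex)) = y :=
      Ordinal.add_sub_cancel_of_le hK'
    have h2 : y - d b (Nat.find hex) ≤ b := by
      have hy' : y ≤ d b (Nat.find hex) + b := by
        rw [d_succ] at hK
        exact Order.lt_add_one_iff.1 hK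
      refine (add_le_add_iff_left (d b (Nat.find hex))).1 ?_
      rw [h1]; exact hy'
    exact ⟨⟨Nat.find hex, y - d b (Nat.find hex), Order.lt_add_one_iff.2 h2⟩,
      Subtype.ext h1⟩

/-- The `k`-th block, as a subset of `OrdT (b * ω)`. -/
abbrev T (hb : 0 < b) (k : ℕ) : Set (OrdT (b * ω)) :=
  Set.Icc ⟨d b k, d_lt b hb k⟩ ⟨d b k + b, d_add_lt b hb le_rfl k⟩

theorem isOpen_T (hb : 0 < b) (k : ℕ) : IsOpen (T b hb k) := by
  cases k with
  | zero =>
      have hT : T b hb 0 = Subtype.val ⁻¹' Set.Iio (d b 1) := by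
        ext y
        simp only [T, Set.mem_Icc, Set.mem_preimage, Set.mem_Iio, d_succ,
          ← Subtype.coe_le_coe]
        show (d b 0 ≤ (y : Ordinal) ∧ (y : Ordinal) ≤ d b 0 + b) ↔ _
        rw [show d b 0 = 0 from rfl, zero_add, Order.lt_add_one_iff]
        simp [zero_le]
      rw [hT]
      exact isOpen_Iio.preimage continuous_subtype_val
  | succ j =>
      have hT : T b hb (j + 1) =
          Subtype.val ⁻¹' (Set.Ioi (d b j + b) ∩ Set.Iio (d b (j + 2))) := by
        ext y
        simp only [T, Set.mem_Icc, Set.mem_preimage, Set.mem_inter_iff,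
          Set.mem_Ioi, Set.mem_Iio, ← Subtype.coe_le_coe]
        show (d b (j+1) ≤ (y : Ordinal) ∧ (y : Ordinal) ≤ d b (j+1) + b) ↔ _
        rw [d_succ b (j+1), Order.lt_add_one_iff, d_succ b j, Order.add_one_le_iff]
      rw [hT]
      exact (isOpen_Ioi.inter isOpen_Iio).preimage continuous_subtype_val

/-- The order isomorphism from `OrdT (b+1)` onto the `k`-th block. -/
def pieceIso (hb : 0 < b) (k : ℕ) : OrdT (b + 1) ≃o T b hb k where
  toFun x := ⟨⟨d b k + x.1, d_add_lt b hb (Order.lt_add_one_iff.1 x.2) k⟩,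
    Subtype.mk_le_mk.2 le_self_add,
    Subtype.mk_le_mk.2 (add_le_add_right (Order.lt_add_one_iff.1 x.2) _)⟩
  invFun y := ⟨y.1.1 - d b k, by
    have h1 : d b k ≤ y.1.1 := Subtype.coe_le_coe.2 y.2.1
    have h2 : y.1.1 ≤ d b k + b := Subtype.coe_le_coe.2 y.2.2
    have h3 : d b k + (y.1.1 - d b k) = y.1.1 := Ordinal.add_sub_cancel_of_le h1
    refine Order.lt_add_one_iff.2 ((add_le_add_iff_left (d b k)).1 ?_)
    rw [h3]; exact h2⟩
  left_inv x := Subtype.ext (Ordinal.add_sub_cancel _ _)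
  right_inv y := Subtype.ext (Subtype.ext
    (Ordinal.add_sub_cancel_of_le (Subtype.coe_le_coe.2 y.2.1)))
  map_rel_iff' {x y} := by
    change d b k + x.1 ≤ d b k + y.1 ↔ x ≤ y
    simp only [Equiv.coe_fn_mk, Subtype.mk_le_mk, add_le_add_iff_left,
      Subtype.coe_le_coe]

/-- The homeomorphism from the disjoint sum of blocks onto `OrdT (b * ω)`. -/
def theHomeo (hb : 0 < b) : (Σ _ : ℕ, OrdT (b + 1)) ≃ₜ OrdT (b * ω) := by
  refine Equiv.toHomeomorphOfContinuousOpen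
    (Equiv.ofBijective (f b hb) (f_bij b hb)) ?_ ?_
  · refine continuous_sigma fun k => ?_
    have hcomp : (fun x : OrdT (b + 1) =>
        (Equiv.ofBijective (f b hb) (f_bij b hb)) ⟨k, x⟩)
        = Subtype.val ∘ (pieceIso b hb k) := rfl
    rw [hcomp]
    exact continuous_subtype_val.comp (pieceIso b hb k).toHomeomorph.continuous
  · refine isOpenMap_sigma.2 fun k => ?_
    have hcomp : (fun x : OrdT (b + 1) =>
        (Equiv.ofBijective (f b hb) (f_bij b hb)) ⟨k, x⟩)
        = Subtype.val ∘ (pieceIso b hb k) := rfl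
    rw [hcomp]
    exact ((isOpen_T b hb k).isOpenEmbedding_subtypeVal.isOpenMap).comp
      (pieceIso b hb k).toHomeomorph.isOpenMap

/-- For a discrete index type `ℕ`, the sigma type is homeomorphic to the product. -/
def sigmaProd (Y : Type*) [TopologicalSpace Y] : (Σ _ : ℕ, Y) ≃ₜ ℕ × Y := by
  refine Equiv.toHomeomorphOfContinuousOpen (Equiv.sigmaEquivProd ℕ Y)
    (continuous_sigma fun k => continuous_const.prodMk continuous_id)
    (isOpenMap_sigma.2 fun k => ?_)
  intro U hU
  have himg : (fun y : Y => ((Equiv.sigmaEquivProd ℕ Y) ⟨k, y⟩)) '' U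
      = {k} ×ˢ U := by
    ext ⟨a, y⟩
    simp [Equiv.sigmaEquivProd, eq_comm, and_comm]
  rw [himg]
  exact (isOpen_discrete _).prod hU

end Statement7Aux

/-- `ω^(α+1)` is homeomorphic to `ℕ × (ω^α + 1)`, where `ℕ` is discrete. -/
theorem statement7 (α : Ordinal.{0}) :
    Nonempty (OrdT (Ordinal.omega0 ^ (α + 1)) ≃ₜ (ℕ × OrdT (Ordinal.omega0 ^ α + 1))) := by
  have hb : 0 < omega0 ^ α := opow_pos α omega0_pos
  have he : omega0 ^ (α + 1) = omega0 ^ α * omega0 := by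
    rw [opow_add, opow_one]
  rw [he]
  exact ⟨(Statement7Aux.theHomeo (omega0 ^ α) hb).symm.trans
    (Statement7Aux.sigmaProd (OrdT (omega0 ^ α + 1)))⟩
end
end

section
/- Let α be an ordinal and let A be a topological moiety of ω^{α+1}, i.e., a clopen subset such that both A and its complement contain infinitely many points of rank α+1. Then A is homeomorphic to ω^{α+1}. -/
noncomputable section

open Ordinal Topology Set

/-- The set of maximal rank (Cantor–Bendixson rank `α+1`) elements of `ω^(α+1)`,
namely the ordinals of the form `ω^α · k` with `k ∈ ℕ`, `k ≠ 0`. -/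
def maxRank (α : Ordinal.{0}) : Set (OrdT (Ordinal.omega0 ^ (α + 1))) :=
  {x | ∃ k : ℕ, k ≠ 0 ∧ x.1 = Ordinal.omega0 ^ α * (k : Ordinal)}

/-- A topological moiety of `ω^(α+1)`: a clopen set such that both it and its
complement contain infinitely many maximal rank points. -/
def IsMoiety (α : Ordinal.{0}) (A : Set (OrdT (Ordinal.omega0 ^ (α + 1)))) : Prop :=
  IsClopen A ∧ (A ∩ maxRank α).Infinite ∧ (Aᶜ ∩ maxRank α).Infinite

namespace Statement8Aux

open TopologicalSpace


/-! ### Clopen intervals of ordinals -/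

lemma isClosed_Iio_ord {b : Ordinal.{0}} (hb : ¬ Order.IsSuccLimit b) : IsClosed (Iio b) := by
  rcases Ordinal.zero_or_succ_or_isSuccLimit b with rfl | ⟨c, rfl⟩ | h
  · have : Iio (0 : Ordinal.{0}) = ∅ := by ext x; simp [not_lt_zero]
    rw [this]; exact isClosed_empty
  · rw [← Ordinal.add_one_eq_succ, Ordinal.add_one_eq_succ, Order.Iio_succ]
    exact isClosed_Iic
  · exact absurd h hb

lemma isOpen_Ici_ord {a : Ordinal.{0}} (ha : ¬ Order.IsSuccLimit a) : IsOpen (Ici a) := by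
  have : Ici a = (Iio a)ᶜ := by ext x; simp
  rw [this]
  exact (isClosed_Iio_ord ha).isOpen_compl

lemma isClopen_Ico_ord {a b : Ordinal.{0}} (ha : ¬ Order.IsSuccLimit a) (hb : ¬ Order.IsSuccLimit b) :
    IsClopen (Ico a b) := by
  have : Ico a b = Ici a ∩ Iio b := by ext x; simp [and_comm]
  rw [this]
  constructor
  · exact (isClosed_Ici).inter (isClosed_Iio_ord hb)
  · exact (isOpen_Ici_ord ha).inter isOpen_Iio

/-! ### Order topology on closed sets of ordinals -/

theorem orderTopology_of_isClosed {C : Set Ordinal.{0}} (hC : IsClosed C) :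
    OrderTopology ↥C := by
  constructor
  refine le_antisymm (induced_topology_le_preorder (fun {x y} => Iff.rfl)) ?_
  have h1 : (instTopologicalSpaceSubtype : TopologicalSpace ↥C)
      = TopologicalSpace.induced (Subtype.val)
        (TopologicalSpace.generateFrom
          {s : Set Ordinal.{0} | ∃ a, s = Ioi a ∨ s = Iio a}) := by
    change _ = TopologicalSpace.induced Subtype.val (Preorder.topology Ordinal.{0})
    rw [← OrderTopology.topology_eq_generate_intervals (α := Ordinal.{0})]
    rfl
  rw [h1, induced_generateFrom_eq]
  apply le_generateFrom
  rintro s ⟨u, ⟨a, rfl | rfl⟩, rfl⟩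
  · -- preimage of Ioi a
    by_cases h : (C ∩ Iic a).Nonempty
    · have hbdd : BddAbove (C ∩ Iic a) := ⟨a, fun x hx => hx.2⟩
      have hy : sSup (C ∩ Iic a) ∈ C ∩ Iic a := (hC.inter isClosed_Iic).csSup_mem h hbdd
      have hset : (Subtype.val ⁻¹' Ioi a : Set ↥C)
          = Ioi (⟨sSup (C ∩ Iic a), hy.1⟩ : ↥C) := by
        ext z
        simp only [mem_preimage, mem_Ioi, Subtype.mk_lt_mk, ← Subtype.coe_lt_coe]
        constructor
        · intro hz
          exact lt_of_le_of_lt hy.2 hz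
        · intro hz
          by_contra hza
          have h1 : z.1 ∈ C ∩ Iic a := ⟨z.2, not_lt.1 hza⟩
          exact absurd (le_csSup hbdd h1) (not_le.2 hz)
      rw [hset]
      exact isOpen_generateFrom_of_mem ⟨_, Or.inl rfl⟩
    · have hset : (Subtype.val ⁻¹' Ioi a : Set ↥C) = Set.univ := by
        apply eq_univ_of_forall
        intro z
        simp only [mem_preimage, mem_Ioi]
        by_contra hz
        exact h ⟨z.1, z.2, not_lt.1 hz⟩
      rw [hset]
      exact @isOpen_univ _ (TopologicalSpace.generateFrom _)
  · -- preimage of Iio a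
    by_cases h : (C ∩ Ici a).Nonempty
    · have hy : sInf (C ∩ Ici a) ∈ C ∩ Ici a := csInf_mem h
      have hset : (Subtype.val ⁻¹' Iio a : Set ↥C)
          = Iio (⟨sInf (C ∩ Ici a), hy.1⟩ : ↥C) := by
        ext z
        simp only [mem_preimage, mem_Iio, Subtype.mk_lt_mk, ← Subtype.coe_lt_coe]
        constructor
        · intro hz
          by_contra hza
          have h1 : sInf (C ∩ Ici a) ≤ z.1 := not_lt.1 hza
          exact absurd (hy.2.trans h1) (not_le.2 hz)
        · intro hz
          by_contra hza
          have h1 : z.1 ∈ C ∩ Ici a := ⟨z.2, not_lt.1 hza⟩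
          exact absurd (csInf_le (OrderBot.bddBelow _) h1) (not_le.2 hz)
      rw [hset]
      exact isOpen_generateFrom_of_mem ⟨_, Or.inr rfl⟩
    · have hset : (Subtype.val ⁻¹' Iio a : Set ↥C) = Set.univ := by
        apply eq_univ_of_forall
        intro z
        simp only [mem_preimage, mem_Iio]
        by_contra hz
        exact h ⟨z.1, z.2, not_lt.1 hz⟩
      rw [hset]
      exact @isOpen_univ _ (TopologicalSpace.generateFrom _)

/-! ### Order types of sets of ordinals -/

def otype (C : Set Ordinal.{0}) : Ordinal.{1} :=
  Ordinal.type (Subrel ((· < ·) : Ordinal.{0} → Ordinal.{0} → Prop) (· ∈ C))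

lemma otype_Iio (o : Ordinal.{0}) : otype (Iio o) = Ordinal.lift.{1} o := by
  show Ordinal.type (Subrel ((· < ·) : Ordinal.{0} → Ordinal.{0} → Prop) (· < o)) = _
  rw [Ordinal.type_subrel]
  exact Ordinal.typein_ordinal o

lemma otype_mono {C D : Set Ordinal.{0}} (h : C ⊆ D) : otype C ≤ otype D := by
  rw [otype, otype, Ordinal.type_le_iff']
  exact ⟨⟨⟨Set.inclusion h, Set.inclusion_injective h⟩, Iff.rfl⟩⟩

lemma otype_congr {C D : Set Ordinal.{0}} (e : ↥C ≃o ↥D) : otype C = otype D := by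
  rw [otype, otype, Ordinal.type_eq]
  exact ⟨⟨e.toEquiv, by intro a b; exact e.lt_iff_lt⟩⟩

lemma orderIso_of_otype_eq {C D : Set Ordinal.{0}} (h : otype C = otype D) :
    Nonempty (↥C ≃o ↥D) := by
  rw [otype, otype, Ordinal.type_eq] at h
  obtain ⟨f⟩ := h
  exact ⟨OrderIso.ofRelIsoLT f⟩

def addIso (c z : Ordinal.{0}) : ↥(Iio z) ≃o ↥(Ico c (c + z)) :=
  StrictMono.orderIsoOfSurjective
    (fun x => ⟨c + x.1, ⟨le_self_add, (add_lt_add_iff_left c).2 x.2⟩⟩)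
    (fun x y hxy => by
      simp only [Subtype.mk_lt_mk]
      exact (add_lt_add_iff_left c).2 hxy)
    (by
      rintro ⟨y, hy1, hy2⟩
      have hz : 0 < z := by
        by_contra hz0
        push_neg at hz0
        rw [nonpos_iff_eq_zero.1 hz0, add_zero] at hy2
        exact absurd hy1 (not_le.2 hy2)
      refine ⟨⟨y - c, Ordinal.sub_lt_of_lt_add hy2 hz⟩, ?_⟩
      apply Subtype.ext
      exact Ordinal.add_sub_cancel_of_le hy1)

lemma otype_Ico (c z : Ordinal.{0}) : otype (Ico c (c + z)) = Ordinal.lift.{1} z :=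
  (otype_congr (addIso c z).symm).trans (otype_Iio z)

/-! ### Image of a set under `Subtype.val` -/

def imageValHomeo {T : Ordinal.{0}} (A : Set {x : Ordinal.{0} // x < T}) :
    ↥A ≃ₜ ↥(Subtype.val '' A) where
  toEquiv := Equiv.Set.image Subtype.val A Subtype.val_injective
  continuous_toFun := by
    apply Continuous.subtype_mk
    exact continuous_subtype_val.comp continuous_subtype_val
  continuous_invFun := by
    rw [continuous_induced_rng]
    rw [continuous_induced_rng]
    show Continuous (Subtype.val ∘ Subtype.val ∘
      ⇑(Equiv.Set.image Subtype.val A Subtype.val_injective).symm)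
    have heq : (Subtype.val ∘ Subtype.val ∘
        ⇑(Equiv.Set.image Subtype.val A Subtype.val_injective).symm) = Subtype.val := by
      funext y
      show ((((Equiv.Set.image Subtype.val A Subtype.val_injective).symm y) : {x // x < T}) :
        Ordinal.{0}) = y.1
      have h2 := (Equiv.Set.image Subtype.val A Subtype.val_injective).apply_symm_apply y
      have h3 := congrArg Subtype.val h2
      exact h3
    rw [heq]
    exact continuous_subtype_val

/-! ### Gluing homeomorphisms along a clopen partition -/

variable {C D : ℕ → Set Ordinal.{0}}

noncomputable def glueFun (C D : ℕ → Set Ordinal.{0}) (f : ∀ k, ↥(C k) → ↥(D k))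
    (x : ↥(⋃ k, C k)) : ↥(⋃ k, D k) :=
  ⟨(f (Set.mem_iUnion.1 x.2).choose ⟨x.1, (Set.mem_iUnion.1 x.2).choose_spec⟩).1,
    Set.mem_iUnion.2 ⟨_, (f _ _).2⟩⟩

lemma glueFun_val (hCd : ∀ i j, i ≠ j → Disjoint (C i) (C j)) (f : ∀ k, ↥(C k) → ↥(D k))
    (x : ↥(⋃ k, C k)) {k : ℕ} (hk : x.1 ∈ C k) :
    (glueFun C D f x).1 = (f k ⟨x.1, hk⟩).1 := by
  have h2 : (Set.mem_iUnion.1 x.2).choose = k := by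
    by_contra hne
    exact Set.disjoint_left.1 (hCd _ _ hne) (Set.mem_iUnion.1 x.2).choose_spec hk
  show (f (Set.mem_iUnion.1 x.2).choose ⟨x.1, (Set.mem_iUnion.1 x.2).choose_spec⟩).1
    = (f k ⟨x.1, hk⟩).1
  subst h2
  rfl

lemma glueFun_cont (hCo : ∀ k, IsOpen (C k)) (hCd : ∀ i j, i ≠ j → Disjoint (C i) (C j))
    {f : ∀ k, ↥(C k) → ↥(D k)} (hf : ∀ k, Continuous (f k)) :
    Continuous (glueFun C D f) := by
  classical
  have hval : Continuous fun x : ↥(⋃ k, C k) => (glueFun C D f x).1 := by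
    rw [continuous_iff_continuousAt]
    intro x
    have hk := (Set.mem_iUnion.1 x.2).choose_spec
    set k := (Set.mem_iUnion.1 x.2).choose with hkdef
    have hΩ : IsOpen (Subtype.val ⁻¹' C k : Set ↥(⋃ k, C k)) :=
      (hCo k).preimage continuous_subtype_val
    have hmem : (Subtype.val ⁻¹' C k : Set ↥(⋃ k, C k)) ∈ nhds x := hΩ.mem_nhds hk
    have hψ : ContinuousOn (fun y : ↥(⋃ k, C k) =>
        if h : y.1 ∈ C k then (f k ⟨y.1, h⟩).1 else 0) (Subtype.val ⁻¹' C k) := by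
      rw [continuousOn_iff_continuous_restrict]
      have heq : ((Subtype.val ⁻¹' C k : Set ↥(⋃ k, C k)).domRestrict fun y : ↥(⋃ k, C k) =>
          if h : y.1 ∈ C k then (f k ⟨y.1, h⟩).1 else 0)
          = fun y => (f k ⟨y.1.1, y.2⟩).1 := funext fun y => dif_pos y.2
      rw [heq]
      exact continuous_subtype_val.comp ((hf k).comp
        (Continuous.subtype_mk (continuous_subtype_val.comp continuous_subtype_val) _))
    refine ContinuousAt.congr_of_eventuallyEq (hψ.continuousAt hmem) ?_
    filter_upwards [hmem] with y hy
    rw [glueFun_val hCd f y hy, dif_pos (show y.1 ∈ C k from hy)]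
  exact Continuous.subtype_mk hval _

lemma glue (hCo : ∀ k, IsOpen (C k)) (hDo : ∀ k, IsOpen (D k))
    (hCd : ∀ i j, i ≠ j → Disjoint (C i) (C j)) (hDd : ∀ i j, i ≠ j → Disjoint (D i) (D j))
    (e : ∀ k, ↥(C k) ≃ₜ ↥(D k)) : Nonempty (↥(⋃ k, C k) ≃ₜ ↥(⋃ k, D k)) := by
  have hinv1 : ∀ x, glueFun D C (fun k => (e k).symm) (glueFun C D (fun k => e k) x) = x := by
    intro x
    have hk := (Set.mem_iUnion.1 x.2).choose_spec
    set k := (Set.mem_iUnion.1 x.2).choose with hkdef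
    have h1 : (glueFun C D (fun k => e k) x).1 = (e k ⟨x.1, hk⟩).1 :=
      glueFun_val hCd _ x hk
    have hmem : (glueFun C D (fun k => e k) x).1 ∈ D k := h1 ▸ (e k ⟨x.1, hk⟩).2
    apply Subtype.ext
    rw [glueFun_val hDd _ _ hmem]
    have h3 : (⟨(glueFun C D (fun k => e k) x).1, hmem⟩ : ↥(D k)) = e k ⟨x.1, hk⟩ :=
      Subtype.ext h1
    rw [h3, Homeomorph.symm_apply_apply]
  have hinv2 : ∀ x, glueFun C D (fun k => e k) (glueFun D C (fun k => (e k).symm) x) = x := by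
    intro x
    have hk := (Set.mem_iUnion.1 x.2).choose_spec
    set k := (Set.mem_iUnion.1 x.2).choose with hkdef
    have h1 : (glueFun D C (fun k => (e k).symm) x).1 = ((e k).symm ⟨x.1, hk⟩).1 :=
      glueFun_val hDd _ x hk
    have hmem : (glueFun D C (fun k => (e k).symm) x).1 ∈ C k := h1 ▸ ((e k).symm ⟨x.1, hk⟩).2
    apply Subtype.ext
    rw [glueFun_val hCd _ _ hmem]
    have h3 : (⟨(glueFun D C (fun k => (e k).symm) x).1, hmem⟩ : ↥(C k))
        = (e k).symm ⟨x.1, hk⟩ := Subtype.ext h1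
    rw [h3, Homeomorph.apply_symm_apply]
  exact ⟨⟨⟨glueFun C D (fun k => e k), glueFun D C (fun k => (e k).symm), hinv1, hinv2⟩,
    glueFun_cont hCo hCd (fun k => (e k).continuous),
    glueFun_cont hDo hDd (fun k => (e k).symm.continuous)⟩⟩

/-! ### Chains of Ico intervals -/

lemma disjoint_Ico_chain {g : ℕ → Ordinal.{0}} (hg : Monotone g) :
    ∀ i j, i ≠ j → Disjoint (Ico (g i) (g (i + 1))) (Ico (g j) (g (j + 1))) := by
  have key : ∀ i j, i < j → Disjoint (Ico (g i) (g (i + 1))) (Ico (g j) (g (j + 1))) := by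
    intro i j hij
    rw [Set.disjoint_left]
    rintro x ⟨_, h2⟩ ⟨h3, _⟩
    exact (h2.trans_le (hg hij)).not_ge h3
  intro i j hne
  rcases hne.lt_or_gt with h | h
  · exact key i j h
  · exact (key j i h).symm

lemma iUnion_Ico_chain {g : ℕ → Ordinal.{0}} {T : Ordinal.{0}} (hg0 : g 0 = 0)
    (hgT : ∀ k, g k < T) (hsup : ∀ x, x < T → ∃ k, x < g k) :
    ⋃ k, Ico (g k) (g (k + 1)) = Iio T := by
  classical
  ext x
  simp only [Set.mem_iUnion, mem_Ico, mem_Iio]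
  constructor
  · rintro ⟨k, _, h2⟩
    exact h2.trans (hgT (k + 1))
  · intro hx
    have hex : ∃ k, x < g k := hsup x hx
    have hk : x < g (Nat.find hex) := Nat.find_spec hex
    have hk0 : Nat.find hex ≠ 0 := by
      intro h0
      rw [h0, hg0] at hk
      exact not_lt_zero hk
    obtain ⟨i, hi⟩ := Nat.exists_eq_succ_of_ne_zero hk0
    refine ⟨i, ?_, ?_⟩
    · by_contra hcon
      push_neg at hcon
      exact Nat.find_min hex (by omega) hcon
    · rw [show i + 1 = Nat.find hex from hi.symm]
      exact hk


lemma otype_eq_zero {C : Set Ordinal.{0}} (h : C = ∅) : otype C = 0 := by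
  rw [otype]
  haveI : IsEmpty ↥C := by rw [h]; exact Set.isEmpty_coe_sort.2 rfl
  exact Ordinal.type_eq_zero_iff_isEmpty.2 ‹_›

lemma otype_ne_zero {C : Set Ordinal.{0}} (h : C.Nonempty) : otype C ≠ 0 := by
  rw [otype]
  haveI := h.to_subtype
  exact Ordinal.type_ne_zero_iff_nonempty.2 ‹_›

end Statement8Aux


open Statement8Aux Order

/-- Every topological moiety of `ω^(α+1)` is homeomorphic to `ω^(α+1)`. -/
theorem statement8 (α : Ordinal.{0}) (A : Set (OrdT (Ordinal.omega0 ^ (α + 1))))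
    (hA : IsMoiety α A) :
    Nonempty (A ≃ₜ OrdT (Ordinal.omega0 ^ (α + 1))) := by
  classical
  have hA' : IsClopen A ∧ (A ∩ maxRank α).Infinite ∧ (Aᶜ ∩ maxRank α).Infinite := hA
  obtain ⟨hclopen, hinf, -⟩ := hA'
  let T : Ordinal.{0} := Ordinal.omega0 ^ (α + 1)
  let L : Ordinal.{0} := Ordinal.omega0 ^ α
  have hTL : T = L * Ordinal.omega0 := by
    show Ordinal.omega0 ^ (α + 1) = Ordinal.omega0 ^ α * Ordinal.omega0
    rw [Ordinal.add_one_eq_succ, Ordinal.opow_succ]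
  have hL0 : 0 < L := Ordinal.opow_pos α Ordinal.omega0_pos
  have hTlim : Order.IsSuccLimit T := by
    rw [hTL]; exact Ordinal.isSuccLimit_mul_right hL0 Ordinal.isSuccLimit_omega0
  have hprin : ∀ a b : Ordinal.{0}, a < T → b < T → a + b < T :=
    fun a b ha hb => Ordinal.principal_add_omega0_opow (α + 1) ha hb
  have hLT : L < T := by
    rw [hTL]
    calc L = L * 1 := (mul_one L).symm
    _ < L * Ordinal.omega0 := (mul_lt_mul_iff_right₀ hL0).2 Ordinal.one_lt_omega0
  have hL1T : L + 1 < T := by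
    rw [Ordinal.add_one_eq_succ]; exact hTlim.succ_lt hLT
  -- the block endpoints
  let m : ℕ → Ordinal.{0} := fun k => Nat.rec 0 (fun _ ih => ih + (L + 1)) k
  have hm0 : m 0 = 0 := rfl
  have hms : ∀ k, m (k + 1) = m k + (L + 1) := fun _ => rfl
  have hmlim : ∀ k, ¬ Order.IsSuccLimit (m k) := by
    intro k
    cases k with
    | zero => exact Ordinal.not_isSuccLimit_zero
    | succ n =>
        rw [hms n, ← add_assoc, Ordinal.add_one_eq_succ]
        exact Order.not_isSuccLimit_succ _
  have hmmono : Monotone m :=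
    monotone_nat_of_le_succ (fun n => by rw [hms]; exact le_self_add)
  have hmT : ∀ k, m k < T := by
    intro k
    induction k with
    | zero => exact hTlim.pos
    | succ n ih => rw [hms]; exact hprin _ _ ih hL1T
  have hmge : ∀ k : ℕ, L * (k : Ordinal.{0}) ≤ m k := by
    intro k
    induction k with
    | zero => simp
    | succ n ih =>
        rw [hms, Nat.cast_succ, mul_add, mul_one]
        exact add_le_add ih (le_self_add)
  have hsupm : ∀ x, x < T → ∃ k, x < m k := by
    intro x hx
    rw [hTL] at hx
    obtain ⟨c, hc, hxc⟩ := (Ordinal.lt_mul_iff_of_isSuccLimit Ordinal.isSuccLimit_omega0).1 hx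
    obtain ⟨n, rfl⟩ := Ordinal.lt_omega0.1 hc
    exact ⟨n, hxc.trans_le (hmge n)⟩
  have hJsub : ∀ k, Ico (m k) (m (k + 1)) ⊆ Iio T := fun k x hx => hx.2.trans (hmT (k + 1))
  -- the image of A in the ordinals
  obtain ⟨O, hOopen, hAO⟩ := isOpen_induced_iff.1 hclopen.2
  obtain ⟨Fc, hFcl, hAF⟩ := isClosed_induced_iff.1 hclopen.1
  set A' : Set Ordinal.{0} := Subtype.val '' A with hA'def
  have hA'O : A' = O ∩ Iio T := by
    rw [hA'def, ← hAO, Set.image_preimage_eq_inter_range, Subtype.range_coe_subtype]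
    rfl
  have hA'F : A' = Fc ∩ Iio T := by
    rw [hA'def, ← hAF, Set.image_preimage_eq_inter_range, Subtype.range_coe_subtype]
    rfl
  have hA'open : IsOpen A' := by rw [hA'O]; exact hOopen.inter isOpen_Iio
  have hA'sub : A' ⊆ Iio T := by rw [hA'O]; exact Set.inter_subset_right
  -- the pieces
  set Ck : ℕ → Set Ordinal.{0} := fun k => A' ∩ Ico (m k) (m (k + 1)) with hCkdef
  have hCkopen : ∀ k, IsOpen (Ck k) :=
    fun k => hA'open.inter (isClopen_Ico_ord (hmlim k) (hmlim (k + 1))).2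
  have hCkcl : ∀ k, IsClosed (Ck k) := by
    intro k
    have h1 : Ck k = Fc ∩ Ico (m k) (m (k + 1)) := by
      show A' ∩ _ = _
      rw [hA'F, inter_assoc, Set.inter_eq_self_of_subset_right (hJsub k)]
    rw [h1]
    exact hFcl.inter (isClopen_Ico_ord (hmlim k) (hmlim (k + 1))).1
  have hCkdisj : ∀ i j, i ≠ j → Disjoint (Ck i) (Ck j) :=
    fun i j hne => Disjoint.mono Set.inter_subset_right Set.inter_subset_right
      (disjoint_Ico_chain hmmono i j hne)
  have hCkU : ⋃ k, Ck k = A' := by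
    have h1 : ⋃ k, Ck k = A' ∩ ⋃ k, Ico (m k) (m (k + 1)) := (Set.inter_iUnion A' _).symm
    rw [h1, iUnion_Ico_chain hm0 hmT hsupm, Set.inter_eq_self_of_subset_left hA'sub]
  -- order types of pieces
  have hole : ∀ k, otype (Ck k) ≤ Ordinal.lift.{1,0} (L + 1) := by
    intro k
    have h1 := otype_mono (Set.inter_subset_right : Ck k ⊆ Ico (m k) (m (k + 1)))
    rwa [hms k, otype_Ico] at h1
  have hdesc : ∀ k, ∃ dk : Ordinal.{0}, Ordinal.lift.{1,0} dk = otype (Ck k) :=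
    fun k => Ordinal.mem_range_lift_of_le (hole k)
  let d : ℕ → Ordinal.{0} := fun k => (hdesc k).choose
  have hd : ∀ k, Ordinal.lift.{1,0} (d k) = otype (Ck k) := fun k => (hdesc k).choose_spec
  have hdle : ∀ k, d k ≤ L + 1 := fun k => Ordinal.lift_le.1 ((hd k).trans_le (hole k))
  have hiso : ∀ k, Nonempty (↥(Ck k) ≃o ↥(Iio (d k))) := by
    intro k
    apply orderIso_of_otype_eq
    rw [otype_Iio]
    exact (hd k).symm
  -- the target endpoints
  let σ : ℕ → Ordinal.{0} := fun k => Nat.rec 0 (fun j ih => ih + d j) k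
  have hσ0 : σ 0 = 0 := rfl
  have hσs : ∀ k, σ (k + 1) = σ k + d k := fun _ => rfl
  have hσmono : Monotone σ :=
    monotone_nat_of_le_succ (fun n => by rw [hσs]; exact le_self_add)
  have hσT : ∀ k, σ k < T := by
    intro k
    induction k with
    | zero => exact hTlim.pos
    | succ n ih => rw [hσs]; exact hprin _ _ ih ((hdle n).trans_lt hL1T)
  have hdz : ∀ k, d k = 0 ∨ ∃ w, d k = w + 1 := by
    intro k
    rcases Set.eq_empty_or_nonempty (Ck k) with he | hne
    · left
      have h0 : Ordinal.lift.{1,0} (d k) = Ordinal.lift.{1,0} 0 := by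
        rw [hd k, otype_eq_zero he]
        exact (Ordinal.lift_zero).symm
      exact Ordinal.lift_inj.{1,0}.1 h0
    · right
      have hbdd : BddAbove (Ck k) := ⟨m (k + 1), fun x hx => hx.2.2.le⟩
      have hM : sSup (Ck k) ∈ Ck k := (hCkcl k).csSup_mem hne hbdd
      obtain ⟨e⟩ := hiso k
      refine ⟨(e ⟨sSup (Ck k), hM⟩).1, ?_⟩
      have hub : (e ⟨sSup (Ck k), hM⟩).1 + 1 ≤ d k := by
        rw [Ordinal.add_one_eq_succ, Order.succ_le_iff]
        exact (e ⟨sSup (Ck k), hM⟩).2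
      refine le_antisymm ?_ hub
      by_contra hcon
      push_neg at hcon
      set z : ↥(Iio (d k)) := ⟨(e ⟨sSup (Ck k), hM⟩).1 + 1, hcon⟩ with hzdef
      have h5 : (e.symm z).1 ≤ sSup (Ck k) := le_csSup hbdd (e.symm z).2
      have h6 : e.symm z ≤ ⟨sSup (Ck k), hM⟩ := Subtype.coe_le_coe.1 h5
      have h7 := e.monotone h6
      rw [OrderIso.apply_symm_apply] at h7
      have h8 : (e ⟨sSup (Ck k), hM⟩).1 + 1 ≤ (e ⟨sSup (Ck k), hM⟩).1 :=
        Subtype.coe_le_coe.2 h7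
      have h9 : (e ⟨sSup (Ck k), hM⟩).1 < (e ⟨sSup (Ck k), hM⟩).1 := by
        calc (e ⟨sSup (Ck k), hM⟩).1 < (e ⟨sSup (Ck k), hM⟩).1 + 1 := by
              rw [Ordinal.add_one_eq_succ]; exact Order.lt_succ _
        _ ≤ (e ⟨sSup (Ck k), hM⟩).1 := h8
      exact absurd h9 (lt_irrefl _)
  have hσlim : ∀ k, ¬ Order.IsSuccLimit (σ k) := by
    intro k
    induction k with
    | zero => exact Ordinal.not_isSuccLimit_zero
    | succ n ih =>
        rcases hdz n with h0 | ⟨w, hw⟩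
        · rw [hσs, h0, add_zero]; exact ih
        · rw [hσs, hw, ← add_assoc, Ordinal.add_one_eq_succ]
          exact Order.not_isSuccLimit_succ _
  -- infinitude of big pieces
  have hLk1T : ∀ k : ℕ, L * ((k + 1 : ℕ) : Ordinal.{0}) < T := by
    intro k
    rw [hTL]
    exact (mul_lt_mul_iff_right₀ hL0).2 (Ordinal.nat_lt_omega0 (k + 1))
  have hSsub : (A ∩ maxRank α) ⊆
      (fun k : ℕ => (⟨L * ((k + 1 : ℕ) : Ordinal.{0}), hLk1T k⟩ : OrdT T)) ''
        {k : ℕ | L * ((k + 1 : ℕ) : Ordinal.{0}) ∈ A'} := by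
    rintro x ⟨hxA, hxM⟩
    have hxM' : ∃ j : ℕ, j ≠ 0 ∧ x.1 = Ordinal.omega0 ^ α * (j : Ordinal.{0}) := hxM
    obtain ⟨j, hj0, hxval⟩ := hxM'
    obtain ⟨i, rfl⟩ := Nat.exists_eq_succ_of_ne_zero hj0
    refine ⟨i, ?_, ?_⟩
    · show L * ((i + 1 : ℕ) : Ordinal.{0}) ∈ A'
      exact ⟨x, hxA, hxval⟩
    · apply Subtype.ext
      exact hxval.symm
  have hSinf : {k : ℕ | L * ((k + 1 : ℕ) : Ordinal.{0}) ∈ A'}.Infinite := by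
    by_contra hfin
    rw [Set.not_infinite] at hfin
    exact hinf (Set.Finite.subset (hfin.image _) hSsub)
  have hgrow : ∀ N : ℕ, ∃ k, N ≤ k ∧ Ordinal.lift.{1,0} L ≤ otype (Ck k) := by
    intro N
    rcases eq_or_ne α 0 with rfl | hα
    · -- α = 0 : L = 1, every nonempty piece works
      have hL1 : L = 1 := Ordinal.opow_zero Ordinal.omega0
      have hA'inf : A'.Infinite := by
        rw [hA'def]
        exact Set.Infinite.image (Subtype.val_injective.injOn) (hinf.mono Set.inter_subset_left)
      have hfinCk : ∀ k, (Ck k).Finite := by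
        intro k
        apply Set.Finite.subset ((Set.finite_singleton (m k + 1)).insert (m k))
        intro x hx
        have hx1 : m k ≤ x := hx.2.1
        have hx2 : x < m k + (L + 1) := by rw [← hms k]; exact hx.2.2
        simp only [Set.mem_insert_iff, Set.mem_singleton_iff]
        rw [hL1, ← add_assoc, Ordinal.add_one_eq_succ (m k + 1)] at hx2
        have hle : x ≤ m k + 1 := Order.lt_succ_iff.1 hx2
        rcases eq_or_lt_of_le hle with he | hl
        · right; exact he
        · left
          rw [Ordinal.add_one_eq_succ, Order.lt_succ_iff] at hl
          exact le_antisymm hl hx1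
      have hNE : {k : ℕ | (Ck k).Nonempty}.Infinite := by
        by_contra hfinNE
        rw [Set.not_infinite] at hfinNE
        have hsub : A' ⊆ ⋃ k ∈ {k : ℕ | (Ck k).Nonempty}, Ck k := by
          intro x hx
          have hx2 : x ∈ ⋃ k, Ck k := hCkU.symm ▸ hx
          obtain ⟨k, hk⟩ := Set.mem_iUnion.1 hx2
          exact Set.mem_biUnion ⟨x, hk⟩ hk
        exact hA'inf (Set.Finite.subset (hfinNE.biUnion (fun k _ => hfinCk k)) hsub)
      obtain ⟨k, hkmem, hkN⟩ := hNE.exists_gt N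
      refine ⟨k, hkN.le, ?_⟩
      rw [hL1, Ordinal.lift_one, Ordinal.one_le_iff_ne_zero]
      exact otype_ne_zero hkmem
    · -- α ≠ 0
      have h1L : 1 < L := by
        have h2 := (Ordinal.opow_lt_opow_iff_right Ordinal.one_lt_omega0).2
          (pos_iff_ne_zero.2 hα)
        rwa [Ordinal.opow_zero] at h2
      have h1Le : 1 + L = L := Ordinal.add_omega0_opow h1L
      have hm1 : ∀ i : ℕ, m (i + 1) = L * ((i + 1 : ℕ) : Ordinal.{0}) + 1 := by
        intro i
        induction i with
        | zero => rw [hms 0, hm0, zero_add, Nat.cast_one, mul_one]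
        | succ n ih =>
            calc m (n + 1 + 1) = (L * ((n + 1 : ℕ) : Ordinal.{0}) + 1) + (L + 1) := by
                  rw [hms (n + 1), ih]
            _ = L * ((n + 1 : ℕ) : Ordinal.{0}) + ((1 + L) + 1) := by
                  rw [add_assoc, add_assoc]
            _ = L * ((n + 1 : ℕ) : Ordinal.{0}) + (L + 1) := by rw [h1Le]
            _ = (L * ((n + 1 : ℕ) : Ordinal.{0}) + L) + 1 := by rw [add_assoc]
            _ = L * ((n + 1 + 1 : ℕ) : Ordinal.{0}) + 1 := by
                  rw [show ((n + 1 + 1 : ℕ) : Ordinal.{0}) = ((n + 1 : ℕ) : Ordinal.{0}) + 1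
                    from Nat.cast_succ (n + 1), mul_add, mul_one]
      obtain ⟨k, hkA', hkN⟩ := hSinf.exists_gt N
      refine ⟨k, hkN.le, ?_⟩
      set t : Ordinal.{0} := L * ((k + 1 : ℕ) : Ordinal.{0}) with htdef
      have htsplit : t = L * ((k : ℕ) : Ordinal.{0}) + L := by
        rw [htdef, Nat.cast_succ, mul_add, mul_one]
      have htpos : 0 < t := by
        apply mul_pos hL0
        rw [Nat.cast_succ]
        exact (zero_le (a := (k : Ordinal.{0}))).trans_lt
          (by rw [Ordinal.add_one_eq_succ]; exact Order.lt_succ _)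
      have hmk_lt_t : m k < t := by
        cases k with
        | zero => rw [hm0]; exact htpos
        | succ i =>
            rw [hm1 i, htdef, Nat.cast_succ (i + 1), mul_add, mul_one]
            exact (add_lt_add_iff_left _).2 h1L
      have ht_lt : t < m (k + 1) := by
        rw [hm1 k, Ordinal.add_one_eq_succ]
        exact Order.lt_succ _
      obtain ⟨γ, hγt, hγsub⟩ :=
        (SuccOrder.hasBasis_nhds_Ioc_of_exists_lt ⟨0, htpos⟩).mem_iff.1 (hA'open.mem_nhds hkA')
      set c : Ordinal.{0} := max γ (m k) with hcdef
      have hct : c < t := max_lt hγt hmk_lt_t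
      have hIoc : Ioc c t ⊆ Ck k := by
        rintro x ⟨hx1, hx2⟩
        refine ⟨hγsub ⟨(le_max_left γ (m k)).trans_lt hx1, hx2⟩,
          ((le_max_right γ (m k)).trans_lt hx1).le, hx2.trans_lt ht_lt⟩
      have hLk : L * ((k : ℕ) : Ordinal.{0}) ≤ c := by
        cases k with
        | zero => simp
        | succ i =>
            refine le_trans (le_self_add (b := (1 : Ordinal.{0}))) ?_
            rw [← hm1 i]
            exact le_max_right γ _
      have hη : c + L = t := by
        have hηlt : c - L * ((k : ℕ) : Ordinal.{0}) < L := by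
          apply Ordinal.sub_lt_of_lt_add _ hL0
          rw [← htsplit]
          exact hct
        have hηL : (c - L * ((k : ℕ) : Ordinal.{0})) + L = L :=
          Ordinal.add_omega0_opow hηlt
        calc c + L = (L * ((k : ℕ) : Ordinal.{0}) + (c - L * ((k : ℕ) : Ordinal.{0}))) + L := by
              rw [Ordinal.add_sub_cancel_of_le hLk]
        _ = L * ((k : ℕ) : Ordinal.{0}) + ((c - L * ((k : ℕ) : Ordinal.{0})) + L) := by
              rw [add_assoc]
        _ = L * ((k : ℕ) : Ordinal.{0}) + L := by rw [hηL]
        _ = t := htsplit.symm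
      have hIocIco : Ioc c t = Ico (c + 1) ((c + 1) + (L + 1)) := by
        have h3 : (c + 1) + (L + 1) = t + 1 := by
          calc (c + 1) + (L + 1) = c + ((1 + L) + 1) := by rw [add_assoc, add_assoc]
          _ = c + (L + 1) := by rw [h1Le]
          _ = (c + L) + 1 := by rw [add_assoc]
          _ = t + 1 := by rw [hη]
        rw [h3]
        ext x
        simp only [Set.mem_Ioc, Set.mem_Ico]
        constructor
        · rintro ⟨h4, h5⟩
          constructor
          · rw [Ordinal.add_one_eq_succ, Order.succ_le_iff]; exact h4
          · rw [Ordinal.add_one_eq_succ, Order.lt_succ_iff]; exact h5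
        · rintro ⟨h4, h5⟩
          constructor
          · rw [Ordinal.add_one_eq_succ, Order.succ_le_iff] at h4; exact h4
          · rw [Ordinal.add_one_eq_succ, Order.lt_succ_iff] at h5; exact h5
      have hlow : Ordinal.lift.{1,0} (L + 1) ≤ otype (Ck k) := by
        have h6 := otype_mono hIoc
        rwa [hIocIco, otype_Ico] at h6
      exact le_trans (Ordinal.lift_le.2 (le_self_add)) hlow
  -- growth of σ
  have hLj : ∀ j : ℕ, ∃ k, L * (j : Ordinal.{0}) ≤ σ k := by
    intro j
    induction j with
    | zero => exact ⟨0, by simp⟩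
    | succ n ih =>
        obtain ⟨k, hk⟩ := ih
        obtain ⟨k', hk'N, hk'big⟩ := hgrow k
        refine ⟨k' + 1, ?_⟩
        have hdk' : L ≤ d k' := by
          rw [← hd k'] at hk'big
          exact Ordinal.lift_le.1 hk'big
        rw [hσs, Nat.cast_succ, mul_add, mul_one]
        exact add_le_add (hk.trans (hσmono hk'N)) hdk'
  have hsupσ : ∀ x, x < T → ∃ k, x < σ k := by
    intro x hx
    rw [hTL] at hx
    obtain ⟨cω, hcω, hxc⟩ := (Ordinal.lt_mul_iff_of_isSuccLimit Ordinal.isSuccLimit_omega0).1 hx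
    obtain ⟨n, rfl⟩ := Ordinal.lt_omega0.1 hcω
    obtain ⟨k, hk⟩ := hLj n
    exact ⟨k, hxc.trans_le hk⟩
  -- the target pieces
  have hDkcl : ∀ k, IsClosed (Ico (σ k) (σ (k + 1))) :=
    fun k => (isClopen_Ico_ord (hσlim k) (hσlim (k + 1))).1
  have hDkopen : ∀ k, IsOpen (Ico (σ k) (σ (k + 1))) :=
    fun k => (isClopen_Ico_ord (hσlim k) (hσlim (k + 1))).2
  have hDkdisj := disjoint_Ico_chain hσmono
  have hDkU : ⋃ k, Ico (σ k) (σ (k + 1)) = Iio T := iUnion_Ico_chain hσ0 hσT hsupσ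
  -- homeomorphisms of the pieces
  have epieces : ∀ k, Nonempty (↥(Ck k) ≃ₜ ↥(Ico (σ k) (σ (k + 1)))) := by
    intro k
    haveI := orderTopology_of_isClosed (hCkcl k)
    haveI := orderTopology_of_isClosed (hDkcl k)
    obtain ⟨e1⟩ := hiso k
    have e2 : ↥(Iio (d k)) ≃o ↥(Ico (σ k) (σ (k + 1))) := addIso (σ k) (d k)
    exact ⟨(e1.trans e2).toHomeomorph⟩
  obtain ⟨G⟩ := glue hCkopen hDkopen hCkdisj hDkdisj (fun k => (epieces k).some)
  -- assemble
  have step1 : ↥A ≃ₜ ↥A' := imageValHomeo A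
  have step2 : ↥A' ≃ₜ ↥(⋃ k, Ck k) := Homeomorph.setCongr hCkU.symm
  have step4 : ↥(⋃ k, Ico (σ k) (σ (k + 1))) ≃ₜ ↥(Iio T) := Homeomorph.setCongr hDkU
  exact ⟨((step1.trans step2).trans G).trans step4⟩
end
end

section
/- Let α be an ordinal and let A, B be topological moieties of ω^{α+1}. Then there exists a homeomorphism σ of ω^{α+1} with σ(A) = B. Moreover, if A and B are disjoint, σ can be chosen to be an involution supported in A ∪ B. -/
noncomputable section

open Ordinal Topology Set

namespace S9

/-- Homeomorphism between two empty spaces. -/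
def emptyHomeo (X Y : Type*) [TopologicalSpace X] [TopologicalSpace Y]
    [IsEmpty X] [IsEmpty Y] : X ≃ₜ Y where
  toEquiv := Equiv.equivOfIsEmpty X Y
  continuous_toFun := by
    rw [continuous_def]
    intro s _
    rw [Set.eq_empty_of_isEmpty (_ ⁻¹' s)]
    exact isOpen_empty
  continuous_invFun := by
    rw [continuous_def]
    intro s _
    rw [Set.eq_empty_of_isEmpty (_ ⁻¹' s)]
    exact isOpen_empty

/-- Glue homeomorphisms of pieces of an open partition into a homeomorphism of unions. -/
theorem glueSet {X Y : Type*} [TopologicalSpace X] [TopologicalSpace Y] {ι : Type*}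
    {s : Set X} {t : Set Y} {P : ι → Set X} {Q : ι → Set Y}
    (hPo : ∀ i, IsOpen (P i)) (hQo : ∀ i, IsOpen (Q i))
    (hPd : ∀ i j, i ≠ j → ∀ x, x ∈ P i → x ∈ P j → False)
    (hQd : ∀ i j, i ≠ j → ∀ y, y ∈ Q i → y ∈ Q j → False)
    (hPu : (⋃ i, P i) = s) (hQu : (⋃ i, Q i) = t)
    (h : ∀ i, ↥(P i) ≃ₜ ↥(Q i)) :
    ∃ F : ↥s ≃ₜ ↥t, ∀ i (x : ↥s), x.1 ∈ P i → ((F x : ↥t) : Y) ∈ Q i := by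
  classical
  have hmemP : ∀ x : ↥s, ∃ i, x.1 ∈ P i := fun x => Set.mem_iUnion.mp (hPu ▸ x.2)
  have hmemQ : ∀ y : ↥t, ∃ i, y.1 ∈ Q i := fun y => Set.mem_iUnion.mp (hQu ▸ y.2)
  have hQt : ∀ i, Q i ⊆ t := fun i => hQu ▸ Set.subset_iUnion Q i
  have hPs : ∀ i, P i ⊆ s := fun i => hPu ▸ Set.subset_iUnion P i
  choose ix hix using hmemP
  choose iy hiy using hmemQ
  set f : ↥s → ↥t :=
    fun x => ⟨((h (ix x)) ⟨x.1, hix x⟩ : ↥(Q (ix x))).1, hQt _ (Subtype.coe_prop _)⟩ with hf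
  set g : ↥t → ↥s :=
    fun y => ⟨((h (iy y)).symm ⟨y.1, hiy y⟩ : ↥(P (iy y))).1, hPs _ (Subtype.coe_prop _)⟩ with hg
  have keyf : ∀ (x : ↥s) (i) (hxi : x.1 ∈ P i), (f x).1 = ((h i) ⟨x.1, hxi⟩ : ↥(Q i)).1 := by
    intro x i hxi
    have hii : ix x = i := by
      by_contra hne
      exact hPd _ _ hne x.1 (hix x) hxi
    subst hii
    rfl
  have keyg : ∀ (y : ↥t) (i) (hyi : y.1 ∈ Q i), (g y).1 = ((h i).symm ⟨y.1, hyi⟩ : ↥(P i)).1 := by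
    intro y i hyi
    have hii : iy y = i := by
      by_contra hne
      exact hQd _ _ hne y.1 (hiy y) hyi
    subst hii
    rfl
  have hfQ : ∀ (x : ↥s) (i) (hxi : x.1 ∈ P i), (f x).1 ∈ Q i := by
    intro x i hxi
    rw [keyf x i hxi]
    exact Subtype.coe_prop _
  have hgP : ∀ (y : ↥t) (i) (hyi : y.1 ∈ Q i), (g y).1 ∈ P i := by
    intro y i hyi
    rw [keyg y i hyi]
    exact Subtype.coe_prop _
  have hgf : ∀ x, g (f x) = x := by
    intro x
    apply Subtype.ext
    have h1 := hfQ x (ix x) (hix x)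
    rw [keyg (f x) (ix x) h1]
    have h2 : (⟨(f x).1, h1⟩ : ↥(Q (ix x))) = (h (ix x)) ⟨x.1, hix x⟩ :=
      Subtype.ext (keyf x (ix x) (hix x))
    rw [h2, Homeomorph.symm_apply_apply]
  have hfg : ∀ y, f (g y) = y := by
    intro y
    apply Subtype.ext
    have h1 := hgP y (iy y) (hiy y)
    rw [keyf (g y) (iy y) h1]
    have h2 : (⟨(g y).1, h1⟩ : ↥(P (iy y))) = (h (iy y)).symm ⟨y.1, hiy y⟩ :=
      Subtype.ext (keyg y (iy y) (hiy y))
    rw [h2, Homeomorph.apply_symm_apply]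
  have hfc : Continuous f := by
    rw [continuous_iff_continuousAt]
    intro x
    have hU : IsOpen {z : ↥s | z.1 ∈ P (ix x)} := (hPo (ix x)).preimage continuous_subtype_val
    have hcon : ContinuousOn f {z : ↥s | z.1 ∈ P (ix x)} := by
      rw [continuousOn_iff_continuous_restrict]
      have hre : Set.domRestrict {z : ↥s | z.1 ∈ P (ix x)} f =
          fun (z : ↥{z : ↥s | z.1 ∈ P (ix x)}) =>
            (⟨((h (ix x)) ⟨z.1.1, z.2⟩ : ↥(Q (ix x))).1, hQt _ (Subtype.coe_prop _)⟩ : ↥t) := by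
        funext z
        exact Subtype.ext (keyf z.1 (ix x) z.2)
      rw [hre]
      refine Continuous.subtype_mk ?_ _
      exact continuous_subtype_val.comp ((h (ix x)).continuous.comp
        (Continuous.subtype_mk (continuous_subtype_val.comp continuous_subtype_val) _))
    exact hcon.continuousAt (hU.mem_nhds (hix x))
  have hgc : Continuous g := by
    rw [continuous_iff_continuousAt]
    intro y
    have hU : IsOpen {z : ↥t | z.1 ∈ Q (iy y)} := (hQo (iy y)).preimage continuous_subtype_val
    have hcon : ContinuousOn g {z : ↥t | z.1 ∈ Q (iy y)} := by
      rw [continuousOn_iff_continuous_restrict]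
      have hre : Set.domRestrict {z : ↥t | z.1 ∈ Q (iy y)} g =
          fun (z : ↥{z : ↥t | z.1 ∈ Q (iy y)}) =>
            (⟨((h (iy y)).symm ⟨z.1.1, z.2⟩ : ↥(P (iy y))).1, hPs _ (Subtype.coe_prop _)⟩ : ↥s) := by
        funext z
        exact Subtype.ext (keyg z.1 (iy y) z.2)
      rw [hre]
      refine Continuous.subtype_mk ?_ _
      exact continuous_subtype_val.comp ((h (iy y)).symm.continuous.comp
        (Continuous.subtype_mk (continuous_subtype_val.comp continuous_subtype_val) _))
    exact hcon.continuousAt (hU.mem_nhds (hiy y))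
  exact ⟨⟨⟨f, g, hgf, hfg⟩, hfc, hgc⟩, fun i x hxi => hfQ x i hxi⟩

theorem iUnion_bool' {α : Type*} (f : Bool → Set α) : (⋃ b, f b) = f true ∪ f false := by
  ext x
  simp [Set.mem_iUnion, Bool.exists_bool, or_comm]

theorem isOpen_Iic' (a : Ordinal.{0}) : IsOpen (Iic a) := by
  rw [← Order.Iio_succ]; exact isOpen_Iio

theorem isClosed_Ioi' (a : Ordinal.{0}) : IsClosed (Ioi a) := by
  rw [← Set.compl_Iic]
  exact (isOpen_Iic' a).isClosed_compl

theorem isOpen_Ioc' (a b : Ordinal.{0}) : IsOpen (Ioc a b) := by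
  rw [← Set.Ioi_inter_Iic]
  exact isOpen_Ioi.inter (isOpen_Iic' b)

theorem isClosed_Ioc' (a b : Ordinal.{0}) : IsClosed (Ioc a b) := by
  rw [← Set.Ioi_inter_Iic]
  exact (isClosed_Ioi' a).inter isClosed_Iic

/-- Translation order isomorphism between `Ioc` intervals of ordinals. -/
def iocHomeo {a b c d : Ordinal.{0}} (hab : a ≤ b) (hd : d = c + (b - a)) :
    ↥(Ioc a b) ≃ₜ ↥(Ioc c d) := by
  subst hd
  have hmono : StrictMono (fun x : ↥(Ioc a b) =>
      (⟨c + (x.1 - a), by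
        constructor
        · have h0 : x.1 - a ≠ 0 := by
            rw [Ne, Ordinal.sub_eq_zero_iff_le]
            exact not_le.mpr x.2.1
          have : (0 : Ordinal) < x.1 - a := pos_iff_ne_zero.mpr h0
          calc c = c + 0 := (add_zero c).symm
          _ < c + (x.1 - a) := by rw [add_lt_add_iff_left]; exact this
        · rw [add_le_add_iff_left]
          have hax : a ≤ x.1 := le_of_lt x.2.1
          have : a + (x.1 - a) ≤ a + (b - a) := by
            rw [Ordinal.add_sub_cancel_of_le hax, Ordinal.add_sub_cancel_of_le hab]
            exact x.2.2
          rwa [add_le_add_iff_left] at this⟩ : ↥(Ioc c (c + (b - a))))) := by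
    intro x y hxy
    have hxy' : x.1 < y.1 := hxy
    show c + (x.1 - a) < c + (y.1 - a)
    rw [add_lt_add_iff_left]
    have hax : a ≤ x.1 := le_of_lt x.2.1
    have hay : a ≤ y.1 := le_of_lt y.2.1
    have : a + (x.1 - a) < a + (y.1 - a) := by
      rw [Ordinal.add_sub_cancel_of_le hax, Ordinal.add_sub_cancel_of_le hay]
      exact hxy'
    rwa [add_lt_add_iff_left] at this
  have hsurj : Function.Surjective (fun x : ↥(Ioc a b) =>
      (⟨c + (x.1 - a), by
        constructor
        · have h0 : x.1 - a ≠ 0 := by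
            rw [Ne, Ordinal.sub_eq_zero_iff_le]
            exact not_le.mpr x.2.1
          have : (0 : Ordinal) < x.1 - a := pos_iff_ne_zero.mpr h0
          calc c = c + 0 := (add_zero c).symm
          _ < c + (x.1 - a) := by rw [add_lt_add_iff_left]; exact this
        · rw [add_le_add_iff_left]
          have hax : a ≤ x.1 := le_of_lt x.2.1
          have : a + (x.1 - a) ≤ a + (b - a) := by
            rw [Ordinal.add_sub_cancel_of_le hax, Ordinal.add_sub_cancel_of_le hab]
            exact x.2.2
          rwa [add_le_add_iff_left] at this⟩ : ↥(Ioc c (c + (b - a))))) := by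
    intro y
    have hcy : c ≤ y.1 := le_of_lt y.2.1
    have hyc0 : y.1 - c ≠ 0 := by
      rw [Ne, Ordinal.sub_eq_zero_iff_le]
      exact not_le.mpr y.2.1
    have hycb : y.1 - c ≤ b - a := by
      have : c + (y.1 - c) ≤ c + (b - a) := by
        rw [Ordinal.add_sub_cancel_of_le hcy]
        exact y.2.2
      rwa [add_le_add_iff_left] at this
    refine ⟨⟨a + (y.1 - c), ?_, ?_⟩, ?_⟩
    · calc a = a + 0 := (add_zero a).symm
      _ < a + (y.1 - c) := by
          rw [add_lt_add_iff_left]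
          exact pos_iff_ne_zero.mpr hyc0
    · calc a + (y.1 - c) ≤ a + (b - a) := by rw [add_le_add_iff_left]; exact hycb
      _ = b := Ordinal.add_sub_cancel_of_le hab
    · apply Subtype.ext
      show c + ((a + (y.1 - c)) - a) = y.1
      rw [Ordinal.add_sub_cancel, Ordinal.add_sub_cancel_of_le hcy]
  exact (StrictMono.orderIsoOfSurjective _ hmono hsurj).toHomeomorph


theorem exists_max {C : Set Ordinal.{0}} (hC : IsClosed C) {b : Ordinal.{0}}
    (hCb : ∀ x ∈ C, x ≤ b) (hne : C.Nonempty) : ∃ t ∈ C, ∀ x ∈ C, x ≤ t := by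
  classical
  set U : Set Ordinal.{0} := {u | ∀ x ∈ C, x ≤ u} with hU
  have hUne : U.Nonempty := ⟨b, hCb⟩
  set t := Ordinal.lt_wf.min U hUne with ht
  have htU : ∀ x ∈ C, x ≤ t := Ordinal.lt_wf.min_mem U hUne
  refine ⟨t, ?_, htU⟩
  by_contra htC
  rcases Ordinal.zero_or_succ_or_isSuccLimit t with h0 | ⟨a, ha⟩ | hl
  · obtain ⟨x, hx⟩ := hne
    have : x ≤ t := htU x hx
    rw [h0, nonpos_iff_eq_zero] at this
    exact htC (by rwa [h0, ← this])
  · have haU : a ∈ U := by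
      intro x hx
      have hxt : x ≤ t := htU x hx
      have hxn : x ≠ t := fun h => htC (h ▸ hx)
      have : x < t := lt_of_le_of_ne hxt hxn
      rw [← ha] at this
      exact Order.lt_succ_iff.mp this
    refine Ordinal.lt_wf.not_lt_min U haU ?_
    show a < t
    rw [← ha]
    exact Order.lt_succ a
  · have hop : IsOpen Cᶜ := hC.isOpen_compl
    obtain ⟨a, hat, haIoo⟩ := Ordinal.isOpen_iff.mp hop t htC hl
    have haU : a ∈ U := by
      intro x hx
      by_contra hax
      push_neg at hax
      have hxt : x ≤ t := htU x hx
      have hxn : x ≠ t := fun h => htC (h ▸ hx)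
      exact haIoo ⟨hax, lt_of_le_of_ne hxt hxn⟩ hx
    exact Ordinal.lt_wf.not_lt_min U haU (show a < t from hat)

theorem peel {C : Set Ordinal.{0}} (hCo : IsOpen C) {t : Ordinal.{0}} (htC : t ∈ C)
    (ht0 : t ≠ 0) : ∃ c < t, Ioc c t ⊆ C := by
  rcases Ordinal.zero_or_succ_or_isSuccLimit t with h0 | ⟨a, ha⟩ | hl
  · exact absurd h0 ht0
  · refine ⟨a, by rw [← ha]; exact Order.lt_succ a, ?_⟩
    intro x hx
    have : x = t := by
      apply le_antisymm hx.2
      rw [← ha]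
      exact Order.succ_le_of_lt hx.1
    rwa [this]
  · obtain ⟨a, hat, haIoo⟩ := Ordinal.isOpen_iff.mp hCo t htC hl
    refine ⟨a, hat, ?_⟩
    intro x hx
    rcases eq_or_lt_of_le hx.2 with rfl | hlt
    · exact htC
    · exact haIoo ⟨hx.1, hlt⟩

/-- Main induction: a bounded clopen set of ordinals avoiding `0` and all positive
multiples of `β` is homeomorphic to `Ioc 0 e` for some `e < β`. -/
theorem small {β : Ordinal.{0}} (hβ : 0 < β)
    (hprin : ∀ x y, x < β → y < β → x + y < β) (t : Ordinal.{0}) :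
    ∀ D : Set Ordinal.{0}, IsOpen D → IsClosed D → (∀ x ∈ D, x ≤ t) → 0 ∉ D →
    (∀ γ : Ordinal.{0}, 0 < γ → β * γ ∉ D) →
    ∃ e < β, Nonempty (↥D ≃ₜ ↥(Ioc (0 : Ordinal.{0}) e)) := by
  induction t using Ordinal.induction with
  | h t IH =>
  intro D hDo hDc hDb hD0 hDm
  rcases D.eq_empty_or_nonempty with rfl | hne
  · refine ⟨0, hβ, ⟨?_⟩⟩
    haveI h1 : IsEmpty ↥(∅ : Set Ordinal.{0}) := Set.isEmpty_coe_sort.mpr rfl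
    haveI h2 : IsEmpty ↥(Ioc (0 : Ordinal.{0}) 0) := Set.isEmpty_coe_sort.mpr (by simp)
    exact emptyHomeo _ _
  obtain ⟨t₀, ht₀C, ht₀m⟩ := exists_max hDc hDb hne
  have ht₀0 : t₀ ≠ 0 := fun h => hD0 (h ▸ ht₀C)
  obtain ⟨c, hct, hIoc⟩ := peel hDo ht₀C ht₀0
  have hsplit : D = (D ∩ Iic c) ∪ Ioc c t₀ := by
    apply Set.eq_of_subset_of_subset
    · intro x hx
      rcases le_or_gt x c with hc | hc
      · exact Or.inl ⟨hx, hc⟩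
      · exact Or.inr ⟨hc, ht₀m x hx⟩
    · intro x hx
      rcases hx with hx | hx
      · exact hx.1
      · exact hIoc hx
  have hθ : t₀ - c < β := by
    by_contra hge
    push_neg at hge
    have h1 : c + β ≤ t₀ := by
      calc c + β ≤ c + (t₀ - c) := by rw [add_le_add_iff_left]; exact hge
      _ = t₀ := Ordinal.add_sub_cancel_of_le hct.le
    have hμ1 : c < β * Order.succ (c / β) := Ordinal.lt_mul_succ_div c hβ.ne'
    have hμ2 : β * Order.succ (c / β) ≤ c + β := by
      rw [Ordinal.mul_succ]
      exact add_le_add (Ordinal.mul_div_le c β) le_rfl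
    exact hDm (Order.succ (c / β)) ((zero_le : (0:Ordinal) ≤ _).trans_lt (Order.lt_succ _)) (hIoc ⟨hμ1, hμ2.trans h1⟩)
  -- apply IH to D ∩ Iic c
  have hDc' : D ∩ Iic c ⊆ D := Set.inter_subset_left
  obtain ⟨e', he', ⟨F'⟩⟩ := IH c (lt_of_lt_of_le hct (hDb t₀ ht₀C)) (D ∩ Iic c)
    (hDo.inter (isOpen_Iic' c)) (hDc.inter isClosed_Iic)
    (fun x hx => hx.2) (fun h => hD0 (hDc' h)) (fun γ hγ h => hDm γ hγ (hDc' h))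
  set e := e' + (t₀ - c) with he
  refine ⟨e, hprin _ _ he' hθ, ?_⟩
  have hkey : ↥(Ioc c t₀) ≃ₜ ↥(Ioc e' e) := iocHomeo hct.le he
  -- glue the two pieces
  have hglue := glueSet (s := D) (t := Ioc (0:Ordinal.{0}) e)
    (P := fun b : Bool => cond b (Ioc c t₀) (D ∩ Iic c))
    (Q := fun b : Bool => cond b (Ioc e' e) (Ioc 0 e'))
    (fun b => by cases b
                 · exact hDo.inter (isOpen_Iic' c)
                 · exact isOpen_Ioc' c t₀)
    (fun b => by cases b
                 · exact isOpen_Ioc' 0 e'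
                 · exact isOpen_Ioc' e' e)
    (fun i j hij x hxi hxj => by
      cases i <;> cases j
      · exact hij rfl
      · exact absurd hxi.2 (not_le.mpr hxj.1)
      · exact absurd hxj.2 (not_le.mpr hxi.1)
      · exact hij rfl)
    (fun i j hij x hxi hxj => by
      cases i <;> cases j
      · exact hij rfl
      · exact absurd hxi.2 (not_le.mpr hxj.1)
      · exact absurd hxj.2 (not_le.mpr hxi.1)
      · exact hij rfl)
    (by rw [iUnion_bool']
        show Ioc c t₀ ∪ (D ∩ Iic c) = D
        rw [Set.union_comm]
        exact hsplit.symm)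
    (by rw [iUnion_bool']
        show Ioc e' e ∪ Ioc 0 e' = Ioc 0 e
        rw [Set.union_comm]
        exact Set.Ioc_union_Ioc_eq_Ioc (zero_le : (0:Ordinal) ≤ e') (le_self_add (a := e') (b := t₀ - c)))
    (fun b => by cases b
                 · exact F'
                 · exact hkey)
  obtain ⟨F, _⟩ := hglue
  exact ⟨F⟩


/-- A bounded clopen set whose maximum is `β * m` and which contains no other
positive multiple of `β`, and not `0`, is homeomorphic to `Ioc 0 β`. -/
theorem pieceNo0 {β : Ordinal.{0}} (hβ : 0 < β)
    (hprin : ∀ x y, x < β → y < β → x + y < β)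
    (hβω : ∀ x, x < β → x + β = β)
    {C : Set Ordinal.{0}} (hCo : IsOpen C) (hCc : IsClosed C)
    {m : ℕ} (hm : 0 < m) (hmC : β * (m : Ordinal) ∈ C)
    (hbd : ∀ x ∈ C, x ≤ β * (m : Ordinal))
    (hmult : ∀ γ : Ordinal.{0}, 0 < γ → β * γ ∈ C → γ = (m : Ordinal))
    (h0 : 0 ∉ C) :
    Nonempty (↥C ≃ₜ ↥(Ioc (0 : Ordinal.{0}) β)) := by
  classical
  set t₀ : Ordinal.{0} := β * (m : Ordinal) with ht₀
  have hmpos : (0 : Ordinal) < (m : Ordinal) := by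
    rwa [← Nat.cast_zero, Nat.cast_lt]
  have ht₀pos : (0 : Ordinal) < t₀ := mul_pos hβ hmpos
  obtain ⟨c, hct, hIoc⟩ := peel hCo hmC ht₀pos.ne'
  have hsplit : C = (C ∩ Iic c) ∪ Ioc c t₀ := by
    apply Set.eq_of_subset_of_subset
    · intro x hx
      rcases le_or_gt x c with hc | hc
      · exact Or.inl ⟨hx, hc⟩
      · exact Or.inr ⟨hc, hbd x hx⟩
    · intro x hx
      rcases hx with hx | hx
      · exact hx.1
      · exact hIoc hx
  -- the part below c
  have hD := small hβ hprin c (C ∩ Iic c) (hCo.inter (isOpen_Iic' c))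
    (hCc.inter isClosed_Iic) (fun x hx => hx.2) (fun h => h0 h.1)
    (fun γ hγ h => by
      have := hmult γ hγ h.1
      subst this
      exact absurd h.2 (not_le.mpr hct))
  obtain ⟨e', he', ⟨F'⟩⟩ := hD
  -- θ = β
  have hmm : β * ((m - 1 : ℕ) : Ordinal) + β = t₀ := by
    rw [ht₀, ← Ordinal.mul_succ, ← Ordinal.add_one_eq_succ]
    congr 1
    have hnat : ((m - 1 : ℕ) : Ordinal) + ((1:ℕ):Ordinal) = ((m:ℕ) : Ordinal) := by
      rw [← Nat.cast_add]
      congr 1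
      omega
    simpa using hnat
  have hc' : β * ((m - 1 : ℕ) : Ordinal) ≤ c := by
    rcases Nat.eq_zero_or_pos (m - 1) with h | h
    · rw [h, Nat.cast_zero, mul_zero]
      exact (zero_le : (0:Ordinal) ≤ c)
    · by_contra hlt
      push_neg at hlt
      have hmem : β * ((m - 1 : ℕ) : Ordinal) ∈ Ioc c t₀ := by
        constructor
        · exact hlt
        · rw [ht₀, mul_le_mul_iff_right₀ hβ, Nat.cast_le]
          exact Nat.sub_le m 1
      have := hmult _ (by rwa [← Nat.cast_zero, Nat.cast_lt]) (hIoc hmem)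
      rw [Nat.cast_inj] at this
      omega
  have hr : c - β * ((m - 1 : ℕ) : Ordinal) < β := by
    by_contra hge
    push_neg at hge
    have : β * ((m - 1 : ℕ) : Ordinal) + β ≤
        β * ((m - 1 : ℕ) : Ordinal) + (c - β * ((m - 1 : ℕ) : Ordinal)) := by
      rw [add_le_add_iff_left]
      exact hge
    rw [Ordinal.add_sub_cancel_of_le hc', hmm] at this
    exact absurd this (not_le.mpr hct)
  have hθβ : t₀ - c = β := by
    have h1 : β * ((m - 1 : ℕ) : Ordinal) + ((c - β * ((m - 1 : ℕ) : Ordinal)) + (t₀ - c)) = t₀ := by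
      rw [← add_assoc, Ordinal.add_sub_cancel_of_le hc', Ordinal.add_sub_cancel_of_le hct.le]
    have h2 : β * ((m - 1 : ℕ) : Ordinal) + β = t₀ := hmm
    have h3 : (c - β * ((m - 1 : ℕ) : Ordinal)) + (t₀ - c) = β := by
      have := h1.trans h2.symm
      rwa [add_right_inj] at this
    have h4 : (c - β * ((m - 1 : ℕ) : Ordinal)) + β = β := hβω _ hr
    have := h3.trans h4.symm
    rwa [add_right_inj] at this
  have heβ : e' + (t₀ - c) = β := by
    rw [hθβ]
    exact hβω e' he'
  have hkey : ↥(Ioc c t₀) ≃ₜ ↥(Ioc e' (e' + (t₀ - c))) := iocHomeo hct.le rfl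
  have hglue := glueSet (s := C) (t := Ioc (0:Ordinal.{0}) β)
    (P := fun b : Bool => cond b (Ioc c t₀) (C ∩ Iic c))
    (Q := fun b : Bool => cond b (Ioc e' β) (Ioc 0 e'))
    (fun b => by cases b
                 · exact hCo.inter (isOpen_Iic' c)
                 · exact isOpen_Ioc' c t₀)
    (fun b => by cases b
                 · exact isOpen_Ioc' 0 e'
                 · exact isOpen_Ioc' e' β)
    (fun i j hij x hxi hxj => by
      cases i <;> cases j
      · exact hij rfl
      · exact absurd hxi.2 (not_le.mpr hxj.1)
      · exact absurd hxj.2 (not_le.mpr hxi.1)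
      · exact hij rfl)
    (fun i j hij x hxi hxj => by
      cases i <;> cases j
      · exact hij rfl
      · exact absurd hxi.2 (not_le.mpr hxj.1)
      · exact absurd hxj.2 (not_le.mpr hxi.1)
      · exact hij rfl)
    (by rw [iUnion_bool']
        show Ioc c t₀ ∪ (C ∩ Iic c) = C
        rw [Set.union_comm]
        exact hsplit.symm)
    (by rw [iUnion_bool']
        show Ioc e' β ∪ Ioc 0 e' = Ioc 0 β
        rw [Set.union_comm]
        exact Set.Ioc_union_Ioc_eq_Ioc (zero_le : (0:Ordinal) ≤ e') he'.le)
    (fun b => by cases b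
                 · exact F'
                 · rw [← heβ]; exact hkey)
  obtain ⟨F, _⟩ := hglue
  exact ⟨F⟩

/-- For `β ≥ ω`, `[0, β]` is homeomorphic to `(0, β]`. -/
def iicIocHomeo {β : Ordinal.{0}} (hω : omega0 ≤ β) :
    ↥(Iic (β:Ordinal.{0})) ≃ₜ ↥(Ioc (0 : Ordinal.{0}) β) := by
  classical
  have hf : ∀ x : ↥(Iic (β:Ordinal.{0})), (if x.1 < omega0 then x.1 + 1 else x.1) ∈ Ioc (0:Ordinal.{0}) β := by
    intro x
    by_cases h : x.1 < omega0
    · rw [if_pos h]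
      constructor
      · exact (zero_le : (0:Ordinal) ≤ x.1).trans_lt (by rw [Ordinal.add_one_eq_succ]; exact Order.lt_succ x.1)
      · rw [Ordinal.add_one_eq_succ]
        exact (Order.succ_le_of_lt h).trans hω
    · rw [if_neg h]
      push_neg at h
      exact ⟨lt_of_lt_of_le Ordinal.omega0_pos h, x.2⟩
  set f : ↥(Iic (β:Ordinal.{0})) → ↥(Ioc (0 : Ordinal.{0}) β) := fun x => ⟨_, hf x⟩ with hfdef
  have hmono : StrictMono f := by
    intro x y hxy
    have hxy' : x.1 < y.1 := hxy
    show (if x.1 < omega0 then x.1 + 1 else x.1) < (if y.1 < omega0 then y.1 + 1 else y.1)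
    by_cases hx : x.1 < omega0 <;> by_cases hy : y.1 < omega0
    · rw [if_pos hx, if_pos hy, Ordinal.add_one_eq_succ, Ordinal.add_one_eq_succ]
      exact Order.succ_lt_succ hxy'
    · rw [if_pos hx, if_neg hy]
      push_neg at hy
      obtain ⟨n, hn⟩ := Ordinal.lt_omega0.mp hx
      have : x.1 + 1 < omega0 := by
        rw [hn]
        have : ((n:Ordinal) + 1) = ((n+1 : ℕ) : Ordinal) := by norm_cast
        rw [this]
        exact Ordinal.nat_lt_omega0 (n+1)
      exact lt_of_lt_of_le this hy
    · exact absurd (hxy'.trans hy) hx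
    · rw [if_neg hx, if_neg hy]
      exact hxy'
  have hsurj : Function.Surjective f := by
    intro y
    by_cases h : y.1 < omega0
    · obtain ⟨n, hn⟩ := Ordinal.lt_omega0.mp h
      have hn0 : n ≠ 0 := by
        intro h0
        subst h0
        rw [Nat.cast_zero] at hn
        exact y.2.1.ne' hn
      obtain ⟨k, rfl⟩ := Nat.exists_eq_succ_of_ne_zero hn0
      refine ⟨⟨(k : Ordinal), le_trans (Ordinal.nat_lt_omega0 k).le hω⟩, ?_⟩
      apply Subtype.ext
      show (if (k:Ordinal) < omega0 then (k:Ordinal) + 1 else (k:Ordinal)) = y.1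
      rw [if_pos (Ordinal.nat_lt_omega0 k), hn]
      norm_cast
    · refine ⟨⟨y.1, y.2.2⟩, ?_⟩
      apply Subtype.ext
      show (if y.1 < omega0 then y.1 + 1 else y.1) = y.1
      rw [if_neg h]
  exact (StrictMono.orderIsoOfSurjective f hmono hsurj).toHomeomorph

/-- Like `pieceNo0`, but the set may contain `0`; requires `β ≥ ω`. -/
theorem piece {β : Ordinal.{0}} (hβ : 0 < β)
    (hprin : ∀ x y, x < β → y < β → x + y < β)
    (hβω : ∀ x, x < β → x + β = β) (hω : omega0 ≤ β)
    {C : Set Ordinal.{0}} (hCo : IsOpen C) (hCc : IsClosed C)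
    {m : ℕ} (hm : 0 < m) (hmC : β * (m : Ordinal) ∈ C)
    (hbd : ∀ x ∈ C, x ≤ β * (m : Ordinal))
    (hmult : ∀ γ : Ordinal.{0}, 0 < γ → β * γ ∈ C → γ = (m : Ordinal)) :
    Nonempty (↥C ≃ₜ ↥(Ioc (0 : Ordinal.{0}) β)) := by
  classical
  by_cases h0 : 0 ∈ C
  · -- split off the point 0
    have hmpos : (0 : Ordinal) < (m : Ordinal) := by rwa [← Nat.cast_zero, Nat.cast_lt]
    have ht₀pos : (0 : Ordinal) < β * (m : Ordinal) := mul_pos hβ hmpos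
    have h1 := pieceNo0 hβ hprin hβω (hCo.inter isOpen_Ioi) (hCc.inter (isClosed_Ioi' 0)) hm
      (⟨hmC, ht₀pos⟩ : β * (m : Ordinal) ∈ C ∩ Ioi 0)
      (fun x hx => hbd x hx.1)
      (fun γ hγ h => hmult γ hγ h.1)
      (fun h => (lt_irrefl (0:Ordinal.{0})) h.2)
    obtain ⟨F₁⟩ := h1
    have hsing : IsOpen ({0} : Set Ordinal.{0}) := by
      rw [Ordinal.isOpen_singleton_iff]
      intro h
      exact absurd h.pos (lt_irrefl 0)
    have hglue := glueSet (s := C) (t := Iic (β:Ordinal.{0}))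
      (P := fun b : Bool => cond b (C ∩ Ioi 0) ({0} : Set Ordinal.{0}))
      (Q := fun b : Bool => cond b (Ioc 0 β) ({0} : Set Ordinal.{0}))
      (fun b => by cases b
                   · exact hsing
                   · exact hCo.inter isOpen_Ioi)
      (fun b => by cases b
                   · exact hsing
                   · exact isOpen_Ioc' 0 β)
      (fun i j hij x hxi hxj => by
        cases i <;> cases j <;>
          simp only [Bool.cond_false, Bool.cond_true, Set.mem_singleton_iff] at hxi hxj
        · exact hij rfl
        · exact absurd (hxi ▸ hxj.2) (lt_irrefl (0:Ordinal.{0}))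
        · exact absurd (hxj ▸ hxi.2) (lt_irrefl (0:Ordinal.{0}))
        · exact hij rfl)
      (fun i j hij x hxi hxj => by
        cases i <;> cases j <;>
          simp only [Bool.cond_false, Bool.cond_true, Set.mem_singleton_iff] at hxi hxj
        · exact hij rfl
        · exact absurd (hxi ▸ hxj.1) (lt_irrefl (0:Ordinal.{0}))
        · exact absurd (hxj ▸ hxi.1) (lt_irrefl (0:Ordinal.{0}))
        · exact hij rfl)
      (by rw [iUnion_bool']
          show (C ∩ Ioi 0) ∪ {0} = C
          apply Set.eq_of_subset_of_subset
          · rintro x (hx | hx)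
            · exact hx.1
            · rw [Set.mem_singleton_iff] at hx; rwa [hx]
          · intro x hx
            rcases eq_or_ne x 0 with rfl | hne
            · exact Or.inr rfl
            · exact Or.inl ⟨hx, pos_iff_ne_zero.mpr hne⟩)
      (by rw [iUnion_bool']
          show Ioc 0 β ∪ {0} = Iic β
          apply Set.eq_of_subset_of_subset
          · rintro x (hx | hx)
            · exact hx.2
            · rw [Set.mem_singleton_iff] at hx; rw [hx]; exact (zero_le : (0:Ordinal) ≤ β)
          · intro x hx
            rcases eq_or_ne x 0 with rfl | hne
            · exact Or.inr rfl
            · exact Or.inl ⟨pos_iff_ne_zero.mpr hne, hx⟩)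
      (fun b => by cases b
                   · exact Homeomorph.refl _
                   · exact F₁)
    obtain ⟨F, _⟩ := hglue
    exact ⟨F.trans (iicIocHomeo hω)⟩
  · exact pieceNo0 hβ hprin hβω hCo hCc hm hmC hbd hmult h0


/-- Decomposition of a "moiety half" into countably many pieces, each
homeomorphic to `Ioc 0 β`. -/
theorem decomp {β : Ordinal.{0}} (hβ : 0 < β)
    (hprin : ∀ x y, x < β → y < β → x + y < β)
    (hβω : ∀ x, x < β → x + β = β) (hω : omega0 ≤ β)
    {A : Set Ordinal.{0}}
    (hAo : IsOpen A) (hAc : ∀ b, b < β * omega0 → IsClosed (A ∩ Iic b))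
    (hAsub : A ⊆ Iio (β * omega0))
    (hAtop : {k : ℕ | 0 < k ∧ β * (k : Ordinal) ∈ A}.Infinite) :
    ∃ P : ℕ → Set Ordinal.{0}, (∀ i, IsOpen (P i)) ∧
      (∀ i j, i ≠ j → ∀ x, x ∈ P i → x ∈ P j → False) ∧
      (⋃ i, P i) = A ∧ (∀ i, Nonempty (↥(P i) ≃ₜ ↥(Ioc (0 : Ordinal.{0}) β))) := by
  classical
  set p : ℕ → Prop := fun k => 0 < k ∧ β * (k : Ordinal) ∈ A with hp_def
  have hp : (setOf p).Infinite := hAtop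
  set m : ℕ → ℕ := Nat.nth p with hm_def
  have hmono : StrictMono m := Nat.nth_strictMono hp
  have hmem : ∀ i, p (m i) := fun i => Nat.nth_mem_of_infinite hp i
  have hsurj : ∀ k, p k → ∃ i, m i = k := fun k hk => ⟨Nat.count p k, Nat.nth_count hk⟩
  set P : ℕ → Set Ordinal.{0} := fun i =>
    match i with
    | 0 => A ∩ Iic (β * (m 0 : Ordinal))
    | (j+1) => A ∩ Ioc (β * (m j : Ordinal)) (β * (m (j+1) : Ordinal)) with hP_def
  have hub : ∀ i x, x ∈ P i → x ∈ A ∧ x ≤ β * (m i : Ordinal) := by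
    intro i x hx
    cases i with
    | zero => exact ⟨hx.1, hx.2⟩
    | succ j => exact ⟨hx.1, hx.2.2⟩
  have hmlt : ∀ i j : ℕ, i < j → β * (m i : Ordinal) < β * (m j : Ordinal) := by
    intro i j hij
    rw [mul_lt_mul_iff_right₀ hβ, Nat.cast_lt]
    exact hmono hij
  have hmax : ∀ i, β * (m i : Ordinal) ∈ P i := by
    intro i
    cases i with
    | zero => exact ⟨(hmem 0).2, Set.mem_Iic.mpr (le_refl _)⟩
    | succ j => exact ⟨(hmem (j+1)).2, Set.mem_Ioc.mpr ⟨hmlt j (j+1) (Nat.lt_succ_self j), le_refl _⟩⟩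
  have hPo : ∀ i, IsOpen (P i) := by
    intro i
    cases i with
    | zero => exact hAo.inter (isOpen_Iic' _)
    | succ j => exact hAo.inter (isOpen_Ioc' _ _)
  have hbω : ∀ i : ℕ, β * (m i : Ordinal) < β * omega0 := by
    intro i
    rw [mul_lt_mul_iff_right₀ hβ]
    exact Ordinal.nat_lt_omega0 _
  have hPc : ∀ i, IsClosed (P i) := by
    intro i
    cases i with
    | zero => exact hAc _ (hbω 0)
    | succ j =>
      have heq : P (j+1) = (A ∩ Iic (β * (m (j+1) : Ordinal))) ∩
          Ioc (β * (m j : Ordinal)) (β * (m (j+1) : Ordinal)) := by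
        ext x
        constructor
        · intro hx
          exact ⟨⟨hx.1, hx.2.2⟩, hx.2⟩
        · intro hx
          exact ⟨hx.1.1, hx.2⟩
      rw [heq]
      exact (hAc _ (hbω (j+1))).inter (isClosed_Ioc' _ _)
  have hPd : ∀ i j, i ≠ j → ∀ x, x ∈ P i → x ∈ P j → False := by
    have key : ∀ i j, i < j → ∀ x, x ∈ P i → x ∈ P j → False := by
      intro i j hij x hxi hxj
      obtain ⟨j', rfl⟩ : ∃ j', j = j' + 1 := by
        cases j with
        | zero => omega
        | succ j' => exact ⟨j', rfl⟩
      have h1 : x ≤ β * (m i : Ordinal) := (hub i x hxi).2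
      have h2 : β * (m j' : Ordinal) < x := hxj.2.1
      have h3 : β * (m i : Ordinal) ≤ β * (m j' : Ordinal) := by
        rw [mul_le_mul_iff_right₀ hβ, Nat.cast_le]
        exact hmono.monotone (by omega)
      exact absurd (h1.trans h3) (not_le.mpr h2)
    intro i j hij x hxi hxj
    rcases lt_or_gt_of_ne hij with h | h
    · exact key i j h x hxi hxj
    · exact key j i h x hxj hxi
  have hPu : (⋃ i, P i) = A := by
    apply Set.eq_of_subset_of_subset
    · intro x hx
      obtain ⟨i, hi⟩ := Set.mem_iUnion.mp hx
      exact (hub i x hi).1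
    · intro x hx
      have hxω : x < β * omega0 := hAsub hx
      obtain ⟨c', hc'ω, hxc'⟩ := (Ordinal.lt_mul_iff_of_isSuccLimit Ordinal.isSuccLimit_omega0).mp hxω
      obtain ⟨n, rfl⟩ := Ordinal.lt_omega0.mp hc'ω
      have hxn : x ≤ β * (m n : Ordinal) := by
        apply le_of_lt
        apply lt_of_lt_of_le hxc'
        rw [mul_le_mul_iff_right₀ hβ, Nat.cast_le]
        exact hmono.le_apply
      have hS : ∃ i, x ≤ β * (m i : Ordinal) := ⟨n, hxn⟩
      rcases hfind : Nat.find hS with _ | k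
      · have hspec := Nat.find_spec hS
        rw [hfind] at hspec
        exact Set.mem_iUnion.mpr ⟨0, ⟨hx, hspec⟩⟩
      · have hspec := Nat.find_spec hS
        rw [hfind] at hspec
        have hmin : ¬ x ≤ β * (m k : Ordinal) := Nat.find_min hS (by omega)
        exact Set.mem_iUnion.mpr ⟨k+1, ⟨hx, not_le.mp hmin, hspec⟩⟩
  refine ⟨P, hPo, hPd, hPu, ?_⟩
  intro i
  refine piece hβ hprin hβω hω (hPo i) (hPc i) (hmem i).1 (hmax i)
    (fun x hx => (hub i x hx).2) ?_
  intro γ hγ hmemP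
  have h1 : β * γ ≤ β * (m i : Ordinal) := (hub _ _ hmemP).2
  have hγle : γ ≤ (m i : Ordinal) := (mul_le_mul_iff_right₀ hβ).mp h1
  have hγω : γ < omega0 := lt_of_le_of_lt hγle (Ordinal.nat_lt_omega0 _)
  obtain ⟨k, rfl⟩ := Ordinal.lt_omega0.mp hγω
  have hk0 : 0 < k := by rwa [← Nat.cast_zero, Nat.cast_lt] at hγ
  obtain ⟨l, rfl⟩ := hsurj k ⟨hk0, (hub _ _ hmemP).1⟩
  rw [Nat.cast_inj]
  cases i with
  | zero =>
    have hl0 : l ≤ 0 := hmono.le_iff_le.mp (by rwa [Nat.cast_le] at hγle)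
    have : l = 0 := by omega
    rw [this]
  | succ j =>
    have h2 : β * (m j : Ordinal) < β * (m l : Ordinal) := hmemP.2.1
    have hjl : j < l := by
      rw [mul_lt_mul_iff_right₀ hβ, Nat.cast_lt] at h2
      exact hmono.lt_iff_lt.mp h2
    have hlj : l ≤ j + 1 := hmono.le_iff_le.mp (by rwa [Nat.cast_le] at hγle)
    have : l = j + 1 := by omega
    rw [this]

/-- Any two moiety halves are homeomorphic. -/
theorem moietyPair {β : Ordinal.{0}} (hβ : 0 < β)
    (hprin : ∀ x y, x < β → y < β → x + y < β)
    (hβω : ∀ x, x < β → x + β = β) (hω : omega0 ≤ β)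
    {A B : Set Ordinal.{0}}
    (hAo : IsOpen A) (hAc : ∀ b, b < β * omega0 → IsClosed (A ∩ Iic b))
    (hAsub : A ⊆ Iio (β * omega0))
    (hAtop : {k : ℕ | 0 < k ∧ β * (k : Ordinal) ∈ A}.Infinite)
    (hBo : IsOpen B) (hBc : ∀ b, b < β * omega0 → IsClosed (B ∩ Iic b))
    (hBsub : B ⊆ Iio (β * omega0))
    (hBtop : {k : ℕ | 0 < k ∧ β * (k : Ordinal) ∈ B}.Infinite) :
    Nonempty (↥A ≃ₜ ↥B) := by
  obtain ⟨P, hPo, hPd, hPu, hPh⟩ := decomp hβ hprin hβω hω hAo hAc hAsub hAtop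
  obtain ⟨Q, hQo, hQd, hQu, hQh⟩ := decomp hβ hprin hβω hω hBo hBc hBsub hBtop
  obtain ⟨F, _⟩ := glueSet hPo hQo hPd hQd hPu hQu
    (fun i => ((hPh i).some).trans ((hQh i).some.symm))
  exact ⟨F⟩


theorem imgmem1 {X : Type*} {s : Set X} (A : Set ↥s) (y : ↥(Subtype.val '' A)) : y.1 ∈ s := by
  obtain ⟨a, -, he⟩ := y.2
  exact he ▸ a.2

theorem imgmem2 {X : Type*} {s : Set X} (A : Set ↥s) (y : ↥(Subtype.val '' A)) :
    (⟨y.1, imgmem1 A y⟩ : ↥s) ∈ A := by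
  obtain ⟨a, haA, he⟩ := y.2
  have hae : a = (⟨y.1, imgmem1 A y⟩ : ↥s) := Subtype.ext he
  exact hae ▸ haA

/-- A subset of a subtype is homeomorphic to its image. -/
def imageHomeo {X : Type*} [TopologicalSpace X] {s : Set X} (A : Set ↥s) :
    ↥A ≃ₜ ↥(Subtype.val '' A) where
  toFun x := ⟨x.1.1, ⟨x.1, x.2, rfl⟩⟩
  invFun y := ⟨⟨y.1, imgmem1 A y⟩, imgmem2 A y⟩
  left_inv _x := Subtype.ext (Subtype.ext rfl)
  right_inv _y := Subtype.ext rfl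
  continuous_toFun := Continuous.subtype_mk
    (continuous_subtype_val.comp continuous_subtype_val) _
  continuous_invFun := Continuous.subtype_mk
    (Continuous.subtype_mk continuous_subtype_val _) _

/-- Two clopen sets with homeomorphic "sides" give a global homeomorphism. -/
theorem pair2 {X : Type*} [TopologicalSpace X] {A B : Set X}
    (hA : IsClopen A) (hB : IsClopen B)
    (φ : ↥A ≃ₜ ↥B) (ψ : ↥(Aᶜ) ≃ₜ ↥(Bᶜ)) : ∃ σ : X ≃ₜ X, σ '' A = B := by
  classical
  set f : X → X := fun x => if h : x ∈ A then (φ ⟨x, h⟩).1 else (ψ ⟨x, h⟩).1 with hf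
  set g : X → X := fun y => if h : y ∈ B then (φ.symm ⟨y, h⟩).1 else (ψ.symm ⟨y, h⟩).1 with hg
  have hgf : ∀ x, g (f x) = x := by
    intro x
    by_cases h : x ∈ A
    · rw [hf]
      simp only [dif_pos h]
      rw [hg]
      have hB' : ((φ ⟨x, h⟩ : ↥B) : X) ∈ B := (φ ⟨x, h⟩).2
      simp only [dif_pos hB']
      have he : (⟨(φ ⟨x, h⟩).1, hB'⟩ : ↥B) = φ ⟨x, h⟩ := Subtype.ext rfl
      rw [he, Homeomorph.symm_apply_apply]
    · rw [hf]
      simp only [dif_neg h]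
      rw [hg]
      have hB' : ((ψ ⟨x, h⟩ : ↥(Bᶜ)) : X) ∈ Bᶜ := (ψ ⟨x, h⟩).2
      have hB'' : ((ψ ⟨x, h⟩ : ↥(Bᶜ)) : X) ∉ B := hB'
      simp only [dif_neg hB'']
      have he : (⟨(ψ ⟨x, h⟩).1, hB'⟩ : ↥(Bᶜ)) = ψ ⟨x, h⟩ := Subtype.ext rfl
      rw [he, Homeomorph.symm_apply_apply]
  have hfg : ∀ y, f (g y) = y := by
    intro y
    by_cases h : y ∈ B
    · rw [hg]
      simp only [dif_pos h]
      rw [hf]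
      have hA' : ((φ.symm ⟨y, h⟩ : ↥A) : X) ∈ A := (φ.symm ⟨y, h⟩).2
      simp only [dif_pos hA']
      have he : (⟨(φ.symm ⟨y, h⟩).1, hA'⟩ : ↥A) = φ.symm ⟨y, h⟩ := Subtype.ext rfl
      rw [he, Homeomorph.apply_symm_apply]
    · rw [hg]
      simp only [dif_neg h]
      rw [hf]
      have hA' : ((ψ.symm ⟨y, h⟩ : ↥(Aᶜ)) : X) ∈ Aᶜ := (ψ.symm ⟨y, h⟩).2
      have hA'' : ((ψ.symm ⟨y, h⟩ : ↥(Aᶜ)) : X) ∉ A := hA'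
      simp only [dif_neg hA'']
      have he : (⟨(ψ.symm ⟨y, h⟩).1, hA'⟩ : ↥(Aᶜ)) = ψ.symm ⟨y, h⟩ := Subtype.ext rfl
      rw [he, Homeomorph.apply_symm_apply]
  have hfc : Continuous f := by
    rw [continuous_iff_continuousAt]
    intro x
    by_cases h : x ∈ A
    · have hcon : ContinuousOn f A := by
        rw [continuousOn_iff_continuous_restrict]
        have hre : A.domRestrict f = fun (a : ↥A) => (φ a).1 := by
          funext a
          rw [hf]
          show (if h : a.1 ∈ A then ((φ ⟨a.1, h⟩ : ↥B) : X) else (ψ ⟨a.1, h⟩).1) = (φ a).1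
          rw [dif_pos a.2]
        rw [hre]
        exact continuous_subtype_val.comp φ.continuous
      exact hcon.continuousAt (hA.isOpen.mem_nhds h)
    · have hcon : ContinuousOn f Aᶜ := by
        rw [continuousOn_iff_continuous_restrict]
        have hre : (Aᶜ).domRestrict f = fun (a : ↥(Aᶜ)) => (ψ a).1 := by
          funext a
          rw [hf]
          show (if h : a.1 ∈ A then ((φ ⟨a.1, h⟩ : ↥B) : X) else (ψ ⟨a.1, h⟩).1) = (ψ a).1
          rw [dif_neg a.2]
        rw [hre]
        exact continuous_subtype_val.comp ψ.continuous
      exact hcon.continuousAt (hA.compl.isOpen.mem_nhds h)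
  have hgc : Continuous g := by
    rw [continuous_iff_continuousAt]
    intro y
    by_cases h : y ∈ B
    · have hcon : ContinuousOn g B := by
        rw [continuousOn_iff_continuous_restrict]
        have hre : B.domRestrict g = fun (b : ↥B) => (φ.symm b).1 := by
          funext b
          rw [hg]
          show (if h : b.1 ∈ B then ((φ.symm ⟨b.1, h⟩ : ↥A) : X) else (ψ.symm ⟨b.1, h⟩).1) = (φ.symm b).1
          rw [dif_pos b.2]
        rw [hre]
        exact continuous_subtype_val.comp φ.symm.continuous
      exact hcon.continuousAt (hB.isOpen.mem_nhds h)
    · have hcon : ContinuousOn g Bᶜ := by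
        rw [continuousOn_iff_continuous_restrict]
        have hre : (Bᶜ).domRestrict g = fun (b : ↥(Bᶜ)) => (ψ.symm b).1 := by
          funext b
          rw [hg]
          show (if h : b.1 ∈ B then ((φ.symm ⟨b.1, h⟩ : ↥A) : X) else (ψ.symm ⟨b.1, h⟩).1) = (ψ.symm b).1
          rw [dif_neg b.2]
        rw [hre]
        exact continuous_subtype_val.comp ψ.symm.continuous
      exact hcon.continuousAt (hB.compl.isOpen.mem_nhds h)
  refine ⟨⟨⟨f, g, hgf, hfg⟩, hfc, hgc⟩, ?_⟩
  apply Set.eq_of_subset_of_subset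
  · rintro y ⟨x, hx, rfl⟩
    show f x ∈ B
    rw [hf]
    simp only [dif_pos hx]
    exact (φ ⟨x, hx⟩).2
  · intro y hy
    refine ⟨(φ.symm ⟨y, hy⟩).1, (φ.symm ⟨y, hy⟩).2, ?_⟩
    show f _ = y
    rw [hf]
    simp only [dif_pos (φ.symm ⟨y, hy⟩).2]
    have he : (⟨(φ.symm ⟨y, hy⟩).1, (φ.symm ⟨y, hy⟩).2⟩ : ↥A) = φ.symm ⟨y, hy⟩ :=
      Subtype.ext rfl
    rw [he, Homeomorph.apply_symm_apply]

/-- An involution swapping two disjoint clopen sets. -/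
theorem invol {X : Type*} [TopologicalSpace X] {A B : Set X}
    (hA : IsClopen A) (hB : IsClopen B) (hd : Disjoint A B)
    (φ : ↥A ≃ₜ ↥B) :
    ∃ σ : X ≃ₜ X, σ '' A = B ∧ (∀ x, σ (σ x) = x) ∧ closure {x | σ x ≠ x} ⊆ A ∪ B := by
  classical
  have hdAB : ∀ x, x ∈ A → x ∉ B := fun x hx => Set.disjoint_left.mp hd hx
  have hdBA : ∀ x, x ∈ B → x ∉ A := fun x hx => Set.disjoint_left.mp hd.symm hx
  set f : X → X := fun x =>
    if h : x ∈ A then (φ ⟨x, h⟩).1 else if h' : x ∈ B then (φ.symm ⟨x, h'⟩).1 else x with hf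
  have hinv : Function.Involutive f := by
    intro x
    by_cases h : x ∈ A
    · rw [hf]
      simp only [dif_pos h]
      have h1 : ((φ ⟨x, h⟩ : ↥B) : X) ∈ B := (φ ⟨x, h⟩).2
      have h2 : ((φ ⟨x, h⟩ : ↥B) : X) ∉ A := hdBA _ h1
      simp only [dif_neg h2, dif_pos h1]
      have he : (⟨(φ ⟨x, h⟩).1, h1⟩ : ↥B) = φ ⟨x, h⟩ := Subtype.ext rfl
      rw [he, Homeomorph.symm_apply_apply]
    · by_cases h' : x ∈ B
      · rw [hf]
        simp only [dif_neg h, dif_pos h']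
        have h1 : ((φ.symm ⟨x, h'⟩ : ↥A) : X) ∈ A := (φ.symm ⟨x, h'⟩).2
        simp only [dif_pos h1]
        have he : (⟨(φ.symm ⟨x, h'⟩).1, h1⟩ : ↥A) = φ.symm ⟨x, h'⟩ := Subtype.ext rfl
        rw [he, Homeomorph.apply_symm_apply]
      · rw [hf]
        simp only [dif_neg h, dif_neg h']
  have hfc : Continuous f := by
    rw [continuous_iff_continuousAt]
    intro x
    by_cases h : x ∈ A
    · have hcon : ContinuousOn f A := by
        rw [continuousOn_iff_continuous_restrict]
        have hre : A.domRestrict f = fun (a : ↥A) => (φ a).1 := by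
          funext a
          show f a.1 = (φ a).1
          rw [hf]
          simp only [dif_pos a.2]
        rw [hre]
        exact continuous_subtype_val.comp φ.continuous
      exact hcon.continuousAt (hA.isOpen.mem_nhds h)
    · by_cases h' : x ∈ B
      · have hcon : ContinuousOn f B := by
          rw [continuousOn_iff_continuous_restrict]
          have hre : B.domRestrict f = fun (b : ↥B) => (φ.symm b).1 := by
            funext b
            show f b.1 = (φ.symm b).1
            rw [hf]
            simp only [dif_neg (hdBA _ b.2), dif_pos b.2]
          rw [hre]
          exact continuous_subtype_val.comp φ.symm.continuous
        exact hcon.continuousAt (hB.isOpen.mem_nhds h')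
      · have hcon : ContinuousOn f (A ∪ B)ᶜ := by
          rw [continuousOn_iff_continuous_restrict]
          have hre : ((A ∪ B)ᶜ).domRestrict f = fun (c : ↥((A ∪ B)ᶜ)) => c.1 := by
            funext c
            show f c.1 = c.1
            have hcA : c.1 ∉ A := fun hc => c.2 (Or.inl hc)
            have hcB : c.1 ∉ B := fun hc => c.2 (Or.inr hc)
            rw [hf]
            simp only [dif_neg hcA, dif_neg hcB]
          rw [hre]
          exact continuous_subtype_val
        refine hcon.continuousAt (((hA.union hB).compl.isOpen).mem_nhds ?_)
        intro hc
        rcases hc with hc | hc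
        · exact h hc
        · exact h' hc
  set σ : X ≃ₜ X := ⟨hinv.toPerm f, hfc, hfc⟩ with hσ
  have hσval : ∀ x, σ x = f x := fun x => rfl
  refine ⟨σ, ?_, ?_, ?_⟩
  · apply Set.eq_of_subset_of_subset
    · rintro y ⟨x, hx, rfl⟩
      rw [hσval, hf]
      simp only [dif_pos hx]
      exact (φ ⟨x, hx⟩).2
    · intro y hy
      refine ⟨(φ.symm ⟨y, hy⟩).1, (φ.symm ⟨y, hy⟩).2, ?_⟩
      rw [hσval, hf]
      simp only [dif_pos (φ.symm ⟨y, hy⟩).2]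
      have he : (⟨(φ.symm ⟨y, hy⟩).1, (φ.symm ⟨y, hy⟩).2⟩ : ↥A) = φ.symm ⟨y, hy⟩ :=
        Subtype.ext rfl
      rw [he, Homeomorph.apply_symm_apply]
  · intro x
    rw [hσval, hσval]
    exact hinv x
  · apply closure_minimal
    · intro x hx
      by_contra hc
      have hcA : x ∉ A := fun h => hc (Or.inl h)
      have hcB : x ∉ B := fun h => hc (Or.inr h)
      apply hx
      rw [hσval, hf]
      simp only [dif_neg hcA, dif_neg hcB]
    · exact (hA.union hB).isClosed


theorem transferOpen {o : Ordinal.{0}} {A : Set (OrdT o)} (h : IsOpen A) :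
    IsOpen (Subtype.val '' A : Set Ordinal.{0}) := by
  obtain ⟨O, hO, hpre⟩ := isOpen_induced_iff.mp h
  have heq : (Subtype.val '' A : Set Ordinal.{0}) = O ∩ Iio o := by
    ext x
    constructor
    · rintro ⟨a, haA, rfl⟩
      rw [← hpre] at haA
      exact ⟨haA, a.2⟩
    · rintro ⟨hxO, hxo⟩
      refine ⟨⟨x, hxo⟩, ?_, rfl⟩
      rw [← hpre]
      exact hxO
  rw [heq]
  exact hO.inter isOpen_Iio

theorem transferClosed {o : Ordinal.{0}} {A : Set (OrdT o)} (h : IsClosed A) :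
    ∀ b, b < o → IsClosed ((Subtype.val '' A : Set Ordinal.{0}) ∩ Iic b) := by
  intro b hb
  obtain ⟨F, hF, hpre⟩ := isClosed_induced_iff.mp h
  have heq : (Subtype.val '' A : Set Ordinal.{0}) ∩ Iic b = F ∩ Iic b := by
    ext x
    constructor
    · rintro ⟨⟨a, haA, rfl⟩, hxb⟩
      rw [← hpre] at haA
      exact ⟨haA, hxb⟩
    · rintro ⟨hxF, hxb⟩
      have hxo : x < o := lt_of_le_of_lt hxb hb
      refine ⟨⟨⟨x, hxo⟩, ?_, rfl⟩, hxb⟩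
      rw [← hpre]
      exact hxF
  rw [heq]
  exact hF.inter isClosed_Iic

theorem transferSub {o : Ordinal.{0}} (A : Set (OrdT o)) :
    (Subtype.val '' A : Set Ordinal.{0}) ⊆ Iio o := by
  rintro x ⟨a, -, rfl⟩
  exact a.2

theorem transferTops {α : Ordinal.{0}} {S : Set (OrdT (omega0 ^ (α + 1)))}
    (h : (S ∩ maxRank α).Infinite) :
    {k : ℕ | 0 < k ∧ omega0 ^ α * (k : Ordinal) ∈ (Subtype.val '' S : Set Ordinal.{0})}.Infinite := by
  classical
  set T := {k : ℕ | 0 < k ∧ omega0 ^ α * (k : Ordinal) ∈ (Subtype.val '' S : Set Ordinal.{0})}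
  intro hfin
  apply h
  apply Set.Finite.subset (Set.Finite.biUnion hfin
    (fun k _ => Set.Subsingleton.finite
      (fun x hx y hy => Subtype.ext (hx.trans hy.symm) :
        Set.Subsingleton {x : OrdT (omega0 ^ (α + 1)) | x.1 = omega0 ^ α * (k : Ordinal)})))
  intro x hx
  obtain ⟨k, hk0, hkval⟩ := hx.2
  have hkT : k ∈ T := by
    refine ⟨Nat.pos_of_ne_zero hk0, ?_⟩
    exact ⟨x, hx.1, hkval⟩
  exact Set.mem_biUnion hkT hkval

theorem discreteOrdT : DiscreteTopology (OrdT (omega0 ^ ((0 : Ordinal.{0}) + 1))) := by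
  have hΛ : omega0 ^ ((0 : Ordinal.{0}) + 1) = omega0 := by
    rw [zero_add, Ordinal.opow_one]
  rw [discreteTopology_iff_isOpen_singleton]
  intro x
  have hx : x.1 < omega0 := x.2.trans_eq hΛ
  obtain ⟨n, hn⟩ := Ordinal.lt_omega0.mp hx
  cases n with
  | zero =>
    have heq : ({x} : Set (OrdT (omega0 ^ ((0 : Ordinal.{0}) + 1)))) =
        Subtype.val ⁻¹' (Iio (1 : Ordinal.{0})) := by
      ext y
      simp only [Set.mem_singleton_iff, Set.mem_preimage, Set.mem_Iio]
      constructor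
      · rintro rfl
        rw [hn, Nat.cast_zero]
        exact zero_lt_one
      · intro hy
        apply Subtype.ext
        rw [Ordinal.lt_one_iff_zero] at hy
        rw [hy, hn, Nat.cast_zero]
    rw [heq]
    exact isOpen_Iio.preimage continuous_subtype_val
  | succ k =>
    have hsucc : ((k : Ordinal.{0}) + 2) = ((k : Ordinal.{0}) + 1) + 1 := by
      rw [add_assoc, one_add_one_eq_two]
    have heq : ({x} : Set (OrdT (omega0 ^ ((0 : Ordinal.{0}) + 1)))) =
        Subtype.val ⁻¹' (Ioo (k : Ordinal.{0}) ((k : Ordinal.{0}) + 2)) := by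
      ext y
      simp only [Set.mem_singleton_iff, Set.mem_preimage, Set.mem_Ioo]
      constructor
      · rintro rfl
        rw [hn]
        push_cast
        constructor
        · exact lt_add_one (k : Ordinal.{0})
        · rw [hsucc, Ordinal.add_one_eq_succ ((k : Ordinal.{0}) + 1)]
          exact Order.lt_succ _
      · rintro ⟨h1, h2⟩
        apply Subtype.ext
        have h3 : (k : Ordinal.{0}) + 1 ≤ y.1 := by
          rw [Ordinal.add_one_eq_succ]
          exact Order.succ_le_of_lt h1
        have h4 : y.1 ≤ (k : Ordinal.{0}) + 1 := by
          rw [hsucc, Ordinal.add_one_eq_succ ((k : Ordinal.{0}) + 1)] at h2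
          exact Order.lt_succ_iff.mp h2
        rw [le_antisymm h4 h3, hn]
        norm_cast
    rw [heq]
    exact isOpen_Ioo.preimage continuous_subtype_val

theorem infEquivNat {A : Set (OrdT (omega0 ^ ((0 : Ordinal.{0}) + 1)))} (h : A.Infinite) :
    Nonempty (↥A ≃ ℕ) := by
  classical
  have hΛ : omega0 ^ ((0 : Ordinal.{0}) + 1) = omega0 := by
    rw [zero_add, Ordinal.opow_one]
  have hbij : Function.Bijective (fun n : ℕ =>
      (⟨(n : Ordinal.{0}), by rw [hΛ]; exact Ordinal.nat_lt_omega0 n⟩ :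
        OrdT (omega0 ^ ((0 : Ordinal.{0}) + 1)))) := by
    constructor
    · intro a b hab
      exact Nat.cast_injective (congrArg Subtype.val hab)
    · intro x
      obtain ⟨n, hn⟩ := Ordinal.lt_omega0.mp (x.2.trans_eq hΛ)
      exact ⟨n, Subtype.ext hn.symm⟩
  set e := Equiv.ofBijective _ hbij
  have h2 : (e.symm '' A).Infinite := h.image e.symm.injective.injOn
  haveI := h2.to_subtype
  letI := Nat.Subtype.denumerable (e.symm '' A)
  exact ⟨(e.symm.image A).trans (Denumerable.eqv _)⟩

/-- Any two clopen sets with infinitely many maximal-rank points are homeomorphic. -/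
theorem halfHomeo (α : Ordinal.{0}) {A B : Set (OrdT (omega0 ^ (α + 1)))}
    (hAcl : IsClopen A) (hBcl : IsClopen B)
    (hAi : (A ∩ maxRank α).Infinite) (hBi : (B ∩ maxRank α).Infinite) :
    Nonempty (↥A ≃ₜ ↥B) := by
  classical
  rcases eq_or_ne α 0 with rfl | hα
  · haveI := discreteOrdT
    obtain ⟨eA⟩ := infEquivNat (hAi.mono Set.inter_subset_left)
    obtain ⟨eB⟩ := infEquivNat (hBi.mono Set.inter_subset_left)
    exact ⟨⟨eA.trans eB.symm, continuous_of_discreteTopology, continuous_of_discreteTopology⟩⟩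
  · set β : Ordinal.{0} := omega0 ^ α with hβ_def
    have hβ : 0 < β := Ordinal.opow_pos α Ordinal.omega0_pos
    have hprin : ∀ x y, x < β → y < β → x + y < β :=
      fun x y hx hy => Ordinal.principal_add_omega0_opow α hx hy
    have hβω : ∀ x, x < β → x + β = β := fun x hx => Ordinal.add_omega0_opow hx
    have hω : omega0 ≤ β := by
      calc omega0 = omega0 ^ (1 : Ordinal.{0}) := (Ordinal.opow_one _).symm
      _ ≤ β := Ordinal.opow_le_opow_right Ordinal.omega0_pos (Ordinal.one_le_iff_ne_zero.mpr hα)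
    have hΛ : omega0 ^ (α + 1) = β * omega0 := by
      rw [Ordinal.add_one_eq_succ, Ordinal.opow_succ]
    have hmp := moietyPair hβ hprin hβω hω
      (A := (Subtype.val '' A : Set Ordinal.{0})) (B := (Subtype.val '' B : Set Ordinal.{0}))
      (transferOpen hAcl.isOpen) (by rw [← hΛ]; exact transferClosed hAcl.isClosed)
      (by rw [← hΛ]; exact transferSub A) (transferTops hAi)
      (transferOpen hBcl.isOpen) (by rw [← hΛ]; exact transferClosed hBcl.isClosed)
      (by rw [← hΛ]; exact transferSub B) (transferTops hBi)
    obtain ⟨F⟩ := hmp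
    exact ⟨(imageHomeo A).trans (F.trans (imageHomeo B).symm)⟩

end S9


/-- Change of coordinates: any two topological moieties are related by a
homeomorphism; disjoint moieties by an involution supported in their union. -/
theorem statement9 (α : Ordinal.{0}) (A B : Set (OrdT (Ordinal.omega0 ^ (α + 1))))
    (hA : IsMoiety α A) (hB : IsMoiety α B) :
    (∃ σ : OrdT (Ordinal.omega0 ^ (α + 1)) ≃ₜ OrdT (Ordinal.omega0 ^ (α + 1)), ⇑σ '' A = B) ∧
    (Disjoint A B → ∃ σ : OrdT (Ordinal.omega0 ^ (α + 1)) ≃ₜ OrdT (Ordinal.omega0 ^ (α + 1)),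
      ⇑σ '' A = B ∧ (∀ x, σ (σ x) = x) ∧ closure {x | σ x ≠ x} ⊆ A ∪ B) := by
  obtain ⟨φ⟩ := S9.halfHomeo α hA.1 hB.1 hA.2.1 hB.2.1
  obtain ⟨ψ⟩ := S9.halfHomeo α hA.1.compl hB.1.compl hA.2.2 hB.2.2
  constructor
  · exact S9.pair2 hA.1 hB.1 φ ψ
  · intro hdisj
    exact S9.invol hA.1 hB.1 hdisj φ
end
end

section
/- Let α be an ordinal and A a topological moiety of ω^{α+1}. Then there exists a homeomorphism φ of ω^{α+1} such that φ^n(A) ∩ φ^m(A) = ∅ for all distinct integers n, m, and the family {φ^n(A)}_{n∈ℤ} is locally finite; moreover φ can be chosen supported in a topological moiety. -/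
noncomputable section

open Ordinal Topology Set

namespace S10
open Filter


lemma continuous_add_left (c : Ordinal.{0}) : Continuous fun x : Ordinal.{0} => c + x :=
  (Ordinal.isNormal_add_right c).continuous

lemma sub_lt_iff_lt_add {c a x : Ordinal.{0}} (ha : a ≠ 0) : x - c < a ↔ x < c + a := by
  constructor
  · intro h
    rcases lt_or_ge x c with h' | h'
    · exact h'.trans_le (le_add_right le_rfl)
    · calc x = c + (x - c) := (Ordinal.add_sub_cancel_of_le h').symm
        _ < c + a := by rwa [add_lt_add_iff_left]
  · intro h
    rcases lt_or_ge x c with h' | h'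
    · rw [Ordinal.sub_eq_zero_iff_le.2 h'.le]
      exact pos_iff_ne_zero.2 ha
    · rw [← add_lt_add_iff_left c, Ordinal.add_sub_cancel_of_le h']
      exact h

lemma continuous_sub_right (c : Ordinal.{0}) : Continuous fun x : Ordinal.{0} => x - c := by
  have h : (inferInstance : TopologicalSpace Ordinal.{0})
      = .generateFrom {s | ∃ a, s = Set.Ioi a ∨ s = Set.Iio a} :=
    OrderTopology.topology_eq_generate_intervals
  have h2 : @Continuous Ordinal.{0} Ordinal.{0} _
      (.generateFrom {s | ∃ a, s = Set.Ioi a ∨ s = Set.Iio a})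
      fun x : Ordinal.{0} => x - c := by
    refine continuous_generateFrom_iff.mpr ?_
    rintro s ⟨a, rfl | rfl⟩
    · convert isOpen_Ioi (a := c + a)
      ext x; simp [Ordinal.lt_sub]
    · rcases eq_or_ne a 0 with rfl | ha
      · convert isOpen_empty
        ext x; simp [not_lt_zero]
      · convert isOpen_Iio (a := c + a)
        ext x; simp [sub_lt_iff_lt_add ha]
  rwa [← h] at h2

lemma continuous_of_locally {X Y : Type*} [TopologicalSpace X] [TopologicalSpace Y] (f : X → Y)
    (h : ∀ x, ∃ U : Set X, IsOpen U ∧ x ∈ U ∧ ∃ g : X → Y, Continuous g ∧ Set.EqOn f g U) :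
    Continuous f := by
  rw [continuous_iff_continuousAt]
  intro x
  obtain ⟨U, hU, hx, g, hg, he⟩ := h x
  exact (hg.continuousOn.congr he).continuousAt (hU.mem_nhds hx)

/-- Abstract data for the translation construction. -/
structure Setup (ν : Ordinal.{0}) (A : Set (OrdT ν)) where
  w : Ordinal.{0}
  hw : 0 < w
  hP : ∀ ⦃a b : Ordinal.{0}⦄, a < ν → b < ν → a + b < ν
  Bs : ℤ × ℕ → Ordinal.{0}
  ix : ℤ × ℕ → ℕ
  hBs0 : ∀ k : ℕ, Bs (0, k) = w * k
  hBslt : ∀ p, Bs p < ν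
  hix0 : ∀ k : ℕ, ix (0, k) = k
  hixle : ∀ p, w * ix p ≤ Bs p
  hixadd : ∀ p, Bs p + w = w * (ix p + 1 : ℕ)
  hixinj : ∀ p q, p.1 ≠ 0 → q.1 ≠ 0 → ix p = ix q → p = q
  hcompl : ∀ p, p.1 ≠ 0 → ∀ x : OrdT ν, Bs p < x.1 → x.1 ≤ Bs p + w → x ∈ Aᶜ
  hA : IsClopen A
  hfin : ∀ b : Ordinal.{0}, b < ν → {p : ℤ × ℕ | Bs p < b}.Finite
  hcov : ∀ x ∈ A, ∃ k : ℕ, w * k < x.1 ∧ x.1 ≤ w * k + w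

namespace Setup

variable {ν : Ordinal.{0}} {A : Set (OrdT ν)} (S : Setup ν A)

/-- translation map sending `(c, c+w]` to `(c', c'+w]`. -/
def tr (c c' : Ordinal.{0}) (hc' : c' < ν) (x : OrdT ν) : OrdT ν :=
  ⟨c' + (x.1 - c), S.hP hc' ((Ordinal.sub_le_self _ _).trans_lt x.2)⟩

lemma tr_continuous (c c' : Ordinal.{0}) (hc' : c' < ν) : Continuous (S.tr c c' hc') := by
  apply Continuous.subtype_mk
  exact (continuous_add_left c').comp ((continuous_sub_right c).comp continuous_subtype_val)

lemma tr_comp {c c' c'' : Ordinal.{0}} (h' : c' < ν) (h'' : c'' < ν) (x : OrdT ν) :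
    S.tr c' c'' h'' (S.tr c c' h' x) = S.tr c c'' h'' x := by
  simp only [tr, Subtype.mk.injEq, Ordinal.add_sub_cancel]

lemma tr_self {c : Ordinal.{0}} (hc : c < ν) {x : OrdT ν} (hx : c ≤ x.1) :
    S.tr c c hc x = x := by
  exact Subtype.ext (Ordinal.add_sub_cancel_of_le hx)

lemma tr_mem {c c' : Ordinal.{0}} (hc' : c' < ν) {x : OrdT ν}
    (h1 : c < x.1) (h2 : x.1 ≤ c + S.w) :
    c' < (S.tr c c' hc' x).1 ∧ (S.tr c c' hc' x).1 ≤ c' + S.w := by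
  have hs0 : 0 < x.1 - c := by
    rcases eq_zero_or_pos (x.1 - c) with h | h
    · exfalso
      have := Ordinal.add_sub_cancel_of_le h1.le
      rw [h, add_zero] at this
      exact absurd this h1.ne
    · exact h
  constructor
  · show c' < c' + (x.1 - c)
    simpa using (add_lt_add_iff_left c').2 hs0
  · have : x.1 - c ≤ S.w := Ordinal.sub_le.2 h2
    exact add_le_add_right this _

/-- the interval `(Bs p, Bs p + w]` as a subset of the space. -/
def Ic (p : ℤ × ℕ) : Set (OrdT ν) := {x | S.Bs p < x.1 ∧ x.1 ≤ S.Bs p + S.w}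

lemma isClopen_le (c : Ordinal.{0}) : IsClopen {x : OrdT ν | x.1 ≤ c} := by
  constructor
  · exact IsClosed.preimage continuous_subtype_val isClosed_Iic
  · have : {x : OrdT ν | x.1 ≤ c} = (Subtype.val) ⁻¹' (Set.Iio (c + 1)) := by
      ext x
      simp [Order.lt_add_one_iff]
    rw [this]
    exact IsOpen.preimage continuous_subtype_val isOpen_Iio

lemma isClopen_Ic (p : ℤ × ℕ) : IsClopen (S.Ic p) := by
  have : S.Ic p = {x : OrdT ν | x.1 ≤ S.Bs p + S.w} ∩ {x : OrdT ν | x.1 ≤ S.Bs p}ᶜ := by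
    ext x
    simp only [Ic, Set.mem_inter_iff, Set.mem_setOf_eq, Set.mem_compl_iff, not_le]
    tauto
  rw [this]
  exact (isClopen_le _).inter (isClopen_le _).compl

/-- the pieces to be translated around. -/
def piece (p : ℤ × ℕ) : Set (OrdT ν) :=
  S.Ic p ∩ (S.tr (S.Bs p) (S.Bs (0, p.2)) (S.hBslt _)) ⁻¹' A

lemma isClopen_piece (p : ℤ × ℕ) : IsClopen (S.piece p) :=
  (S.isClopen_Ic p).inter (S.hA.preimage (S.tr_continuous _ _ _))

lemma piece_zero (k : ℕ) : S.piece (0, k) = A ∩ S.Ic (0, k) := by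
  ext x
  simp only [piece, Set.mem_inter_iff, Set.mem_preimage]
  constructor
  · rintro ⟨h1, h2⟩
    rw [S.tr_self _ h1.1.le] at h2
    exact ⟨h2, h1⟩
  · rintro ⟨h1, h2⟩
    refine ⟨h2, ?_⟩
    rwa [S.tr_self _ h2.1.le]

lemma piece_subset_Ic (p : ℤ × ℕ) : S.piece p ⊆ S.Ic p := Set.inter_subset_left

lemma mem_block {p : ℤ × ℕ} {x : OrdT ν} (hx : x ∈ S.Ic p) :
    S.w * S.ix p < x.1 ∧ x.1 ≤ S.w * (S.ix p + 1 : ℕ) := by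
  exact ⟨lt_of_le_of_lt (S.hixle p) hx.1, by rw [← S.hixadd p]; exact hx.2⟩

lemma block_eq {p q : ℤ × ℕ} {x : OrdT ν} (hx : x ∈ S.Ic p) (hx' : x ∈ S.Ic q) :
    S.ix p = S.ix q := by
  by_contra h
  rcases Nat.lt_or_ge (S.ix p) (S.ix q) with h' | h'
  · have h1 := (S.mem_block hx).2
    have h2 := (S.mem_block hx').1
    have hle : S.w * (S.ix p + 1 : ℕ) ≤ S.w * (S.ix q : ℕ) :=
      mul_le_mul_right (by exact_mod_cast Nat.succ_le_of_lt h') _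
    exact absurd (h1.trans hle) (not_le.2 h2)
  · have h'' : S.ix q < S.ix p := lt_of_le_of_ne h' fun e => h e.symm
    have h1 := (S.mem_block hx').2
    have h2 := (S.mem_block hx).1
    have hle : S.w * (S.ix q + 1 : ℕ) ≤ S.w * (S.ix p : ℕ) :=
      mul_le_mul_right (by exact_mod_cast Nat.succ_le_of_lt h'') _
    exact absurd (h1.trans hle) (not_le.2 h2)

lemma piece_disjoint {p q : ℤ × ℕ} (h : p ≠ q) (x : OrdT ν)
    (hx : x ∈ S.piece p) (hx' : x ∈ S.piece q) : False := by
  rcases eq_or_ne p.1 0 with hp | hp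
  · rcases eq_or_ne q.1 0 with hq | hq
    · -- both zero: same block forces p = q
      have heq := S.block_eq (S.piece_subset_Ic p hx) (S.piece_subset_Ic q hx')
      have hp' : p = (0, p.2) := Prod.ext hp rfl
      have hq' : q = (0, q.2) := Prod.ext hq rfl
      rw [hp', hq', S.hix0, S.hix0] at heq
      exact h (by rw [hp', hq', heq])
    · -- x ∈ A and x ∈ Aᶜ
      have hxA : x ∈ A := by
        have hp' : p = (0, p.2) := Prod.ext hp rfl
        rw [hp', S.piece_zero] at hx
        exact hx.1
      exact (S.hcompl q hq x (S.piece_subset_Ic q hx').1 (S.piece_subset_Ic q hx').2) hxA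
  · rcases eq_or_ne q.1 0 with hq | hq
    · have hxA : x ∈ A := by
        have hq' : q = (0, q.2) := Prod.ext hq rfl
        rw [hq', S.piece_zero] at hx'
        exact hx'.1
      exact (S.hcompl p hp x (S.piece_subset_Ic p hx).1 (S.piece_subset_Ic p hx).2) hxA
    · exact h (S.hixinj p q hp hq (S.block_eq (S.piece_subset_Ic p hx) (S.piece_subset_Ic q hx')))



lemma piece_map {p q : ℤ × ℕ} (h2 : p.2 = q.2) {x : OrdT ν} (hx : x ∈ S.piece p) :
    S.tr (S.Bs p) (S.Bs q) (S.hBslt q) x ∈ S.piece q := by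
  obtain ⟨q1, q2⟩ := q
  have h2' : p.2 = q2 := h2
  subst h2'
  obtain ⟨hIc, hback⟩ := hx
  refine ⟨⟨(S.tr_mem _ hIc.1 hIc.2).1, (S.tr_mem _ hIc.1 hIc.2).2⟩, ?_⟩
  show S.tr (S.Bs (q1, p.2)) (S.Bs (0, p.2)) _ (S.tr (S.Bs p) (S.Bs (q1, p.2)) _ x) ∈ A
  rw [S.tr_comp]
  exact hback

lemma lf_pieces : LocallyFinite (fun p : ℤ × ℕ => S.piece p) := by
  intro x
  refine ⟨{y : OrdT ν | y.1 ≤ x.1}, (isClopen_le x.1).2.mem_nhds (le_refl x.1), ?_⟩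
  apply (S.hfin x.1 x.2).subset
  rintro p ⟨y, hy1, hy2⟩
  exact lt_of_lt_of_le hy1.1.1 hy2

lemma isClosed_iUnion_piece : IsClosed (⋃ p, S.piece p) :=
  S.lf_pieces.isClosed_iUnion fun p => (S.isClopen_piece p).1

open Classical in
def mv (d : ℤ × ℕ → ℤ × ℕ) : OrdT ν → OrdT ν := fun x =>
  if h : ∃ p, x ∈ S.piece p then S.tr (S.Bs h.choose) (S.Bs (d h.choose)) (S.hBslt _) x else x

lemma mv_on_piece (d : ℤ × ℕ → ℤ × ℕ) {p : ℤ × ℕ} {x : OrdT ν} (hx : x ∈ S.piece p) :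
    S.mv d x = S.tr (S.Bs p) (S.Bs (d p)) (S.hBslt _) x := by
  have h : ∃ p, x ∈ S.piece p := ⟨p, hx⟩
  have hc := h.choose_spec
  have heq : h.choose = p := by
    by_contra hne
    exact S.piece_disjoint hne x hc hx
  simp only [mv, dif_pos h, heq]

lemma mv_off (d : ℤ × ℕ → ℤ × ℕ) {x : OrdT ν} (h : ∀ p, x ∉ S.piece p) : S.mv d x = x := by
  have h' : ¬ ∃ p, x ∈ S.piece p := by push_neg; exact h
  simp only [mv, dif_neg h']

lemma mv_mv (d d' : ℤ × ℕ → ℤ × ℕ) (hd : ∀ p, (d p).2 = p.2) (hdd' : ∀ p, d' (d p) = p)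
    (x : OrdT ν) : S.mv d' (S.mv d x) = x := by
  by_cases h : ∃ p, x ∈ S.piece p
  · obtain ⟨p, hp⟩ := h
    rw [S.mv_on_piece d hp]
    have hy : S.tr (S.Bs p) (S.Bs (d p)) (S.hBslt _) x ∈ S.piece (d p) :=
      S.piece_map (hd p).symm hp
    rw [S.mv_on_piece d' hy, S.tr_comp, hdd' p]
    exact S.tr_self _ hp.1.1.le
  · push_neg at h
    rw [S.mv_off _ h, S.mv_off _ h]

lemma mv_continuous (d : ℤ × ℕ → ℤ × ℕ) : Continuous (S.mv d) := by
  apply continuous_of_locally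
  intro x
  by_cases h : ∃ p, x ∈ S.piece p
  · obtain ⟨p, hp⟩ := h
    exact ⟨S.piece p, (S.isClopen_piece p).2, hp, _, S.tr_continuous _ _ (S.hBslt _),
      fun y hy => S.mv_on_piece d hy⟩
  · push_neg at h
    refine ⟨(⋃ p, S.piece p)ᶜ, S.isClosed_iUnion_piece.isOpen_compl, ?_, id, continuous_id,
      fun y hy => S.mv_off d ?_⟩
    · simp only [Set.mem_compl_iff, Set.mem_iUnion, not_exists]
      exact h
    · intro p hp
      exact hy (Set.mem_iUnion.2 ⟨p, hp⟩)

lemma mv_image (d : ℤ × ℕ → ℤ × ℕ) (hd : ∀ p, (d p).2 = p.2) (p : ℤ × ℕ) :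
    S.mv d '' S.piece p = S.piece (d p) := by
  apply subset_antisymm
  · rintro _ ⟨x, hx, rfl⟩
    rw [S.mv_on_piece d hx]
    exact S.piece_map (hd p).symm hx
  · intro y hy
    have hx : S.tr (S.Bs (d p)) (S.Bs p) (S.hBslt p) y ∈ S.piece p := S.piece_map (hd p) hy
    refine ⟨_, hx, ?_⟩
    rw [S.mv_on_piece d hx, S.tr_comp]
    exact S.tr_self _ hy.1.1.le

def nxt : ℤ × ℕ → ℤ × ℕ := fun p => (p.1 + 1, p.2)
def prv : ℤ × ℕ → ℤ × ℕ := fun p => (p.1 - 1, p.2)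

def φE : OrdT ν ≃ₜ OrdT ν where
  toFun := S.mv nxt
  invFun := S.mv prv
  left_inv := S.mv_mv nxt prv (fun _ => rfl) (fun p => by simp [nxt, prv])
  right_inv := S.mv_mv prv nxt (fun _ => rfl) (fun p => by simp [nxt, prv])
  continuous_toFun := S.mv_continuous nxt
  continuous_invFun := S.mv_continuous prv

def Eset (n : ℤ) : Set (OrdT ν) := ⋃ k : ℕ, S.piece (n, k)

lemma φ_image (n : ℤ) : ⇑S.φE '' S.Eset n = S.Eset (n + 1) := by
  show S.mv nxt '' _ = _
  rw [Eset, Set.image_iUnion]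
  exact Set.iUnion_congr fun k => S.mv_image nxt (fun _ => rfl) (n, k)

lemma EA : S.Eset 0 = A := by
  apply subset_antisymm
  · intro x hx
    obtain ⟨k, hk⟩ := Set.mem_iUnion.1 hx
    rw [S.piece_zero k] at hk
    exact hk.1
  · intro x hx
    obtain ⟨k, hk1, hk2⟩ := S.hcov x hx
    apply Set.mem_iUnion.2 ⟨k, ?_⟩
    rw [S.piece_zero k]
    refine ⟨hx, ?_, ?_⟩
    · rw [S.hBs0]; exact hk1
    · rw [S.hBs0]; exact hk2

lemma top_block {p : ℤ × ℕ} {x : OrdT ν} (hx : x ∈ S.Ic p) {k : ℕ}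
    (hk : x.1 = S.w * (k + 1 : ℕ)) : k = S.ix p := by
  have h1 := (S.mem_block hx).1
  have h2 := (S.mem_block hx).2
  rw [hk] at h1 h2
  have hlt : (S.ix p : Ordinal) < (k + 1 : ℕ) := (mul_lt_mul_iff_right₀ S.hw).1 h1
  have hle : ¬ ((S.ix p + 1 : ℕ) : Ordinal) < (k + 1 : ℕ) := by
    intro hcon
    exact absurd h2 (not_le.2 ((mul_lt_mul_iff_right₀ S.hw).2 hcon))
  have hlt' : S.ix p < k + 1 := by exact_mod_cast hlt
  have hle' : ¬ (S.ix p + 1 < k + 1) := by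
    intro hcon
    exact hle (by exact_mod_cast hcon)
  omega



lemma support_subset {x : OrdT ν} (hx : S.φE x ≠ x) : x ∈ ⋃ p, S.piece p := by
  by_contra h
  rw [Set.mem_iUnion] at h
  push_neg at h
  exact hx (S.mv_off nxt h)

lemma clopen_union : IsClopen (⋃ p, S.piece p) :=
  ⟨S.isClosed_iUnion_piece, isOpen_iUnion fun p => (S.isClopen_piece p).2⟩

lemma A_subset : A ⊆ ⋃ p, S.piece p := by
  intro x hx
  rw [← S.EA] at hx
  obtain ⟨k, hk⟩ := Set.mem_iUnion.1 hx
  exact Set.mem_iUnion.2 ⟨(0, k), hk⟩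

end Setup

lemma coe_mul {X : Type*} [TopologicalSpace X] (f g : X ≃ₜ X) : ⇑(f * g) = ⇑f ∘ ⇑g := rfl
lemma coe_one {X : Type*} [TopologicalSpace X] : ⇑(1 : X ≃ₜ X) = id := rfl
lemma coe_inv {X : Type*} [TopologicalSpace X] (f : X ≃ₜ X) : ⇑(f⁻¹) = ⇑f.symm := rfl

lemma zpow_image {X : Type*} [TopologicalSpace X] (φ : X ≃ₜ X) (E : ℤ → Set X)
    (h : ∀ n : ℤ, ⇑φ '' E n = E (n + 1)) : ∀ n : ℤ, ⇑(φ ^ n) '' E 0 = E n := by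
  have hinv : ∀ n : ℤ, ⇑φ.symm '' E n = E (n - 1) := by
    intro n
    have h2 := h (n - 1)
    rw [sub_add_cancel] at h2
    rw [← h2, ← Set.image_comp]
    have : ⇑φ.symm ∘ ⇑φ = id := by
      funext y
      exact φ.symm_apply_apply y
    rw [this, Set.image_id]
  intro n
  induction n using Int.induction_on with
  | zero => rw [zpow_zero, coe_one, Set.image_id]
  | succ n ih =>
      rw [show ((n : ℤ) + 1) = 1 + n by ring, zpow_add, zpow_one, coe_mul, Set.image_comp, ih,
        h n]
      exact congrArg E (by ring)
  | pred n ih =>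
      rw [show (-(n : ℤ) - 1) = (-1) + (-n) by ring, zpow_add, coe_mul, Set.image_comp, ih,
        show φ ^ (-1 : ℤ) = φ⁻¹ from zpow_neg_one φ, coe_inv, hinv]
      exact congrArg E (by ring)

namespace Setup

variable {ν : Ordinal.{0}} {A : Set (OrdT ν)} (S : Setup ν A)

lemma pow_image (n : ℤ) : ⇑(S.φE ^ n) '' A = S.Eset n := by
  have h := zpow_image S.φE S.Eset S.φ_image n
  rwa [S.EA] at h

lemma disj (n m : ℤ) (h : n ≠ m) : Disjoint (⇑(S.φE ^ n) '' A) (⇑(S.φE ^ m) '' A) := by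
  rw [S.pow_image, S.pow_image, Set.disjoint_left]
  intro x hx hx'
  obtain ⟨k, hk⟩ := Set.mem_iUnion.1 hx
  obtain ⟨k', hk'⟩ := Set.mem_iUnion.1 hx'
  exact S.piece_disjoint (p := (n, k)) (q := (m, k'))
    (fun e => h (congrArg Prod.fst e)) x hk hk'

lemma lfE : LocallyFinite (fun n : ℤ => ⇑(S.φE ^ n) '' A) := by
  intro x
  refine ⟨{y : OrdT ν | y.1 ≤ x.1}, (isClopen_le x.1).2.mem_nhds (le_refl x.1), ?_⟩
  apply Set.Finite.subset ((S.hfin x.1 x.2).image Prod.fst)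
  rintro n ⟨y, hy1, hy2⟩
  simp only [S.pow_image] at hy1
  obtain ⟨k, hk⟩ := Set.mem_iUnion.1 hy1
  exact ⟨(n, k), lt_of_lt_of_le hk.1.1 hy2, rfl⟩

end Setup


lemma block_add {α c : Ordinal.{0}} {κ : ℕ}
    (h1 : ω ^ α * κ ≤ c) (h2 : c < ω ^ α * (κ + 1 : ℕ)) :
    c + ω ^ α = ω ^ α * (κ + 1 : ℕ) := by
  set w := ω ^ α with hw
  have hr : w * κ + (c - w * κ) = c := Ordinal.add_sub_cancel_of_le h1
  have hrlt : c - w * κ < w := by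
    by_contra h
    push_neg at h
    have : w * κ + w ≤ c := by
      calc w * κ + w ≤ w * κ + (c - w * κ) := add_le_add_right h _
        _ = c := hr
    rw [Nat.cast_add, Nat.cast_one, mul_add_one] at h2
    exact absurd h2 (not_lt.2 this)
  calc c + w = w * κ + ((c - w * κ) + w) := by rw [← add_assoc, hr]
    _ = w * κ + w := by rw [Ordinal.add_omega0_opow hrlt]
    _ = w * (κ + 1 : ℕ) := by rw [Nat.cast_add, Nat.cast_one, mul_add_one]

lemma nat_mul_lt {α : Ordinal.{0}} (k : ℕ) : ω ^ α * k < ω ^ α * ω :=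
  (mul_lt_mul_iff_right₀ (Ordinal.opow_pos _ omega0_pos)).2 (nat_lt_omega0 k)

lemma decomp {α x : Ordinal.{0}} (hx : x ≠ 0) (hx2 : x < ω ^ α * ω) :
    ∃ k : ℕ, ω ^ α * k < x ∧ x ≤ ω ^ α * k + ω ^ α := by
  set w := ω ^ α with hw
  have hw0 : w ≠ 0 := (Ordinal.opow_pos _ omega0_pos).ne'
  have hq : x / w < ω := (Ordinal.div_lt hw0).2 hx2
  obtain ⟨q, hq⟩ := Ordinal.lt_omega0.1 hq
  have hdm : w * (x / w) + x % w = x := Ordinal.div_add_mod x w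
  rcases eq_or_ne (x % w) 0 with hm | hm
  · have hxq : x = w * q := by rw [← hdm, hm, add_zero, hq]
    have hq0 : q ≠ 0 := by
      rintro rfl
      simp [hxq] at hx
    obtain ⟨q', rfl⟩ := Nat.exists_eq_succ_of_ne_zero hq0
    refine ⟨q', ?_, ?_⟩
    · rw [hxq]
      exact (mul_lt_mul_iff_right₀ (Ordinal.opow_pos _ omega0_pos)).2
        (by exact_mod_cast Nat.lt_succ_self q')
    · rw [hxq, ← mul_add_one]
      exact le_of_eq (by norm_cast)
  · refine ⟨q, ?_, ?_⟩
    · rw [← hdm, hq]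
      exact lt_add_of_pos_right _ (pos_iff_ne_zero.2 hm)
    · rw [← hdm, hq]
      exact add_le_add_right (le_of_lt (Ordinal.mod_lt x hw0)) _

lemma boundFin {α b : Ordinal.{0}} (hb : b < ω ^ α * ω) :
    {k : ℕ | ω ^ α * k ≤ b}.Finite := by
  have hw0 : (ω ^ α : Ordinal) ≠ 0 := (Ordinal.opow_pos _ omega0_pos).ne'
  have hq : b / ω ^ α < ω := (Ordinal.div_lt hw0).2 hb
  obtain ⟨K, hK⟩ := Ordinal.lt_omega0.1 hq
  apply Set.Finite.subset (Set.finite_Iic K)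
  intro k hk
  simp only [Set.mem_setOf_eq] at hk
  have h2 : (k : Ordinal) ≤ b / ω ^ α := (Ordinal.le_div hw0).2 hk
  rw [hK] at h2
  exact_mod_cast h2


lemma key (α : Ordinal.{0}) (A : Set (OrdT (ω ^ (α + 1)))) (hA : IsMoiety α A)
    (h0 : ∀ x ∈ A, x.1 ≠ 0) :
    ∃ φ : OrdT (ω ^ (α + 1)) ≃ₜ OrdT (ω ^ (α + 1)),
      (∀ n m : ℤ, n ≠ m → Disjoint (⇑(φ ^ n) '' A) (⇑(φ ^ m) '' A)) ∧
      LocallyFinite (fun n : ℤ => ⇑(φ ^ n) '' A) ∧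
      (∃ B, IsMoiety α B ∧ closure {x | φ x ≠ x} ⊆ B) := by
  set w : Ordinal.{0} := ω ^ α with hwdef
  have hνw : ω ^ (α + 1) = w * ω := opow_succ ω α
  have hw : 0 < w := Ordinal.opow_pos _ omega0_pos
  have hcinf : (Aᶜ ∩ maxRank α).Infinite := hA.2.2
  let e : ℕ ↪ ↥(Aᶜ ∩ maxRank α) := hcinf.natEmbedding
  have hjdata : ∀ j : ℕ, ∃ κ : ℕ, ∃ c : Ordinal.{0},
      ((e j : OrdT (ω ^ (α + 1)))).1 = w * (κ + 1 : ℕ) ∧ w * κ ≤ c ∧ c < w * (κ + 1 : ℕ) ∧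
      (∀ x : OrdT (ω ^ (α + 1)), c < x.1 → x.1 ≤ w * (κ + 1 : ℕ) → x ∈ Aᶜ) := by
    intro j
    obtain ⟨k, hk0, hkval⟩ := (e j).2.2
    obtain ⟨κ, rfl⟩ := Nat.exists_eq_succ_of_ne_zero hk0
    have hopen : IsOpen (Aᶜ) := hA.1.compl.2
    obtain ⟨U, hU, hUeq⟩ := isOpen_induced_iff.1 hopen
    have hmemU : ((e j : OrdT (ω ^ (α + 1)))).1 ∈ U := by
      have h' : (e j : OrdT (ω ^ (α + 1))) ∈ Subtype.val ⁻¹' U := by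
        rw [hUeq]
        exact (e j).2.1
      exact h'
    have hpos : 0 < ((e j : OrdT (ω ^ (α + 1)))).1 := by
      rw [hkval]
      exact lt_of_lt_of_le hw (Ordinal.le_mul_left _ (by exact_mod_cast Nat.succ_pos κ))
    obtain ⟨l, hl, hIoc⟩ := exists_Ioc_subset_of_mem_nhds (hU.mem_nhds hmemU) ⟨0, hpos⟩
    refine ⟨κ, max l (w * κ), hkval, le_max_right _ _, ?_, ?_⟩
    · apply max_lt
      · rw [← hkval]; exact hl
      · exact (mul_lt_mul_iff_right₀ hw).2 (by exact_mod_cast Nat.lt_succ_self κ)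
    · intro x hx1 hx2
      have hxU : x.1 ∈ U := by
        apply hIoc
        constructor
        · exact lt_of_le_of_lt (le_max_left _ _) hx1
        · rw [hkval]; exact hx2
      have h' : x ∈ Subtype.val ⁻¹' U := hxU
      rw [hUeq] at h'
      exact h'
  choose κf cf hval hcle hclt htail using hjdata
  have hκinj : Function.Injective κf := by
    intro i j hij
    apply e.injective
    apply Subtype.ext
    apply Subtype.ext
    rw [hval i, hval j, hij]
  let J : ℤ × ℕ → ℕ := fun p => 2 * Encodable.encode p
  have hJinj : Function.Injective J := by
    intro p q h
    simp only [J] at h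
    exact Encodable.encode_injective (by omega)
  set S : Setup (ω ^ (α + 1)) A := {
    w := w
    hw := hw
    hP := fun a b ha hb => principal_add_omega0_opow (α + 1) ha hb
    Bs := fun p => if p.1 = 0 then w * p.2 else cf (J p)
    ix := fun p => if p.1 = 0 then p.2 else κf (J p)
    hBs0 := fun k => by simp
    hBslt := fun p => by
      by_cases h : p.1 = 0
      · simp only [h, if_pos]
        rw [hνw]; exact nat_mul_lt _
      · simp only [h, if_neg, if_false]
        refine lt_trans (hclt (J p)) ?_
        rw [hνw]; exact nat_mul_lt _
    hix0 := fun k => by simp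
    hixle := fun p => by
      by_cases h : p.1 = 0
      · simp [h]
      · simp only [h, if_false]
        exact hcle (J p)
    hixadd := fun p => by
      by_cases h : p.1 = 0
      · simp only [h, if_pos]
        rw [Nat.cast_add, Nat.cast_one, mul_add_one]
      · simp only [h, if_false]
        exact block_add (hcle (J p)) (hclt (J p))
    hixinj := fun p q hp hq hpq => by
      simp only [if_neg hp, if_neg hq] at hpq
      exact hJinj (hκinj hpq)
    hcompl := fun p hp x hx1 hx2 => by
      simp only [if_neg hp] at hx1 hx2
      apply htail (J p) x hx1
      rw [← block_add (hcle (J p)) (hclt (J p))]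
      exact hx2
    hA := hA.1
    hfin := fun b hb => by
      have hb' : b < w * ω := by rwa [hνw] at hb
      have hf1 : {p : ℤ × ℕ | p.1 = 0 ∧ w * p.2 < b}.Finite := by
        apply Set.Finite.subset (Set.Finite.image (fun k => ((0 : ℤ), k)) (boundFin hb'))
        rintro ⟨p1, p2⟩ ⟨h1, h2⟩
        refine ⟨p2, h2.le, ?_⟩
        have h1' : p1 = 0 := h1
        rw [h1']
      have hf2 : {p : ℤ × ℕ | p.1 ≠ 0 ∧ cf (J p) < b}.Finite := by
        apply Set.Finite.subset (Set.Finite.preimage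
          ((hκinj.comp hJinj).injOn) (boundFin hb'))
        rintro p ⟨h1, h2⟩
        exact le_trans (hcle (J p)) h2.le
      apply Set.Finite.subset (hf1.union hf2)
      intro p hp
      simp only [Set.mem_setOf_eq] at hp
      by_cases h : p.1 = 0
      · left; rw [if_pos h] at hp; exact ⟨h, hp⟩
      · right; rw [if_neg h] at hp; exact ⟨h, hp⟩
    hcov := fun x hx => by
      have hx2 : x.1 < w * ω := by rw [← hνw]; exact x.2
      exact decomp (h0 x hx) hx2 }
  refine ⟨S.φE, S.disj, S.lfE, ⋃ p, S.piece p, ?_, ?_⟩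
  · refine ⟨S.clopen_union, ?_, ?_⟩
    · apply Set.Infinite.mono ?_ hA.2.1
      exact Set.inter_subset_inter_left _ S.A_subset
    · have hres : ∀ i : ℕ, ((e (2 * i + 1) : OrdT (ω ^ (α + 1)))) ∈
          (⋃ p, S.piece p)ᶜ ∩ maxRank α := by
        intro i
        refine ⟨?_, (e (2 * i + 1)).2.2⟩
        intro hmem
        obtain ⟨p, hp⟩ := Set.mem_iUnion.1 hmem
        by_cases h : p.1 = 0
        · have hp' : p = (0, p.2) := Prod.ext h rfl
          rw [hp', S.piece_zero] at hp
          exact (e (2 * i + 1)).2.1 hp.1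
        · have hIc := S.piece_subset_Ic p hp
          have htb := S.top_block hIc (hval (2 * i + 1))
          have hixp : S.ix p = κf (J p) := if_neg h
          rw [hixp] at htb
          have h2 := hκinj htb
          simp only [J] at h2
          omega
      apply Set.Infinite.mono
        (s := Set.range fun i : ℕ => ((e (2 * i + 1) : OrdT (ω ^ (α + 1)))))
      · rintro _ ⟨i, rfl⟩
        exact hres i
      · apply Set.infinite_range_of_injective
        intro i j hij
        have h2 := e.injective (Subtype.ext hij)
        omega
  · apply closure_minimal ?_ S.clopen_union.1
    intro x hx
    exact S.support_subset hx



lemma swap_continuous {X : Type*} [TopologicalSpace X] [T1Space X] [DecidableEq X] {a b : X}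
    (ha : IsOpen ({a} : Set X)) (hb : IsOpen ({b} : Set X)) :
    Continuous (Equiv.swap a b) := by
  rw [continuous_iff_continuousAt]
  intro x
  rcases eq_or_ne x a with rfl | hxa
  · have : 𝓝 x = pure x := le_antisymm (le_pure_iff.2 (ha.mem_nhds rfl)) (pure_le_nhds x)
    rw [ContinuousAt, this]
    exact tendsto_pure_nhds _ _
  rcases eq_or_ne x b with rfl | hxb
  · have : 𝓝 x = pure x := le_antisymm (le_pure_iff.2 (hb.mem_nhds rfl)) (pure_le_nhds x)
    rw [ContinuousAt, this]
    exact tendsto_pure_nhds _ _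
  · have hopen : IsOpen ({a, b} : Set X)ᶜ := (Set.Finite.isClosed (by simp)).isOpen_compl
    have hmem : x ∈ ({a, b} : Set X)ᶜ := by simp [hxa, hxb]
    apply ContinuousAt.congr (continuousAt_id)
    exact Filter.eventuallyEq_of_mem (hopen.mem_nhds hmem) fun y hy => by
      simp only [Set.mem_compl_iff, Set.mem_insert_iff, Set.mem_singleton_iff, not_or] at hy
      exact (Equiv.swap_apply_of_ne_of_ne hy.1 hy.2).symm

lemma locallyFinite_preimage {X Y : Type*} [TopologicalSpace X] [TopologicalSpace Y]
    {ι : Type*} {f : ι → Set X} (hf : LocallyFinite f) (ρ : Y ≃ₜ X) :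
    LocallyFinite fun i => ⇑ρ ⁻¹' f i := by
  intro y
  obtain ⟨t, ht, hfin⟩ := hf (ρ y)
  refine ⟨⇑ρ ⁻¹' t, ρ.continuous.continuousAt.preimage_mem_nhds ht, ?_⟩
  apply hfin.subset
  rintro i ⟨z, hz1, hz2⟩
  exact ⟨ρ z, hz1, hz2⟩

theorem statement10_aux (α : Ordinal.{0}) (A : Set (OrdT (Ordinal.omega0 ^ (α + 1))))
    (hA : IsMoiety α A) :
    ∃ φ : OrdT (Ordinal.omega0 ^ (α + 1)) ≃ₜ OrdT (Ordinal.omega0 ^ (α + 1)),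
      (∀ n m : ℤ, n ≠ m → Disjoint (⇑(φ ^ n) '' A) (⇑(φ ^ m) '' A)) ∧
      LocallyFinite (fun n : ℤ => ⇑(φ ^ n) '' A) ∧
      (∃ B, IsMoiety α B ∧ closure {x | φ x ≠ x} ⊆ B) := by
  classical
  by_cases h0 : ∀ x ∈ A, x.1 ≠ 0
  · exact key α A hA h0
  · push_neg at h0
    obtain ⟨x0, hx0A, hx00⟩ := h0
    -- an isolated point of the complement
    obtain ⟨τ, hτc, hτm⟩ := hA.2.2.nonempty
    obtain ⟨k, hk0, hkval⟩ := hτm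
    have hopen : IsOpen (Aᶜ) := hA.1.compl.2
    obtain ⟨U, hU, hUeq⟩ := isOpen_induced_iff.1 hopen
    have hmemU : τ.1 ∈ U := by
      have h' : τ ∈ Subtype.val ⁻¹' U := by rw [hUeq]; exact hτc
      exact h'
    have hpos : 0 < τ.1 := by
      rw [hkval]
      apply mul_pos (Ordinal.opow_pos _ omega0_pos)
      exact_mod_cast Nat.pos_of_ne_zero hk0
    obtain ⟨l, hl, hIoc⟩ := exists_Ioc_subset_of_mem_nhds (hU.mem_nhds hmemU) ⟨0, hpos⟩
    have hlsucc : ∀ o : Ordinal.{0}, o < o + 1 := fun o => by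
      rw [Ordinal.add_one_eq_succ]; exact Order.lt_succ o
    have hl1 : l + 1 ≤ τ.1 := by
      rw [Ordinal.add_one_eq_succ, Order.succ_le_iff]
      exact hl
    let q : OrdT (Ordinal.omega0 ^ (α + 1)) := ⟨l + 1, lt_of_le_of_lt hl1 τ.2⟩
    have hqc : q ∈ Aᶜ := by
      have h' : q ∈ Subtype.val ⁻¹' U := hIoc ⟨hlsucc l, hl1⟩
      rwa [hUeq] at h'
    have hq0 : q ≠ x0 := fun h => by
      have h2 : l + 1 = 0 := (congrArg Subtype.val h).trans hx00
      rw [Ordinal.add_one_eq_succ] at h2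
      exact Ordinal.succ_ne_zero l h2
    have hx0open : IsOpen ({x0} : Set (OrdT (Ordinal.omega0 ^ (α + 1)))) := by
      have : ({x0} : Set (OrdT (Ordinal.omega0 ^ (α + 1)))) = Subtype.val ⁻¹' Set.Iio 1 := by
        ext x
        simp only [Set.mem_singleton_iff, Set.mem_preimage, Set.mem_Iio, Ordinal.lt_one_iff_zero]
        constructor
        · rintro rfl; exact hx00
        · intro h; exact Subtype.ext (h.trans hx00.symm)
      rw [this]
      exact isOpen_Iio.preimage continuous_subtype_val
    have hqopen : IsOpen ({q} : Set (OrdT (Ordinal.omega0 ^ (α + 1)))) := by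
      have : ({q} : Set (OrdT (Ordinal.omega0 ^ (α + 1))))
          = Subtype.val ⁻¹' (Set.Ioi l ∩ Set.Iio (l + 1 + 1)) := by
        ext x
        simp only [Set.mem_singleton_iff, Set.mem_preimage, Set.mem_inter_iff, Set.mem_Ioi,
          Set.mem_Iio]
        constructor
        · rintro rfl
          exact ⟨hlsucc l, hlsucc (l + 1)⟩
        · rintro ⟨h1, h2⟩
          apply Subtype.ext
          show x.1 = l + 1
          rw [Ordinal.add_one_eq_succ (l + 1), Order.lt_succ_iff] at h2
          refine le_antisymm h2 ?_
          rw [Ordinal.add_one_eq_succ]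
          exact Order.succ_le_iff.2 h1
      rw [this]
      exact (isOpen_Ioi.inter isOpen_Iio).preimage continuous_subtype_val
    -- the swap homeomorphism
    let sw : OrdT (Ordinal.omega0 ^ (α + 1)) ≃ OrdT (Ordinal.omega0 ^ (α + 1)) :=
      Equiv.swap x0 q
    have hswc : Continuous sw := swap_continuous hx0open hqopen
    have hswc2 : Continuous sw.symm := by
      rw [Equiv.symm_swap]
      exact hswc
    let ρ : OrdT (Ordinal.omega0 ^ (α + 1)) ≃ₜ OrdT (Ordinal.omega0 ^ (α + 1)) :=
      { toEquiv := sw, continuous_toFun := hswc, continuous_invFun := hswc2 }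
    have hswid : ∀ x, x ≠ x0 → x ≠ q → sw x = x := fun x h1 h2 =>
      Equiv.swap_apply_of_ne_of_ne h1 h2
    have hρcoe : ⇑ρ = ⇑sw := rfl
    -- transported moiety
    set A' : Set (OrdT (Ordinal.omega0 ^ (α + 1))) := ⇑sw ⁻¹' A with hA'def
    have hdiff : ∀ (C : Set (OrdT (Ordinal.omega0 ^ (α + 1)))),
        (C ∩ maxRank α) \ {x0, q} ⊆ (⇑sw ⁻¹' C) ∩ maxRank α := by
      rintro C x ⟨⟨h1, h2⟩, h3⟩
      simp only [Set.mem_insert_iff, Set.mem_singleton_iff, not_or] at h3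
      refine ⟨?_, h2⟩
      show sw x ∈ C
      rw [hswid x h3.1 h3.2]
      exact h1
    have hinfp : ∀ (C : Set (OrdT (Ordinal.omega0 ^ (α + 1)))),
        (C ∩ maxRank α).Infinite → ((⇑sw ⁻¹' C) ∩ maxRank α).Infinite := by
      intro C hC
      exact ((hC.diff (Set.toFinite {x0, q})).mono (hdiff C))
    have hA' : IsMoiety α A' := by
      refine ⟨hA.1.preimage hswc, hinfp A hA.2.1, ?_⟩
      have : A'ᶜ = ⇑sw ⁻¹' Aᶜ := rfl
      rw [this]
      exact hinfp Aᶜ hA.2.2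
    have h0' : ∀ x ∈ A', x.1 ≠ 0 := by
      intro x hx hx0'
      have hxx0 : x = x0 := Subtype.ext (hx0'.trans hx00.symm)
      have hq' : sw x = q := by rw [hxx0]; exact Equiv.swap_apply_left x0 q
      have hqA : q ∈ A := by rw [← hq']; exact hx
      exact hqc hqA
    obtain ⟨φ', hdisj', hlf', B', hB', hsupp'⟩ := key α A' hA' h0'
    have hconj : ∀ n : ℤ, (ρ⁻¹ * φ' * ρ) ^ n = ρ⁻¹ * φ' ^ n * ρ := by
      intro n
      have h1 := map_zpow (MulAut.conj ρ⁻¹) φ' n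
      simp only [MulAut.conj_apply, inv_inv] at h1
      exact h1.symm
    have himg : ∀ n : ℤ, ⇑((ρ⁻¹ * φ' * ρ) ^ n) '' A = ⇑ρ ⁻¹' (⇑(φ' ^ n) '' A') := by
      intro n
      rw [hconj n]
      have hc : ⇑(ρ⁻¹ * φ' ^ n * ρ) = ⇑ρ.symm ∘ ⇑(φ' ^ n) ∘ ⇑ρ := rfl
      rw [hc, Set.image_comp, Set.image_comp]
      have hρA : ⇑ρ '' A = A' := by
        rw [hρcoe, Equiv.image_eq_preimage_symm, Equiv.symm_swap]
      rw [hρA]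
      rw [show ⇑ρ.symm '' (⇑(φ' ^ n) '' A') = ρ.symm.toEquiv '' (⇑(φ' ^ n) '' A') from rfl,
        Equiv.image_eq_preimage_symm]
      rfl
    refine ⟨ρ⁻¹ * φ' * ρ, ?_, ?_, ⇑sw ⁻¹' B', ?_, ?_⟩
    · intro n m hnm
      rw [himg n, himg m]
      exact Disjoint.preimage _ (hdisj' n m hnm)
    · have heq : (fun n : ℤ => ⇑((ρ⁻¹ * φ' * ρ) ^ n) '' A)
          = fun n : ℤ => ⇑ρ ⁻¹' (⇑(φ' ^ n) '' A') := funext himg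
      rw [heq]
      exact locallyFinite_preimage hlf' ρ
    · refine ⟨hB'.1.preimage hswc, hinfp B' hB'.2.1, ?_⟩
      have : (⇑sw ⁻¹' B')ᶜ = ⇑sw ⁻¹' B'ᶜ := rfl
      rw [this]
      exact hinfp B'ᶜ hB'.2.2
    · apply closure_minimal ?_ ((hB'.1.preimage hswc).1)
      intro x hx
      simp only [Set.mem_setOf_eq] at hx
      have hx' : φ' (ρ x) ≠ ρ x := by
        intro h
        apply hx
        have hc : ⇑(ρ⁻¹ * φ' * ρ) = ⇑ρ.symm ∘ ⇑φ' ∘ ⇑ρ := rfl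
        rw [hc]
        show ρ.symm (φ' (ρ x)) = x
        rw [h]
        exact ρ.symm_apply_apply x
      show sw x ∈ B'
      apply hsupp'
      apply subset_closure
      exact hx'

end S10

/-- Existence of a convergent `A`-translation supported in a moiety: a homeomorphism
`φ` whose iterated images of `A` are pairwise disjoint and locally finite. -/
theorem statement10 (α : Ordinal.{0}) (A : Set (OrdT (Ordinal.omega0 ^ (α + 1))))
    (hA : IsMoiety α A) :
    ∃ φ : OrdT (Ordinal.omega0 ^ (α + 1)) ≃ₜ OrdT (Ordinal.omega0 ^ (α + 1)),
      (∀ n m : ℤ, n ≠ m → Disjoint (⇑(φ ^ n) '' A) (⇑(φ ^ m) '' A)) ∧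
      LocallyFinite (fun n : ℤ => ⇑(φ ^ n) '' A) ∧
      (∃ B, IsMoiety α B ∧ closure {x | φ x ≠ x} ⊆ B) :=
  S10.statement10_aux α A hA
end
end

section
/- (Galvin's lemma for ordinals) Let α be an ordinal and let A and B be disjoint topological moieties in ω^{α+1} such that A ∪ B is also a topological moiety. Let F_A (resp. F_B) denote the subgroup of Homeo(ω^{α+1}) of homeomorphisms fixing A (resp. B) pointwise. Then Homeo(ω^{α+1}) = F_A F_B F_A ∪ F_B F_A F_B. -/
noncomputable section

open Ordinal Topology Set

namespace GalvinAux


variable {α : Ordinal.{0}}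

abbrev W (α : Ordinal.{0}) : Ordinal.{0} := Ordinal.omega0 ^ α
abbrev O (α : Ordinal.{0}) : Ordinal.{0} := Ordinal.omega0 ^ (α + 1)

lemma W_pos : 0 < W α := opow_pos _ omega0_pos
lemma W_ne : W α ≠ 0 := W_pos.ne'
lemma O_pos : 0 < O α := opow_pos _ omega0_pos

lemma lt_O_iff {x : Ordinal} : x < O α ↔ ∃ n : ℕ, x < W α * n := by
  rw [O, add_one_eq_succ]; exact lt_omega0_opow_succ

def Tset (α : Ordinal.{0}) : Set Ordinal.{0} := {x | ∃ k : ℕ, k ≠ 0 ∧ x = Ordinal.omega0 ^ α * k}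

lemma Tset_lt_O {x : Ordinal} (hx : x ∈ Tset α) : x < O α := by
  obtain ⟨k, -, rfl⟩ := hx
  rw [O, add_one_eq_succ]
  exact omega0_opow_mul_nat_lt (Order.lt_succ α) k

lemma Tset_inter_Iic_finite {b : Ordinal} (hb : b < O α) : (Tset α ∩ Iic b).Finite := by
  obtain ⟨m, hm⟩ := lt_O_iff.1 hb
  apply Set.Finite.subset ((Set.finite_Iio m).image (fun k : ℕ => W α * k))
  rintro x ⟨⟨k, -, rfl⟩, hxb⟩
  refine ⟨k, ?_, rfl⟩
  have h2 : W α * (k : Ordinal) < W α * m := lt_of_le_of_lt hxb hm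
  have := (mul_lt_mul_iff_right₀ (W_pos (α := α))).1 h2
  exact_mod_cast this

lemma exists_Tset_above {M : Set Ordinal} (hM : (M ∩ Tset α).Infinite) {b : Ordinal}
    (hb : b < O α) : ∃ t, t ∈ M ∩ Tset α ∧ b < t := by
  obtain ⟨t, ht⟩ := (hM.diff (Tset_inter_Iic_finite hb)).nonempty
  refine ⟨t, ht.1, ?_⟩
  by_contra hle
  exact ht.2 ⟨ht.1.2, not_lt.1 hle⟩

lemma one_add_le_W {δ : Ordinal} (hδ : δ < W α) : 1 + δ ≤ W α := by
  rcases eq_or_ne δ 0 with rfl | h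
  · simpa using Ordinal.one_le_iff_ne_zero.2 (W_ne (α := α))
  · have h1 : (1 : Ordinal) < W α := lt_of_le_of_lt (Ordinal.one_le_iff_ne_zero.2 h) hδ
    exact (principal_add_omega0_opow α h1 hδ).le

lemma add_W_le {β : Ordinal} {k : ℕ} (h : β < W α * k) : β + W α ≤ W α * k := by
  cases k with
  | zero =>
    rw [Nat.cast_zero, mul_zero] at h
    exact absurd h not_lt_zero
  | succ k' =>
    have hk : (W α) * ((k' + 1 : ℕ) : Ordinal) = W α * k' + W α := by
      push_cast; rw [mul_add_one]
    rw [hk] at h ⊢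
    rcases lt_or_ge β (W α * k') with hc | hc
    · exact add_le_add_left hc.le _
    · have hρ : W α * k' + (β - W α * k') = β := Ordinal.add_sub_cancel_of_le hc
      have hρlt : β - W α * k' < W α := by
        have h' := h; rw [← hρ, add_lt_add_iff_left] at h'; exact h'
      refine le_of_eq ?_
      calc β + W α = W α * k' + ((β - W α * k') + W α) := by rw [← add_assoc, hρ]
        _ = W α * k' + W α := by rw [add_omega0_opow hρlt]

lemma tail_nbhd {S : Set Ordinal} (hS : IsOpen S) {t b : Ordinal} (ht : t ∈ S) (hbt : b < t) :
    ∃ β, b ≤ β ∧ β < t ∧ Ioc β t ⊆ S := by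
  rcases Ordinal.zero_or_succ_or_isSuccLimit t with rfl | ⟨t', rfl⟩ | hlim
  · exact absurd hbt not_lt_zero
  · refine ⟨max t' b, le_max_right _ _, max_lt (Order.lt_succ t') hbt, ?_⟩
    rintro y ⟨hy1, hy2⟩
    have : y = Order.succ t' :=
      le_antisymm hy2 (Order.succ_le_of_lt ((le_max_left t' b).trans_lt hy1))
    exact this ▸ ht
  · obtain ⟨a, ha, hIoo⟩ := (Ordinal.isOpen_iff.1 hS) t ht hlim
    refine ⟨max a b, le_max_right _ _, max_lt ha hbt, ?_⟩
    rintro y ⟨hy1, hy2⟩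
    rcases eq_or_lt_of_le hy2 with rfl | hlt
    · exact ht
    · exact hIoo ⟨(le_max_left a b).trans_lt hy1, hlt⟩

structure Nice (α : Ordinal.{0}) (S : Set Ordinal.{0}) : Prop where
  sub : S ⊆ Iio (O α)
  opn : IsOpen S
  sup : ∀ t, t ⊆ S → t.Nonempty → sSup t < O α → sSup t ∈ S
  inf : (S ∩ Tset α).Infinite


theorem nice_orderTopology {S : Set Ordinal.{0}} (h : Nice α S) : OrderTopology ↥S := by
  constructor
  apply le_antisymm
  · -- subtype topology ≤ generated order topology
    apply le_generateFrom
    rintro s ⟨a, rfl | rfl⟩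
    · have he : (Ioi a : Set ↥S) = Subtype.val ⁻¹' (Ioi a.1) := by
        ext x; simp [Subtype.coe_lt_coe]
      rw [he]; exact isOpen_Ioi.preimage continuous_subtype_val
    · have he : (Iio a : Set ↥S) = Subtype.val ⁻¹' (Iio a.1) := by
        ext x; simp [Subtype.coe_lt_coe]
      rw [he]; exact isOpen_Iio.preimage continuous_subtype_val
  · -- generated order topology ≤ subtype topology
    set G : Set (Set ↥S) := {s | ∃ a : ↥S, s = Ioi a ∨ s = Iio a} with hG
    have key : ∀ b : Ordinal, TopologicalSpace.GenerateOpen G (Subtype.val ⁻¹' Ioi b) ∧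
        TopologicalSpace.GenerateOpen G (Subtype.val ⁻¹' Iio b) := by
      intro b
      constructor
      · by_cases hne : (S ∩ Ioi b).Nonempty
        · by_cases hne2 : (S ∩ Iic b).Nonempty
          · have hbO : b < O α := by
              obtain ⟨x, hxS, hx⟩ := hne
              exact lt_trans hx (h.sub hxS)
            have hbdd : BddAbove (S ∩ Iic b) := ⟨b, fun x hx => hx.2⟩
            have hm_le : sSup (S ∩ Iic b) ≤ b := csSup_le hne2 fun x hx => hx.2
            have hmS : sSup (S ∩ Iic b) ∈ S :=
              h.sup _ inter_subset_left hne2 (lt_of_le_of_lt hm_le hbO)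
            have he : (Subtype.val ⁻¹' Ioi b : Set ↥S) = Ioi ⟨sSup (S ∩ Iic b), hmS⟩ := by
              ext x
              simp only [mem_preimage, mem_Ioi, ← Subtype.coe_lt_coe]
              constructor
              · intro hbx; exact lt_of_le_of_lt hm_le hbx
              · intro hmx
                by_contra hxb
                exact absurd (le_csSup hbdd ⟨x.2, not_lt.1 hxb⟩) (not_le.2 hmx)
            rw [he]; exact .basic _ ⟨_, Or.inl rfl⟩
          · have he : (Subtype.val ⁻¹' Ioi b : Set ↥S) = Set.univ := by
              refine eq_univ_of_forall fun x => ?_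
              exact not_le.1 fun hc => hne2 ⟨x.1, x.2, Set.mem_Iic.2 hc⟩
            rw [he]; exact .univ
        · have he : (Subtype.val ⁻¹' Ioi b : Set ↥S) = ∅ := by
            refine eq_empty_of_forall_notMem fun x hx => hne ⟨x.1, x.2, hx⟩
          have h2 : (∅ : Set ↥S) = Set.sUnion ∅ := by simp
          rw [he, h2]; exact .sUnion _ (by rintro _ ⟨⟩)
      · have he : (Subtype.val ⁻¹' Iio b : Set ↥S) =
            Set.sUnion {u | TopologicalSpace.GenerateOpen G u ∧ u ⊆ Subtype.val ⁻¹' Iio b} := by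
          apply Subset.antisymm
          · intro x hx
            by_cases hne : (S ∩ Ioi x.1).Nonempty
            · set c := sInf (S ∩ Ioi x.1) with hc
              have hcm : c ∈ S ∩ Ioi x.1 := csInf_mem hne
              refine ⟨Iio ⟨c, hcm.1⟩, ⟨?_, ?_⟩, ?_⟩
              · exact TopologicalSpace.GenerateOpen.basic _ ⟨_, Or.inr rfl⟩
              · rintro y hy
                have hyx : y.1 ≤ x.1 := by
                  by_contra hgt
                  exact absurd (csInf_le (OrderBot.bddBelow (S ∩ Ioi x.1))
                      (show y.1 ∈ S ∩ Ioi x.1 from ⟨y.2, not_le.1 hgt⟩))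
                    (not_le.2 (show y.1 < c from hy))
                exact lt_of_le_of_lt hyx hx
              · exact Set.mem_Iio.2 (Subtype.coe_lt_coe.1 hcm.2)
            · refine ⟨Set.univ, ⟨.univ, ?_⟩, Set.mem_univ x⟩
              rintro y -
              have : y.1 ≤ x.1 := not_lt.1 fun hgt => hne ⟨y.1, y.2, hgt⟩
              exact lt_of_le_of_lt this hx
          · rintro y ⟨u, ⟨-, hu⟩, hyu⟩; exact hu hyu
        rw [he]
        exact .sUnion _ fun u hu => hu.1
    show TopologicalSpace.generateFrom G ≤ instTopologicalSpaceSubtype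
    have : (instTopologicalSpaceSubtype : TopologicalSpace ↥S) =
        TopologicalSpace.induced Subtype.val inferInstance := rfl
    rw [this, OrderTopology.topology_eq_generate_intervals (α := Ordinal),
      Preorder.topology, induced_generateFrom_eq]
    apply le_generateFrom
    rintro s ⟨s₀, ⟨b, rfl | rfl⟩, rfl⟩
    · exact (key b).1
    · exact (key b).2

instance subrelWO (S : Set Ordinal.{0}) : IsWellOrder ↥S (Subrel (· < ·) (· ∈ S)) := by
  infer_instance

abbrev otype (S : Set Ordinal.{0}) : Ordinal.{1} :=
  @Ordinal.type ↥S (Subrel (· < ·) (· ∈ S)) (subrelWO S)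

lemma otype_mono {S T : Set Ordinal.{0}} (h : S ⊆ T) : otype S ≤ otype T := by
  refine RelEmbedding.ordinal_type_le (r := Subrel (· < ·) (· ∈ S)) (s := Subrel (· < ·) (· ∈ T)) ?_
  exact ⟨⟨Set.inclusion h, Set.inclusion_injective h⟩, Iff.rfl⟩

lemma otype_Iio (o : Ordinal.{0}) : otype (Iio o) = Ordinal.lift.{1} o :=
  (Ordinal.type_subrel _ o).trans (Ordinal.typein_ordinal o)

lemma step_ex {S : Set Ordinal.{0}} (h : Nice α S) {b : Ordinal} (hb : b < O α) :
    ∃ q : Ordinal × Ordinal,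
      (q.2 ∈ S ∧ q.2 ∈ Tset α ∧ q.1 < q.2 ∧ Ioc q.1 q.2 ⊆ S) ∧ b ≤ q.1 := by
  obtain ⟨t, htST, hbt⟩ := exists_Tset_above h.inf hb
  obtain ⟨β, hbβ, hβt, hIoc⟩ := tail_nbhd h.opn htST.1 hbt
  exact ⟨(β, t), ⟨htST.1, htST.2, hβt, hIoc⟩, hbβ⟩

lemma exists_pairs {S : Set Ordinal.{0}} (h : Nice α S) :
    ∃ p : ℕ → Ordinal × Ordinal,
      (∀ i, (p i).2 ∈ S ∧ (p i).2 ∈ Tset α ∧ (p i).1 < (p i).2 ∧ Ioc (p i).1 (p i).2 ⊆ S) ∧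
      ∀ i, (p i).2 ≤ (p (i+1)).1 := by
  choose f hf hf2 using fun b (hb : b < O α) => step_ex h hb
  let g : ℕ → {q : Ordinal × Ordinal // q.2 ∈ S ∧ q.2 ∈ Tset α ∧ q.1 < q.2 ∧ Ioc q.1 q.2 ⊆ S} :=
    fun n => Nat.rec ⟨f 0 O_pos, hf 0 O_pos⟩
      (fun _ prev => ⟨f prev.1.2 (Tset_lt_O prev.2.2.1), hf _ _⟩) n
  refine ⟨fun n => (g n).1, fun n => (g n).2, fun i => ?_⟩
  exact hf2 (g i).1.2 (Tset_lt_O (g i).2.2.1)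

lemma chain_mono {p : ℕ → Ordinal × Ordinal} (h1 : ∀ i, (p i).1 < (p i).2)
    (h2 : ∀ i, (p i).2 ≤ (p (i+1)).1) : ∀ i j, i < j → (p i).2 ≤ (p j).1 := by
  intro i j hij
  induction j with
  | zero => omega
  | succ j ih =>
    rcases Nat.lt_succ_iff_lt_or_eq.1 hij with hc | hc
    · exact le_trans (ih hc) (le_trans (h1 j).le (h2 j))
    · subst hc; exact h2 i

lemma le_otype {S : Set Ordinal.{0}} (h : Nice α S) (n : ℕ) :
    Ordinal.lift.{1} (W α * n) ≤ otype S := by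
  obtain ⟨p, hP, hchain⟩ := exists_pairs h
  have mono2 := chain_mono (fun i => (hP i).2.2.1) hchain
  rw [← otype_Iio (W α * n)]
  have hlt : ∀ x : ↥(Iio (W α * n)), x.1 / W α < Ordinal.omega0 := fun x =>
    lt_of_lt_of_le ((Ordinal.div_lt W_ne).2 x.2) (nat_lt_omega0 n).le
  let idx : ↥(Iio (W α * n)) → ℕ := fun x => Classical.choose (lt_omega0.1 (hlt x))
  have hidx : ∀ x, (idx x : Ordinal) = x.1 / W α := fun x =>
    (Classical.choose_spec (lt_omega0.1 (hlt x))).symm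
  let F : ↥(Iio (W α * n)) → Ordinal := fun x => (p (idx x)).1 + 1 + (x.1 % W α)
  have hmod : ∀ x : ↥(Iio (W α * n)), x.1 % W α < W α := fun x => Ordinal.mod_lt _ W_ne
  have hvmem : ∀ x, F x ∈ Ioc (p (idx x)).1 (p (idx x)).2 := by
    intro x
    constructor
    · exact lt_of_lt_of_le (lt_add_one _) le_self_add
    · obtain ⟨k, hk0, hkt⟩ := (hP (idx x)).2.1
      have h1 : (p (idx x)).1 + (1 + (x.1 % W α)) ≤ (p (idx x)).1 + W α :=
        add_le_add_right (one_add_le_W (hmod x)) _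
      have h2 : (p (idx x)).1 + W α ≤ (p (idx x)).2 := by
        rw [hkt]; exact add_W_le (hkt ▸ (hP (idx x)).2.2.1)
      calc F x = (p (idx x)).1 + 1 + (x.1 % W α) := rfl
        _ = (p (idx x)).1 + (1 + (x.1 % W α)) := by rw [add_assoc]
        _ ≤ _ := le_trans h1 h2
  have hvS : ∀ x, F x ∈ S := fun x => (hP (idx x)).2.2.2 (hvmem x)
  have hsm : ∀ x y : ↥(Iio (W α * n)), x.1 < y.1 → F x < F y := by
    intro x y hxy
    have hj : (idx x : Ordinal) ≤ (idx y : Ordinal) := by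
      rw [hidx, hidx]
      by_contra hgt
      push_neg at hgt
      have := (Ordinal.div_lt W_ne).1 hgt
      exact absurd (lt_of_lt_of_le this (le_trans (Ordinal.mul_div_le _ _) hxy.le))
        (lt_irrefl _)
    have hjn : idx x ≤ idx y := by exact_mod_cast hj
    rcases Nat.lt_or_ge (idx x) (idx y) with hlt2 | hge
    · have hv1 : F x ≤ (p (idx x)).2 := (hvmem x).2
      have hv2 : (p (idx x)).2 ≤ (p (idx y)).1 := mono2 _ _ hlt2
      exact lt_of_le_of_lt (le_trans hv1 hv2) (hvmem y).1
    · have heq : idx x = idx y := le_antisymm hjn hge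
      have hdiveq : x.1 / W α = y.1 / W α := by rw [← hidx, ← hidx, heq]
      have e1 := Ordinal.div_add_mod x.1 (W α)
      have e2 := Ordinal.div_add_mod y.1 (W α)
      have hmlt : x.1 % W α < y.1 % W α := by
        have hxy' := hxy
        rw [← e1, ← e2, ← hdiveq, add_lt_add_iff_left] at hxy'
        exact hxy'
      show (p (idx x)).1 + 1 + (x.1 % W α) < (p (idx y)).1 + 1 + (y.1 % W α)
      rw [heq]
      exact add_lt_add_right hmlt _
  refine RelEmbedding.ordinal_type_le (r := Subrel (· < ·) (· ∈ Iio (W α * n)))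
    (s := Subrel (· < ·) (· ∈ S)) ⟨⟨fun x => ⟨F x, hvS x⟩, ?_⟩, ?_⟩
  · intro x y hxy
    have hFeq : F x = F y := congrArg Subtype.val hxy
    rcases lt_trichotomy x.1 y.1 with hc | hc | hc
    · exact absurd (hFeq ▸ hsm x y hc) (lt_irrefl _)
    · exact Subtype.ext hc
    · exact absurd (hFeq ▸ hsm y x hc) (lt_irrefl _)
  · intro a b
    show F a < F b ↔ a.1 < b.1
    constructor
    · intro hv
      rcases lt_trichotomy a.1 b.1 with hc | hc | hc
      · exact hc
      · rw [Subtype.ext hc] at hv; exact absurd hv (lt_irrefl _)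
      · exact absurd hv (hsm b a hc).asymm
    · exact hsm a b

lemma otype_eq {S : Set Ordinal.{0}} (h : Nice α S) : otype S = Ordinal.lift.{1} (O α) := by
  apply le_antisymm ((otype_mono h.sub).trans (otype_Iio (O α)).le)
  by_contra hlt
  push_neg at hlt
  obtain ⟨c, hc, hce⟩ := Ordinal.lt_lift_iff.1 hlt
  obtain ⟨n, hn⟩ := lt_O_iff.1 hc
  have h1 := le_otype h n
  rw [← hce] at h1
  exact absurd (Ordinal.lift_le.1 h1) (not_le.2 hn)

lemma nice_homeo {S T : Set Ordinal.{0}} (hS : Nice α S) (hT : Nice α T) :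
    Nonempty (↥S ≃ₜ ↥T) := by
  obtain ⟨e⟩ := (@Ordinal.type_eq ↥S ↥T (Subrel (· < ·) (· ∈ S)) (Subrel (· < ·) (· ∈ T))
    (subrelWO S) (subrelWO T)).1 ((otype_eq hS).trans (otype_eq hT).symm)
  haveI := nice_orderTopology hS
  haveI := nice_orderTopology hT
  exact ⟨(OrderIso.ofRelIsoLT e).toHomeomorph⟩

lemma maxRank_iff {x : OrdT (O α)} : x ∈ maxRank α ↔ x.1 ∈ Tset α := Iff.rfl

lemma val_image_open {U : Set (OrdT (O α))} (hU : IsOpen U) : IsOpen (Subtype.val '' U) :=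
  (isOpen_Iio (a := O α)).isOpenMap_subtype_val U hU

lemma nice_of_clopen {U : Set (OrdT (O α))} (hU : IsClopen U)
    (hi : (U ∩ maxRank α).Infinite) : Nice α (Subtype.val '' U) := by
  constructor
  · rintro x ⟨u, -, rfl⟩; exact u.2
  · exact val_image_open hU.2
  · intro t ht hne hlt
    have hbdd : BddAbove t := by
      refine ⟨O α, fun x hx => ?_⟩
      obtain ⟨u, -, rfl⟩ := ht hx
      exact le_of_lt u.2
    have hiff := (Ordinal.mem_closure_tfae (sSup t) (Subtype.val '' U)).out 3 0
    have h1 : sSup t ∈ closure (Subtype.val '' U) := hiff.1 ⟨t, ht, hne, hbdd, rfl⟩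
    have h2 : (⟨sSup t, hlt⟩ : OrdT (O α)) ∈ closure U := by
      rw [(show IsInducing (Subtype.val : OrdT (O α) → Ordinal.{0}) from
          IsInducing.subtypeVal (t := Iio (O α))).closure_eq_preimage_closure_image U]
      exact h1
    rw [hU.1.closure_eq] at h2
    exact ⟨_, h2, rfl⟩
  · have h3 : (Subtype.val '' (U ∩ maxRank α)).Infinite :=
      hi.image (Subtype.val_injective.injOn)
    apply h3.mono
    rintro x ⟨u, ⟨hu1, hu2⟩, rfl⟩
    exact ⟨⟨u, hu1, rfl⟩, hu2⟩

def subHomeo {U : Set (OrdT (O α))} : ↥U ≃ₜ ↥(Subtype.val '' U) :=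
  { toEquiv :=
    { toFun := fun x => ⟨x.1.1, ⟨x.1, x.2, rfl⟩⟩
      invFun := fun y => ⟨⟨y.1, by obtain ⟨u, -, he⟩ := y.2; exact he ▸ u.2⟩, by
        obtain ⟨u, hu, he⟩ := y.2
        have he2 : (⟨y.1, by obtain ⟨u, -, he⟩ := y.2; exact he ▸ u.2⟩ : OrdT (O α)) = u :=
          Subtype.ext he.symm
        rw [he2]; exact hu⟩
      left_inv := fun x => Subtype.ext (Subtype.ext rfl)
      right_inv := fun y => Subtype.ext rfl }
    continuous_toFun := by
      apply Continuous.subtype_mk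
      exact continuous_subtype_val.comp continuous_subtype_val
    continuous_invFun := by
      apply Continuous.subtype_mk
      apply Continuous.subtype_mk
      exact continuous_subtype_val }

lemma clopen_homeo {U V : Set (OrdT (O α))} (hU : IsClopen U) (hUi : (U ∩ maxRank α).Infinite)
    (hV : IsClopen V) (hVi : (V ∩ maxRank α).Infinite) : Nonempty (↥U ≃ₜ ↥V) := by
  obtain ⟨e⟩ := nice_homeo (nice_of_clopen hU hUi) (nice_of_clopen hV hVi)
  exact ⟨subHomeo.trans (e.trans subHomeo.symm)⟩

lemma glue3 {Y : Type*} [TopologicalSpace Y] {C₁ C₂ C₃ D₁ D₂ D₃ : Set Y}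
    (hC₁ : IsClopen C₁) (hC₂ : IsClopen C₂) (hC₃ : IsClopen C₃)
    (hC12 : ∀ x, x ∈ C₁ → x ∉ C₂) (hC13 : ∀ x, x ∈ C₁ → x ∉ C₃)
    (hC23 : ∀ x, x ∈ C₂ → x ∉ C₃) (hCu : ∀ x, x ∈ C₁ ∨ x ∈ C₂ ∨ x ∈ C₃)
    (hD₁ : IsClopen D₁) (hD₂ : IsClopen D₂) (hD₃ : IsClopen D₃)
    (hD12 : ∀ x, x ∈ D₁ → x ∉ D₂) (hD13 : ∀ x, x ∈ D₁ → x ∉ D₃)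
    (hD23 : ∀ x, x ∈ D₂ → x ∉ D₃) (hDu : ∀ x, x ∈ D₁ ∨ x ∈ D₂ ∨ x ∈ D₃)
    (g₁ : ↥C₁ ≃ₜ ↥D₁) (g₂ : ↥C₂ ≃ₜ ↥D₂) (g₃ : ↥C₃ ≃ₜ ↥D₃) :
    ∃ F : Y ≃ₜ Y, (∀ x (hx : x ∈ C₁), F x = (g₁ ⟨x, hx⟩ : Y)) ∧
      (∀ x (hx : x ∈ C₂), F x = (g₂ ⟨x, hx⟩ : Y)) ∧
      (∀ x (hx : x ∈ C₃), F x = (g₃ ⟨x, hx⟩ : Y)) := by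
  classical
  let f : Y → Y := fun x =>
    if h : x ∈ C₁ then g₁ ⟨x, h⟩ else if h2 : x ∈ C₂ then g₂ ⟨x, h2⟩
    else g₃ ⟨x, ((hCu x).resolve_left h).resolve_left h2⟩
  let finv : Y → Y := fun y =>
    if h : y ∈ D₁ then g₁.symm ⟨y, h⟩ else if h2 : y ∈ D₂ then g₂.symm ⟨y, h2⟩
    else g₃.symm ⟨y, ((hDu y).resolve_left h).resolve_left h2⟩
  have hf1 : ∀ x (hx : x ∈ C₁), f x = (g₁ ⟨x, hx⟩ : Y) := fun x hx => dif_pos hx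
  have hf2 : ∀ x (hx : x ∈ C₂), f x = (g₂ ⟨x, hx⟩ : Y) := fun x hx =>
    ((dif_neg fun h1 => hC12 x h1 hx)).trans (dif_pos hx)
  have hf3 : ∀ x (hx : x ∈ C₃), f x = (g₃ ⟨x, hx⟩ : Y) := fun x hx =>
    ((dif_neg fun h1 => hC13 x h1 hx)).trans (dif_neg fun h2 => hC23 x h2 hx)
  have hi1 : ∀ y (hy : y ∈ D₁), finv y = (g₁.symm ⟨y, hy⟩ : Y) := fun y hy => dif_pos hy
  have hi2 : ∀ y (hy : y ∈ D₂), finv y = (g₂.symm ⟨y, hy⟩ : Y) := fun y hy =>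
    ((dif_neg fun h1 => hD12 y h1 hy)).trans (dif_pos hy)
  have hi3 : ∀ y (hy : y ∈ D₃), finv y = (g₃.symm ⟨y, hy⟩ : Y) := fun y hy =>
    ((dif_neg fun h1 => hD13 y h1 hy)).trans (dif_neg fun h2 => hD23 y h2 hy)
  have hleft : ∀ x, finv (f x) = x := by
    intro x
    rcases hCu x with hx | hx | hx
    · rw [hf1 x hx, hi1 _ (g₁ ⟨x, hx⟩).2, Subtype.coe_eta, Homeomorph.symm_apply_apply]
    · rw [hf2 x hx, hi2 _ (g₂ ⟨x, hx⟩).2, Subtype.coe_eta, Homeomorph.symm_apply_apply]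
    · rw [hf3 x hx, hi3 _ (g₃ ⟨x, hx⟩).2, Subtype.coe_eta, Homeomorph.symm_apply_apply]
  have hright : ∀ y, f (finv y) = y := by
    intro y
    rcases hDu y with hy | hy | hy
    · rw [hi1 y hy, hf1 _ (g₁.symm ⟨y, hy⟩).2, Subtype.coe_eta, Homeomorph.apply_symm_apply]
    · rw [hi2 y hy, hf2 _ (g₂.symm ⟨y, hy⟩).2, Subtype.coe_eta, Homeomorph.apply_symm_apply]
    · rw [hi3 y hy, hf3 _ (g₃.symm ⟨y, hy⟩).2, Subtype.coe_eta, Homeomorph.apply_symm_apply]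
  have contf : Continuous f := by
    rw [continuous_iff_continuousAt]
    intro x
    rcases hCu x with hx | hx | hx
    · refine ContinuousOn.continuousAt ?_ (hC₁.2.mem_nhds hx)
      rw [continuousOn_iff_continuous_restrict]
      have he : C₁.domRestrict f = fun u => (g₁ u : Y) := funext fun u => hf1 u.1 u.2
      rw [he]; exact continuous_subtype_val.comp g₁.continuous
    · refine ContinuousOn.continuousAt ?_ (hC₂.2.mem_nhds hx)
      rw [continuousOn_iff_continuous_restrict]
      have he : C₂.domRestrict f = fun u => (g₂ u : Y) := funext fun u => hf2 u.1 u.2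
      rw [he]; exact continuous_subtype_val.comp g₂.continuous
    · refine ContinuousOn.continuousAt ?_ (hC₃.2.mem_nhds hx)
      rw [continuousOn_iff_continuous_restrict]
      have he : C₃.domRestrict f = fun u => (g₃ u : Y) := funext fun u => hf3 u.1 u.2
      rw [he]; exact continuous_subtype_val.comp g₃.continuous
  have continv : Continuous finv := by
    rw [continuous_iff_continuousAt]
    intro y
    rcases hDu y with hy | hy | hy
    · refine ContinuousOn.continuousAt ?_ (hD₁.2.mem_nhds hy)
      rw [continuousOn_iff_continuous_restrict]
      have he : D₁.domRestrict finv = fun u => (g₁.symm u : Y) := funext fun u => hi1 u.1 u.2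
      rw [he]; exact continuous_subtype_val.comp g₁.symm.continuous
    · refine ContinuousOn.continuousAt ?_ (hD₂.2.mem_nhds hy)
      rw [continuousOn_iff_continuous_restrict]
      have he : D₂.domRestrict finv = fun u => (g₂.symm u : Y) := funext fun u => hi2 u.1 u.2
      rw [he]; exact continuous_subtype_val.comp g₂.symm.continuous
    · refine ContinuousOn.continuousAt ?_ (hD₃.2.mem_nhds hy)
      rw [continuousOn_iff_continuous_restrict]
      have he : D₃.domRestrict finv = fun u => (g₃.symm u : Y) := funext fun u => hi3 u.1 u.2
      rw [he]; exact continuous_subtype_val.comp g₃.symm.continuous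
  exact ⟨⟨⟨f, finv, hleft, hright⟩, contf, continv⟩, hf1, hf2, hf3⟩

lemma mem_Ioc_pre {β c : Ordinal} {x : OrdT (O α)} :
    x ∈ (Subtype.val ⁻¹' Ioc β c : Set (OrdT (O α))) ↔ β < x.1 ∧ x.1 ≤ c := Iff.rfl

lemma isClopen_Ioc_pre {β c : Ordinal} :
    IsClopen (Subtype.val ⁻¹' Ioc β c : Set (OrdT (O α))) := by
  constructor
  · apply IsClosed.preimage continuous_subtype_val
    have he : Ioc β c = Icc (Order.succ β) c := (Order.Icc_succ_left β c).symm
    rw [he]; exact isClosed_Icc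
  · apply IsOpen.preimage continuous_subtype_val
    have he : Ioc β c = Ioo β (c + 1) := by
      ext y; rw [add_one_eq_succ]
      exact ⟨fun hy => ⟨hy.1, Order.lt_succ_iff.2 hy.2⟩, fun hy => ⟨hy.1, Order.lt_succ_iff.1 hy.2⟩⟩
    rw [he]; exact isOpen_Ioo

lemma inducing_valX : IsInducing (Subtype.val : OrdT (O α) → Ordinal.{0}) :=
  IsInducing.subtypeVal (t := Iio (O α))

lemma isCompact_Ioc_pre {β : Ordinal} {c : Ordinal} (hc : c < O α) :
    IsCompact (Subtype.val ⁻¹' Ioc β c : Set (OrdT (O α))) := by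
  rw [(inducing_valX (α := α)).isCompact_iff]
  have himg : Subtype.val '' (Subtype.val ⁻¹' Ioc β c : Set (OrdT (O α))) = Ioc β c := by
    apply Subset.antisymm
    · rintro y ⟨x, hx, rfl⟩; exact hx
    · intro y hy
      exact ⟨⟨y, lt_of_le_of_lt hy.2 hc⟩, hy, rfl⟩
  rw [himg]
  have he : Ioc β c = Icc (Order.succ β) c := (Order.Icc_succ_left β c).symm
  rw [he]; exact isCompact_Icc

lemma nbhd_of_mem_open {G : Set (OrdT (O α))} (hG : IsOpen G) {t : OrdT (O α)} (htG : t ∈ G)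
    {b : Ordinal} (hb : b < t.1) :
    ∃ β, b ≤ β ∧ β < t.1 ∧
      IsClopen (Subtype.val ⁻¹' Ioc β t.1 : Set (OrdT (O α))) ∧
      IsCompact (Subtype.val ⁻¹' Ioc β t.1 : Set (OrdT (O α))) ∧
      (Subtype.val ⁻¹' Ioc β t.1 : Set (OrdT (O α))) ⊆ G := by
  have hGo : IsOpen (Subtype.val '' G) := val_image_open hG
  obtain ⟨β, hbβ, hβt, hIoc⟩ := tail_nbhd hGo ⟨t, htG, rfl⟩ hb
  refine ⟨β, hbβ, hβt, isClopen_Ioc_pre, isCompact_Ioc_pre t.2, ?_⟩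
  intro x hx
  obtain ⟨u, hu, he⟩ := hIoc hx
  rwa [show u = x from Subtype.ext he] at hu

lemma compact_tops_finite {K : Set (OrdT (O α))} (hK : IsCompact K) :
    (K ∩ maxRank α).Finite := by
  rcases K.eq_empty_or_nonempty with rfl | hne
  · simp
  have hKi : IsCompact (Subtype.val '' K) := hK.image continuous_subtype_val
  have hKne : (Subtype.val '' K).Nonempty := hne.image _
  have hsup : sSup (Subtype.val '' K) ∈ Subtype.val '' K := hKi.sSup_mem hKne
  obtain ⟨u, hu, he⟩ := hsup
  have hbO : sSup (Subtype.val '' K) < O α := he ▸ u.2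
  have hbdd : ∀ x ∈ K, x.1 ≤ sSup (Subtype.val '' K) := fun x hx =>
    le_csSup hKi.bddAbove ⟨x, hx, rfl⟩
  have hsub : K ∩ maxRank α ⊆
      Subtype.val ⁻¹' (Tset α ∩ Iic (sSup (Subtype.val '' K))) := by
    rintro x ⟨hx1, hx2⟩; exact ⟨hx2, hbdd x hx1⟩
  exact ((Tset_inter_Iic_finite hbO).preimage Subtype.val_injective.injOn).subset hsub

lemma exists_top_aboveX {M : Set (OrdT (O α))} (hM : (M ∩ maxRank α).Infinite) {b : Ordinal}
    (hb : b < O α) : ∃ t, t ∈ M ∩ maxRank α ∧ b < t.1 := by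
  have hfin : (M ∩ maxRank α ∩ {x | x.1 ≤ b}).Finite :=
    ((Tset_inter_Iic_finite hb).preimage Subtype.val_injective.injOn).subset
      (by rintro x ⟨⟨-, h2⟩, h3⟩; exact ⟨h2, h3⟩)
  obtain ⟨t, ht⟩ := (hM.diff hfin).nonempty
  refine ⟨t, ht.1, ?_⟩
  by_contra hle
  exact ht.2 ⟨ht.1, not_lt.1 hle⟩

structure Ent (α : Ordinal.{0}) where
  t : OrdT (O α)
  β : Ordinal.{0}
  k : ℕ
  s : OrdT (O α)

def NX (e : Ent α) : Set (OrdT (O α)) := Subtype.val ⁻¹' Ioc e.β e.t.1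

structure SelfP (hh : OrdT (O α) ≃ₜ OrdT (O α)) (G E : Set (OrdT (O α))) (e : Ent α) :
    Prop where
  tE : e.t ∈ E
  sE : e.s ∈ E
  tk : e.t.1 = W α * e.k
  k0 : e.k ≠ 0
  βk : W α * ((e.k - 1 : ℕ) : Ordinal) ≤ e.β
  βt : e.β < e.t.1
  clop : IsClopen (NX e)
  comp : IsCompact (NX e)
  subG : NX e ⊆ G
  sN : e.s ∉ NX e
  hsN : hh.symm e.s ∉ NX e

structure RelP (hh : OrdT (O α) ≃ₜ OrdT (O α)) (e e' : Ent α) : Prop where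
  tβ : e.t.1 ≤ e'.β
  sβ : e.s.1 ≤ e'.β
  hsβ : (hh.symm e.s).1 ≤ e'.β
  sN : e'.s ∉ NX e
  hsN : hh.symm e'.s ∉ NX e
  ss : e.s.1 < e'.s.1
  tt : e.t.1 < e'.t.1

lemma foldr_max_lt {l : List Ordinal.{0}} {c : Ordinal} (hc : 0 < c) (hl : ∀ x ∈ l, x < c) :
    l.foldr max 0 < c := by
  induction l with
  | nil => exact hc
  | cons a l ih =>
    exact max_lt (hl a List.mem_cons_self) (ih fun x hx => hl x (List.mem_cons_of_mem a hx))

lemma le_foldr_max {l : List Ordinal.{0}} {x : Ordinal} (hx : x ∈ l) : x ≤ l.foldr max 0 := by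
  induction l with
  | nil => simp at hx
  | cons a l ih =>
    rcases List.mem_cons.1 hx with rfl | hx'
    · exact le_max_left _ _
    · exact le_trans (ih hx') (le_max_right _ _)

lemma notmem_of_image {hh : OrdT (O α) ≃ₜ OrdT (O α)} {N : Set (OrdT (O α))}
    {x : OrdT (O α)} (hx : x ∉ ⇑hh '' N) : hh.symm x ∉ N := by
  intro hc
  exact hx ⟨hh.symm x, hc, hh.apply_symm_apply x⟩

lemma step_main {E G : Set (OrdT (O α))} (hh : OrdT (O α) ≃ₜ OrdT (O α))
    (hGo : IsOpen G) (hEM : E ⊆ maxRank α) (hEG : E ⊆ G) (hEi : E.Infinite)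
    (L : List (Ent α)) (hL : ∀ e ∈ L, SelfP hh G E e) :
    ∃ p : Ent α, SelfP hh G E p ∧ ∀ e ∈ L, RelP hh e p := by
  have hEi' : (E ∩ maxRank α).Infinite := by
    rwa [Set.inter_eq_self_of_subset_left hEM]
  set b₀ : Ordinal := (L.map fun e => max e.t.1 (max e.s.1 (hh.symm e.s).1)).foldr max 0 with hb₀
  have hb₀O : b₀ < O α := by
    apply foldr_max_lt O_pos
    intro x hx
    obtain ⟨e, -, rfl⟩ := List.mem_map.1 hx
    exact max_lt e.t.2 (max_lt e.s.2 (hh.symm e.s).2)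
  have hb₀ge : ∀ e ∈ L, max e.t.1 (max e.s.1 (hh.symm e.s).1) ≤ b₀ := fun e he =>
    le_foldr_max (List.mem_map.2 ⟨e, he, rfl⟩)
  obtain ⟨t', ⟨htE, htM⟩, hbt⟩ := exists_top_aboveX hEi' hb₀O
  obtain ⟨k, hk0, hkt⟩ := htM
  have hk1 : W α * ((k - 1 : ℕ) : Ordinal) < t'.1 := by
    rw [hkt]
    exact (mul_lt_mul_iff_right₀ W_pos).2
      (by exact_mod_cast Nat.sub_lt (Nat.pos_of_ne_zero hk0) one_pos)
  have hb₁ : max b₀ (W α * ((k - 1 : ℕ) : Ordinal)) < t'.1 := max_lt hbt hk1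
  obtain ⟨β, hbβ, hβt, hNc, hNk, hNG⟩ := nbhd_of_mem_open hGo (hEG htE) hb₁
  set Np : Set (OrdT (O α)) := Subtype.val ⁻¹' Ioc β t'.1 with hNp
  set bad : Set (OrdT (O α)) :=
    (Np ∪ ⇑hh '' Np) ∪ ⋃ e ∈ {e : Ent α | e ∈ L}, (NX e ∪ ⇑hh '' NX e) with hbad
  have hbadfin : (bad ∩ maxRank α).Finite := by
    rw [hbad, Set.union_inter_distrib_right]
    apply Set.Finite.union
    · exact compact_tops_finite (hNk.union (hNk.image hh.continuous))
    · have h2 : ((⋃ e ∈ {e : Ent α | e ∈ L}, (NX e ∪ ⇑hh '' NX e)) ∩ maxRank α) ⊆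
          ⋃ e ∈ {e : Ent α | e ∈ L}, ((NX e ∪ ⇑hh '' NX e) ∩ maxRank α) := by
        rintro x ⟨hx1, hx2⟩
        obtain ⟨e, he, hxe⟩ := Set.mem_iUnion₂.1 hx1
        exact Set.mem_iUnion₂.2 ⟨e, he, hxe, hx2⟩
      refine (Set.Finite.biUnion (List.finite_toSet L) ?_).subset h2
      intro e he
      exact compact_tops_finite
        (((hL e he).comp).union (((hL e he).comp).image hh.continuous))
  have hM : ((E \ bad) ∩ maxRank α).Infinite := by
    have h1 : (E \ (bad ∩ maxRank α)).Infinite := hEi.diff hbadfin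
    have h2 : E \ (bad ∩ maxRank α) ⊆ E \ bad := by
      rintro x ⟨hx1, hx2⟩
      exact ⟨hx1, fun hc => hx2 ⟨hc, hEM hx1⟩⟩
    have h3 : (E \ bad).Infinite := h1.mono h2
    rwa [Set.inter_eq_self_of_subset_left (fun x hx => hEM hx.1)]
  have hb₂O : max b₀ t'.1 < O α := max_lt hb₀O t'.2
  obtain ⟨s', ⟨⟨hsE, hsbad⟩, hsM⟩, hbs⟩ := exists_top_aboveX hM hb₂O
  have hsNp : s' ∉ Np := fun hc => hsbad (Or.inl (Or.inl hc))
  have hsNp' : s' ∉ ⇑hh '' Np := fun hc => hsbad (Or.inl (Or.inr hc))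
  have hsL : ∀ e ∈ L, s' ∉ NX e ∧ s' ∉ ⇑hh '' NX e := by
    intro e he
    constructor
    · exact fun hc => hsbad (Or.inr (Set.mem_iUnion₂.2 ⟨e, he, Or.inl hc⟩))
    · exact fun hc => hsbad (Or.inr (Set.mem_iUnion₂.2 ⟨e, he, Or.inr hc⟩))
  refine ⟨⟨t', β, k, s'⟩, ?_, ?_⟩
  · exact ⟨htE, hsE, hkt, hk0, le_trans (le_max_right _ _) hbβ, hβt, hNc, hNk,
      hNG, hsNp, notmem_of_image hsNp'⟩
  · intro e he
    have h1 : e.t.1 ≤ b₀ := le_trans (le_max_left _ _) (hb₀ge e he)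
    have h2 : e.s.1 ≤ b₀ :=
      le_trans (le_trans (le_max_left _ _) (le_max_right _ _)) (hb₀ge e he)
    have h3 : (hh.symm e.s).1 ≤ b₀ :=
      le_trans (le_trans (le_max_right _ _) (le_max_right _ _)) (hb₀ge e he)
    have hβ' : b₀ ≤ β := le_trans (le_max_left _ _) hbβ
    exact ⟨le_trans h1 hβ', le_trans h2 hβ', le_trans h3 hβ',
      (hsL e he).1, notmem_of_image (hsL e he).2,
      lt_of_le_of_lt (le_trans h2 (le_max_left (b₀) (t'.1))) hbs,
      lt_of_le_of_lt h1 hbt⟩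

lemma main_seq {E G : Set (OrdT (O α))} (hh : OrdT (O α) ≃ₜ OrdT (O α))
    (hGo : IsOpen G) (hEM : E ⊆ maxRank α) (hEG : E ⊆ G) (hEi : E.Infinite) :
    ∃ q : ℕ → Ent α, (∀ n, SelfP hh G E (q n)) ∧ ∀ i j, i < j → RelP hh (q i) (q j) := by
  have step := step_main hh hGo hEM hEG hEi
  let F : ℕ → {L : List (Ent α) // ∀ e ∈ L, SelfP hh G E e} := fun n =>
    Nat.rec ⟨[], by simp⟩ (fun _ prev =>
      ⟨prev.1 ++ [Classical.choose (step prev.1 prev.2)], by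
        intro e he
        rcases List.mem_append.1 he with hc | hc
        · exact prev.2 e hc
        · rw [List.mem_singleton.1 hc]
          exact (Classical.choose_spec (step prev.1 prev.2)).1⟩) n
  let q : ℕ → Ent α := fun n => Classical.choose (step (F n).1 (F n).2)
  have hq1 : ∀ n, SelfP hh G E (q n) := fun n =>
    (Classical.choose_spec (step (F n).1 (F n).2)).1
  have hmem : ∀ i j, i < j → q i ∈ (F j).1 := by
    intro i j hij
    induction j with
    | zero => omega
    | succ j ih =>
      have hFj : (F (j + 1)).1 = (F j).1 ++ [q j] := rfl
      rw [hFj]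
      rcases Nat.lt_succ_iff_lt_or_eq.1 hij with hc | hc
      · exact List.mem_append.2 (Or.inl (ih hc))
      · exact List.mem_append.2 (Or.inr (List.mem_singleton.2 (by rw [hc])))
  refine ⟨q, hq1, fun i j hij => ?_⟩
  exact (Classical.choose_spec (step (F j).1 (F j).2)).2 (q i) (hmem i j hij)

lemma master {A B : Set (OrdT (O α))} (hh : OrdT (O α) ≃ₜ OrdT (O α))
    (hAc : IsClopen A) (hBc : IsClopen B) (hd : Disjoint A B)
    (hBt : (B ∩ maxRank α).Infinite) (hABt : ((A ∪ B)ᶜ ∩ maxRank α).Infinite)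
    (hE : (maxRank α \ (A ∪ ⇑hh ⁻¹' A)).Infinite) :
    ∃ f₁ f₂ f₃ : OrdT (O α) ≃ₜ OrdT (O α),
      (∀ a ∈ A, f₁ a = a) ∧ (∀ b ∈ B, f₂ b = b) ∧ (∀ a ∈ A, f₃ a = a) ∧
      hh = f₁ * f₂ * f₃ := by
  classical
  set A' : Set (OrdT (O α)) := A ∪ ⇑hh ⁻¹' A with hA'def
  have hA'c : IsClopen A' := hAc.union ⟨hAc.1.preimage hh.continuous, hAc.2.preimage hh.continuous⟩
  have hGo : IsOpen A'ᶜ := hA'c.compl.2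
  set E : Set (OrdT (O α)) := maxRank α \ A' with hEdef
  have hEM : E ⊆ maxRank α := fun x hx => hx.1
  have hEG : E ⊆ A'ᶜ := fun x hx => hx.2
  obtain ⟨q, hq1, hq2⟩ := main_seq hh hGo hEM hEG hE
  set V : Set (OrdT (O α)) := ⋃ n, NX (q n) with hVdef
  have hVopen : IsOpen V := isOpen_iUnion fun n => (hq1 n).clop.2
  have hVG : V ⊆ A'ᶜ := Set.iUnion_subset fun n => (hq1 n).subG
  -- t's and s's are strictly increasing
  have htmem : ∀ n, (q n).t ∈ V := fun n =>
    Set.mem_iUnion.2 ⟨n, (hq1 n).βt, le_refl _⟩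
  have htinj : Function.Injective fun n => (q n).t := by
    intro i j hij
    by_contra hne
    rcases Nat.lt_or_ge i j with hc | hc
    · exact absurd (congrArg Subtype.val hij) (ne_of_lt (hq2 i j hc).tt)
    · have hc' : j < i := lt_of_le_of_ne hc (Ne.symm hne)
      exact absurd (congrArg Subtype.val hij).symm (ne_of_lt (hq2 j i hc').tt)
  have hsinj : Function.Injective fun n => (q n).s := by
    intro i j hij
    by_contra hne
    rcases Nat.lt_or_ge i j with hc | hc
    · exact absurd (congrArg Subtype.val hij) (ne_of_lt (hq2 i j hc).ss)
    · have hc' : j < i := lt_of_le_of_ne hc (Ne.symm hne)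
      exact absurd (congrArg Subtype.val hij).symm (ne_of_lt (hq2 j i hc').ss)
  have hsV : ∀ n m : ℕ, (q n).s ∉ NX (q m) := by
    intro n m
    rcases lt_trichotomy n m with hc | rfl | hc
    · exact fun hmem => absurd hmem.1 (not_lt.2 (hq2 n m hc).sβ)
    · exact (hq1 n).sN
    · exact (hq2 m n hc).sN
  have hhsV : ∀ n m : ℕ, hh.symm (q n).s ∉ NX (q m) := by
    intro n m
    rcases lt_trichotomy n m with hc | rfl | hc
    · exact fun hmem => absurd hmem.1 (not_lt.2 (hq2 n m hc).hsβ)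
    · exact (hq1 n).hsN
    · exact (hq2 m n hc).hsN
  -- V is closed
  have hVclosed : IsClosed V := by
    rw [← closure_subset_iff_isClosed]
    intro x hx
    have hxc : x.1 ∈ closure (Subtype.val '' V) := by
      rw [inducing_valX.closure_eq_preimage_closure_image V] at hx
      exact hx
    have h01 := ((Ordinal.mem_closure_tfae x.1 (Subtype.val '' V)).out 0 1).1 hxc
    obtain ⟨m, hm⟩ := lt_O_iff.1 x.2
    have hksm : StrictMono fun n => (q n).k := by
      intro i j hij
      have h2 := (hq2 i j hij).tt
      rw [(hq1 i).tk, (hq1 j).tk] at h2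
      exact_mod_cast (mul_lt_mul_iff_right₀ (W_pos (α := α))).1 h2
    have hJfin : {n : ℕ | (q n).k ≤ m}.Finite := by
      apply (Set.finite_Iic m).subset
      intro n hn
      exact le_trans (hksm.le_apply) hn
    set C : Set Ordinal.{0} := ⋃ n ∈ {n : ℕ | (q n).k ≤ m}, Ioc (q n).β (q n).t.1 with hC
    have hCc : IsClosed C := by
      apply Set.Finite.isClosed_biUnion hJfin
      intro n _
      have he : Ioc (q n).β (q n).t.1 = Icc (Order.succ (q n).β) (q n).t.1 :=
        (Order.Icc_succ_left _ _).symm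
      rw [he]; exact isClosed_Icc
    have hsub : (Subtype.val '' V) ∩ Iic x.1 ⊆ C := by
      rintro y ⟨⟨v, hv, rfl⟩, hy2⟩
      obtain ⟨n, hn⟩ := Set.mem_iUnion.1 hv
      have hkm : (q n).k ≤ m := by
        have h1 : W α * (((q n).k - 1 : ℕ) : Ordinal) < W α * (m : Ordinal) :=
          lt_of_le_of_lt (hq1 n).βk (lt_trans (lt_of_lt_of_le hn.1 hy2) hm)
        have h2 : ((q n).k - 1 : ℕ) < m := by
          exact_mod_cast (mul_lt_mul_iff_right₀ (W_pos (α := α))).1 h1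
        have := (hq1 n).k0
        omega
      exact Set.mem_iUnion₂.2 ⟨n, hkm, hn.1, hn.2⟩
    have hxC : x.1 ∈ C := by
      have h2 := closure_mono hsub h01
      rwa [hCc.closure_eq] at h2
    obtain ⟨n, hkn, hyn⟩ := Set.mem_iUnion₂.1 hxC
    exact Set.mem_iUnion.2 ⟨n, hyn.1, hyn.2⟩
  have hVc : IsClopen V := ⟨hVclosed, hVopen⟩
  have hVtop : (V ∩ maxRank α).Infinite :=
    Set.infinite_of_injective_forall_mem htinj
      (fun n => ⟨htmem n, hEM (hq1 n).tE⟩)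
  have hsA : ∀ n, (q n).s ∉ A := fun n hc => (hEG (hq1 n).sE) (Or.inl hc)
  have hsnotV : ∀ n, (q n).s ∉ V := fun n hc => by
    obtain ⟨mm, hmm⟩ := Set.mem_iUnion.1 hc
    exact hsV n mm hmm
  have hC₃top : ((Aᶜ ∩ Vᶜ) ∩ maxRank α).Infinite :=
    Set.infinite_of_injective_forall_mem hsinj
      (fun n => ⟨⟨hsA n, hsnotV n⟩, hEM (hq1 n).sE⟩)
  -- construct f₃
  obtain ⟨gV⟩ := clopen_homeo hVc hVtop hBc hBt
  have hABc' : IsClopen (Aᶜ ∩ Bᶜ) := hAc.compl.inter hBc.compl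
  have hAVc' : IsClopen (Aᶜ ∩ Vᶜ) := hAc.compl.inter hVc.compl
  have hABt' : ((Aᶜ ∩ Bᶜ) ∩ maxRank α).Infinite := by
    rwa [Set.compl_union] at hABt
  obtain ⟨g3⟩ := clopen_homeo hAVc' hC₃top hABc' hABt'
  obtain ⟨f₃, hf₃1, hf₃2, hf₃3⟩ := glue3 hAc hVc hAVc'
    (fun x hx hc => (hVG hc) (Or.inl hx))
    (fun x hx hc => hc.1 hx)
    (fun x hx hc => hc.2 hx)
    (fun x => by
      by_cases h1 : x ∈ A
      · exact Or.inl h1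
      by_cases h2 : x ∈ V
      · exact Or.inr (Or.inl h2)
      · exact Or.inr (Or.inr ⟨h1, h2⟩))
    hAc hBc hABc'
    (fun x hx => Set.disjoint_left.1 hd hx)
    (fun x hx hc => hc.1 hx)
    (fun x hx hc => hc.2 hx)
    (fun x => by
      by_cases h1 : x ∈ A
      · exact Or.inl h1
      by_cases h2 : x ∈ B
      · exact Or.inr (Or.inl h2)
      · exact Or.inr (Or.inr ⟨h1, h2⟩))
    (Homeomorph.refl ↥A) gV g3
  have hf₃A : ∀ a ∈ A, f₃ a = a := fun a ha => (hf₃1 a ha).trans rfl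
  have hf₃V : ∀ v (hv : v ∈ V), f₃ v ∈ B := fun v hv => by
    rw [hf₃2 v hv]; exact (gV ⟨v, hv⟩).2
  have hf₃symmB : ∀ b (hb : b ∈ B), f₃.symm b = ((gV.symm ⟨b, hb⟩ : ↥V) : OrdT (O α)) := by
    intro b hb
    have h1 : ((gV.symm ⟨b, hb⟩ : ↥V) : OrdT (O α)) ∈ V := (gV.symm ⟨b, hb⟩).2
    have h2 : f₃ ((gV.symm ⟨b, hb⟩ : ↥V) : OrdT (O α)) = b := by
      rw [hf₃2 _ h1, Subtype.coe_eta, gV.apply_symm_apply]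
    have h3 := congrArg f₃.symm h2
    rw [f₃.symm_apply_apply] at h3
    exact h3.symm
  have hf₃symmV : ∀ b (hb : b ∈ B), f₃.symm b ∈ V := fun b hb => by
    rw [hf₃symmB b hb]; exact (gV.symm ⟨b, hb⟩).2
  -- W
  set Wt : Set (OrdT (O α)) := ⇑hh '' V with hWtdef
  have hWeq : Wt = ⇑hh.symm ⁻¹' V := by
    ext y
    constructor
    · rintro ⟨v, hv, rfl⟩
      show hh.symm (hh v) ∈ V
      rw [hh.symm_apply_apply]; exact hv
    · intro hy
      exact ⟨hh.symm y, hy, hh.apply_symm_apply y⟩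
  have hWc : IsClopen Wt := by
    rw [hWeq]
    exact ⟨hVc.1.preimage hh.symm.continuous, hVc.2.preimage hh.symm.continuous⟩
  have hWA : ∀ x, x ∈ Wt → x ∉ A := by
    rintro x ⟨v, hv, rfl⟩ hc
    exact (hVG hv) (Or.inr hc)
  have hsnotW : ∀ n, (q n).s ∉ Wt := fun n hc => by
    rw [hWeq] at hc
    obtain ⟨mm, hmm⟩ := Set.mem_iUnion.1 hc
    exact hhsV n mm hmm
  have hAWc : IsClopen (Aᶜ ∩ Wtᶜ) := hAc.compl.inter hWc.compl
  have hAWt : ((Aᶜ ∩ Wtᶜ) ∩ maxRank α).Infinite :=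
    Set.infinite_of_injective_forall_mem hsinj
      (fun n => ⟨⟨hsA n, hsnotW n⟩, hEM (hq1 n).sE⟩)
  obtain ⟨g3'⟩ := clopen_homeo hABc' hABt' hAWc hAWt
  -- eB : ↥B ≃ₜ ↥Wt
  let eB : ↥B ≃ₜ ↥Wt :=
    { toEquiv :=
      { toFun := fun b => ⟨hh (f₃.symm b.1), ⟨f₃.symm b.1, hf₃symmV b.1 b.2, rfl⟩⟩
        invFun := fun w => ⟨f₃ (hh.symm w.1), by
          have hmem : hh.symm w.1 ∈ V := by
            rw [← hWeq] at *
            obtain ⟨v, hv, he⟩ := w.2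
            rw [← he, hh.symm_apply_apply]; exact hv
          exact hf₃V _ hmem⟩
        left_inv := fun b => Subtype.ext (by
          show f₃ (hh.symm (hh (f₃.symm b.1))) = b.1
          rw [hh.symm_apply_apply, f₃.apply_symm_apply])
        right_inv := fun w => Subtype.ext (by
          show hh (f₃.symm (f₃ (hh.symm w.1))) = w.1
          rw [f₃.symm_apply_apply, hh.apply_symm_apply]) }
      continuous_toFun := by
        apply Continuous.subtype_mk
        exact hh.continuous.comp (f₃.symm.continuous.comp continuous_subtype_val)
      continuous_invFun := by
        apply Continuous.subtype_mk
        exact f₃.continuous.comp (hh.symm.continuous.comp continuous_subtype_val) }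
  obtain ⟨f₁, hf₁1, hf₁2, hf₁3⟩ := glue3 hAc hBc hABc'
    (fun x hx => Set.disjoint_left.1 hd hx)
    (fun x hx hc => hc.1 hx)
    (fun x hx hc => hc.2 hx)
    (fun x => by
      by_cases h1 : x ∈ A
      · exact Or.inl h1
      by_cases h2 : x ∈ B
      · exact Or.inr (Or.inl h2)
      · exact Or.inr (Or.inr ⟨h1, h2⟩))
    hAc hWc hAWc
    (fun x hxA hxW => hWA x hxW hxA)
    (fun x hx hc => hc.1 hx)
    (fun x hx hc => hc.2 hx)
    (fun x => by
      by_cases h1 : x ∈ A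
      · exact Or.inl h1
      by_cases h2 : x ∈ Wt
      · exact Or.inr (Or.inl h2)
      · exact Or.inr (Or.inr ⟨h1, h2⟩))
    (Homeomorph.refl ↥A) eB g3'
  have hf₁A : ∀ a ∈ A, f₁ a = a := fun a ha => (hf₁1 a ha).trans rfl
  have hf₁B : ∀ b (hb : b ∈ B), f₁ b = hh (f₃.symm b) := fun b hb =>
    (hf₁2 b hb).trans rfl
  refine ⟨f₁, f₁⁻¹ * hh * f₃⁻¹, f₃, hf₁A, ?_, hf₃A, ?_⟩
  · intro b hb
    show f₁.symm (hh (f₃.symm b)) = b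
    rw [← hf₁B b hb, f₁.symm_apply_apply]
  · group

end GalvinAux

/-- Galvin's lemma for ordinals: if `A`, `B` are disjoint moieties with `A ∪ B` a
moiety, then every homeomorphism is in `F_A F_B F_A ∪ F_B F_A F_B`, where `F_C`
is the set of homeomorphisms fixing `C` pointwise. -/
theorem statement11 (α : Ordinal.{0}) (A B : Set (OrdT (Ordinal.omega0 ^ (α + 1))))
    (hA : IsMoiety α A) (hB : IsMoiety α B) (hdisj : Disjoint A B)
    (hAB : IsMoiety α (A ∪ B)) :
    ∀ h : OrdT (Ordinal.omega0 ^ (α + 1)) ≃ₜ OrdT (Ordinal.omega0 ^ (α + 1)),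
      (∃ f₁ f₂ f₃ : OrdT (Ordinal.omega0 ^ (α + 1)) ≃ₜ OrdT (Ordinal.omega0 ^ (α + 1)),
        (∀ a ∈ A, f₁ a = a) ∧ (∀ b ∈ B, f₂ b = b) ∧ (∀ a ∈ A, f₃ a = a) ∧
        h = f₁ * f₂ * f₃) ∨
      (∃ f₁ f₂ f₃ : OrdT (Ordinal.omega0 ^ (α + 1)) ≃ₜ OrdT (Ordinal.omega0 ^ (α + 1)),
        (∀ b ∈ B, f₁ b = b) ∧ (∀ a ∈ A, f₂ a = a) ∧ (∀ b ∈ B, f₃ b = b) ∧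
        h = f₁ * f₂ * f₃) := by

  intro h
  by_cases hc1 : (maxRank α \ (A ∪ ⇑h ⁻¹' A)).Infinite
  · left
    exact GalvinAux.master h hA.1 hB.1 hdisj hB.2.1 hAB.2.2 hc1
  · by_cases hc2 : (maxRank α \ (B ∪ ⇑h ⁻¹' B)).Infinite
    · right
      refine GalvinAux.master h hB.1 hA.1 hdisj.symm hA.2.1 ?_ hc2
      rw [Set.union_comm]
      exact hAB.2.2
    · exfalso
      rw [Set.not_infinite] at hc1 hc2
      have hsub : (A ∪ B)ᶜ ∩ maxRank α ⊆
          (maxRank α \ (A ∪ ⇑h ⁻¹' A)) ∪ (maxRank α \ (B ∪ ⇑h ⁻¹' B)) := by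
        rintro x ⟨hx1, hx2⟩
        rw [Set.mem_compl_iff, Set.mem_union] at hx1
        push_neg at hx1
        by_cases hA' : x ∈ ⇑h ⁻¹' A
        · right
          refine ⟨hx2, ?_⟩
          rintro (hc | hc)
          · exact hx1.2 hc
          · exact Set.disjoint_left.1 hdisj hA' hc
        · left
          exact ⟨hx2, fun hc => hc.elim hx1.1 hA'⟩
      exact hAB.2.2 ((hc1.union hc2).subset hsub)
end
end
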